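/- arXiv:math/0309067 — 4 statements merged into one kernel-verified Lean document; each statement's English description precedes it below -/
import Mathlib

section
/- Let f, f_n : ℝ/ℤ → ℂ be C¹ functions such that the derivative of f does not vanish, f is injective, and the Jordan curve f(ℝ/ℤ) is a K-quasicircle for some K > 0. Assume f_n − f and its derivative (f_n − f)' tend uniformly to 0 as n → ∞. Then for every K' > K there exists N such that for all n ≥ N, f_n is injective (so f_n(ℝ/ℤ) is a Jordan curve) and f_n(ℝ/ℤ) is a K'-quasicircle. -/
open Complex Metric Set Filter Topology

/-- The rotation number `e^{2πiθ}`. -/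
noncomputable def rot (θ : ℝ) : ℂ := Complex.exp (2 * (Real.pi : ℂ) * Complex.I * (θ : ℂ))

/-- The quadratic polynomial `P_θ(z) = e^{2πiθ} z + z²`. -/
noncomputable def Pquad (θ : ℝ) (z : ℂ) : ℂ := rot θ * z + z ^ 2

/-- `φ` is an injective holomorphic linearization of `P_θ` on the ball `B(0,ρ)`:
`φ(0) = 0`, `φ'(0) = 1` and `P_θ(φ(z)) = φ(e^{2πiθ} z)`. -/
def LinOn (θ : ℝ) (φ : ℂ → ℂ) (ρ : ℝ) : Prop :=
  DifferentiableOn ℂ φ (ball (0 : ℂ) ρ) ∧ InjOn φ (ball (0 : ℂ) ρ) ∧ φ 0 = 0 ∧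
    deriv φ 0 = 1 ∧ ∀ z ∈ ball (0 : ℂ) ρ, Pquad θ (φ z) = φ (rot θ * z)

/-- The conformal radius `r(θ)` of the Siegel disk of `P_θ` (0 if not linearizable). -/
noncomputable def confRadius (θ : ℝ) : ℝ := sSup {ρ : ℝ | 0 < ρ ∧ ∃ φ : ℂ → ℂ, LinOn θ φ ρ}

/-- A Jordan curve is the image of a continuous injective map of the unit circle. -/
def IsJordanCurve (L : Set ℂ) : Prop :=
  ∃ f : ℂ → ℂ, ContinuousOn f (sphere (0 : ℂ) 1) ∧ InjOn f (sphere (0 : ℂ) 1) ∧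
    f '' sphere (0 : ℂ) 1 = L

/-- The pinching of a Jordan curve `L` at two distinct points `x, y ∈ L`:
`min(diam U, diam V)/dist(x,y)` where `U, V` are the two connected components of
`L \ {x,y}` (expressed as the infimum of the diameters of the connected components). -/
noncomputable def pinch (L : Set ℂ) (x y : ℂ) : ℝ :=
  sInf ((fun z => Metric.diam (connectedComponentIn (L \ {x, y}) z)) '' (L \ {x, y})) /
    dist x y

/-- A `K`-quasicircle is a Jordan curve all of whose pinchings are at most `K`. -/
def IsQuasicircle (K : ℝ) (L : Set ℂ) : Prop :=
  IsJordanCurve L ∧ ∀ x ∈ L, ∀ y ∈ L, x ≠ y → pinch L x y ≤ K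

section QCAux

variable {g : ℝ → ℂ}

lemma qc_eq_fract (hper : Function.Periodic g 1) (u : ℝ) : g (Int.fract u) = g u := by
  have h := hper.sub_int_mul_eq (x := u) ⌊u⌋
  rw [mul_one] at h
  rw [Int.fract]
  exact h

lemma qc_injOn (hper : Function.Periodic g 1) (hinj : InjOn g (Ico (0:ℝ) 1)) (a : ℝ) :
    InjOn g (Ico a (a+1)) := by
  intro u hu v hv huv
  have hfu : Int.fract u ∈ Ico (0:ℝ) 1 := ⟨Int.fract_nonneg u, Int.fract_lt_one u⟩
  have hfv : Int.fract v ∈ Ico (0:ℝ) 1 := ⟨Int.fract_nonneg v, Int.fract_lt_one v⟩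
  have h1 : Int.fract u = Int.fract v := by
    apply hinj hfu hfv
    rw [qc_eq_fract hper, qc_eq_fract hper, huv]
  rw [Int.fract, Int.fract, sub_eq_sub_iff_sub_eq_sub] at h1
  have h2 : |u - v| < 1 := by
    rw [abs_sub_lt_iff]
    constructor <;> nlinarith [hu.1, hu.2, hv.1, hv.2]
  have h3 : (⌊u⌋ : ℝ) = ⌊v⌋ := by
    have h5 : |(⌊u⌋ : ℝ) - ⌊v⌋| < 1 := h1 ▸ h2
    have h4 : |(⌊u⌋ - ⌊v⌋ : ℤ)| < 1 := by
      exact_mod_cast (by push_cast; exact h5 : |((⌊u⌋ - ⌊v⌋ : ℤ) : ℝ)| < 1)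
    have := Int.abs_lt_one_iff.mp (by exact_mod_cast h4)
    exact_mod_cast congrArg (Int.cast : ℤ → ℝ)
      (sub_eq_zero.mp (by exact_mod_cast this) : ⌊u⌋ = ⌊v⌋)
  linarith [h1 ▸ (sub_eq_zero.mpr h3 : (⌊u⌋:ℝ) - ⌊v⌋ = 0)]

lemma qc_range (hper : Function.Periodic g 1) (a : ℝ) : range g = g '' Ico a (a+1) := by
  apply Subset.antisymm
  · rintro _ ⟨u, rfl⟩
    refine ⟨a + Int.fract (u - a), ⟨by nlinarith [Int.fract_nonneg (u-a)],
      by nlinarith [Int.fract_lt_one (u-a)]⟩, ?_⟩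
    have h0 : a + Int.fract (u - a) = u - ⌊u - a⌋ := by rw [Int.fract]; ring
    rw [h0]
    have h := hper.sub_int_mul_eq (x := u) ⌊u - a⌋
    rw [mul_one] at h; exact h
  · rintro _ ⟨u, _, rfl⟩; exact mem_range_self u

lemma qc_compl (hper : Function.Periodic g 1) (hinj : InjOn g (Ico (0:ℝ) 1))
    {s t : ℝ} (hst : s < t) (hts : t < s + 1) :
    range g \ {g s, g t} = g '' Ioo s t ∪ g '' Ioo t (s+1) := by
  have hI := qc_injOn hper hinj s
  have hsmem : s ∈ Ico s (s+1) := ⟨le_refl s, by linarith⟩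
  have htmem : t ∈ Ico s (s+1) := ⟨le_of_lt hst, hts⟩
  apply Subset.antisymm
  · rintro z ⟨hz, hz'⟩
    simp only [mem_insert_iff, mem_singleton_iff, not_or] at hz'
    rw [qc_range hper s] at hz
    obtain ⟨u, hu, rfl⟩ := hz
    have hus : u ≠ s := fun h => hz'.1 (by rw [h])
    have hut : u ≠ t := fun h => hz'.2 (by rw [h])
    rcases lt_trichotomy u t with h | h | h
    · exact Or.inl ⟨u, ⟨lt_of_le_of_ne hu.1 (Ne.symm hus), h⟩, rfl⟩
    · exact absurd h hut
    · exact Or.inr ⟨u, ⟨h, hu.2⟩, rfl⟩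
  · rintro z (⟨u, hu, rfl⟩ | ⟨u, hu, rfl⟩)
    · have humem : u ∈ Ico s (s+1) := ⟨le_of_lt hu.1, lt_trans hu.2 hts⟩
      refine ⟨mem_range_self u, ?_⟩
      simp only [mem_insert_iff, mem_singleton_iff, not_or]
      exact ⟨fun h => absurd (hI humem hsmem h) (ne_of_gt hu.1),
             fun h => absurd (hI humem htmem h) (ne_of_lt hu.2)⟩
    · have humem : u ∈ Ico s (s+1) := ⟨le_of_lt (lt_trans hst hu.1), hu.2⟩
      refine ⟨mem_range_self u, ?_⟩
      simp only [mem_insert_iff, mem_singleton_iff, not_or]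
      exact ⟨fun h => absurd (hI humem hsmem h) (by linarith [hu.1]),
             fun h => absurd (hI humem htmem h) (ne_of_gt hu.1)⟩

lemma qc_comp_eq (hper : Function.Periodic g 1) (hcont : Continuous g)
    (hinj : InjOn g (Ico (0:ℝ) 1)) {s t : ℝ} (hst : s < t) (hts : t < s + 1) {z : ℂ}
    (hz : z ∈ g '' Ioo s t) :
    connectedComponentIn (range g \ {g s, g t}) z = g '' Ioo s t := by
  have hI := qc_injOn hper hinj s
  set F := range g \ {g s, g t} with hF
  set A1 := g '' Ioo s t
  set A2 := g '' Ioo t (s+1)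
  have hFeq : F = A1 ∪ A2 := qc_compl hper hinj hst hts
  set U := (g '' Icc t (s+1))ᶜ with hU
  set V := (g '' Icc s t)ᶜ with hV
  have hUopen : IsOpen U := (isCompact_Icc.image hcont).isClosed.isOpen_compl
  have hVopen : IsOpen V := (isCompact_Icc.image hcont).isClosed.isOpen_compl
  have hA1U : A1 ⊆ U := by
    rintro _ ⟨u, hu, rfl⟩ ⟨v, hv, hgv⟩
    rcases eq_or_lt_of_le hv.2 with h | h
    · have hvs : g v = g s := by rw [h]; exact hper s
      have hgv' : g u = g s := by rw [← hgv, hvs]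
      have := hI ⟨le_of_lt hu.1, lt_trans hu.2 hts⟩ ⟨le_refl s, by linarith⟩ hgv'
      exact absurd this (ne_of_gt hu.1)
    · have := hI ⟨le_of_lt hu.1, lt_trans hu.2 hts⟩ ⟨le_trans (le_of_lt hst) hv.1, h⟩ hgv.symm
      exact absurd (this ▸ hu.2) (not_lt.mpr hv.1)
  have hA2V : A2 ⊆ V := by
    rintro _ ⟨u, hu, rfl⟩ ⟨v, hv, hgv⟩
    have := hI ⟨le_of_lt (lt_trans hst hu.1), hu.2⟩ ⟨hv.1, lt_of_le_of_lt hv.2 hts⟩ hgv.symm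
    exact absurd (this ▸ hu.1) (not_lt.mpr hv.2)
  have hFUV : F ⊆ U ∪ V := by
    rw [hFeq]; exact union_subset_union hA1U hA2V
  have hFdisj : ∀ w ∈ F, w ∈ U → w ∈ V → False := by
    intro w hw hwU hwV
    rcases hFeq ▸ hw with (⟨u, hu, rfl⟩ | ⟨u, hu, rfl⟩)
    · exact hwV ⟨u, ⟨le_of_lt hu.1, le_of_lt hu.2⟩, rfl⟩
    · exact hwU ⟨u, ⟨le_of_lt hu.1, le_of_lt hu.2⟩, rfl⟩
  have hzF : z ∈ F := by rw [hFeq]; exact Or.inl hz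
  have hA1conn : IsPreconnected A1 := isPreconnected_Ioo.image g hcont.continuousOn
  apply Subset.antisymm
  · have hC := isPreconnected_connectedComponentIn (x := z) (F := F)
    set C := connectedComponentIn F z
    have hCF : C ⊆ F := connectedComponentIn_subset F z
    have hCV : C ∩ V = ∅ := by
      by_contra h
      have hCVne : (C ∩ V).Nonempty := nonempty_iff_ne_empty.mpr h
      have hCUne : (C ∩ U).Nonempty :=
        ⟨z, mem_connectedComponentIn hzF, hA1U hz⟩
      obtain ⟨w, hwC, hwUV⟩ := hC U V hUopen hVopen (hCF.trans hFUV) hCUne hCVne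
      exact hFdisj w (hCF hwC) hwUV.1 hwUV.2
    intro c hc
    rcases (hFeq ▸ hCF hc) with h | h
    · exact h
    · exact absurd (mem_inter hc (hA2V h)) (by rw [hCV]; exact notMem_empty c)
  · exact hA1conn.subset_connectedComponentIn hz (hFeq ▸ subset_union_left)

lemma qc_comp_eq' (hper : Function.Periodic g 1) (hcont : Continuous g)
    (hinj : InjOn g (Ico (0:ℝ) 1)) {s t : ℝ} (hst : s < t) (hts : t < s + 1) {z : ℂ}
    (hz : z ∈ g '' Ioo t (s+1)) :
    connectedComponentIn (range g \ {g s, g t}) z = g '' Ioo t (s+1) := by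
  have h2 : s + 1 < t + 1 := by linarith
  have h := qc_comp_eq hper hcont hinj hts h2 hz
  rw [hper s, pair_comm (g t) (g s)] at h
  exact h

lemma qc_dist_le_diam1 (hcont : Continuous g) {s t : ℝ} (hst : s < t) :
    dist (g s) (g t) ≤ Metric.diam (g '' Ioo s t) := by
  have hb0 : Bornology.IsBounded (g '' Ioo s t) :=
    ((isCompact_Icc.image hcont).isBounded).subset (image_mono Ioo_subset_Icc_self)
  have hb := hb0.closure
  have hsub : g '' Icc s t ⊆ closure (g '' Ioo s t) := by
    rw [← closure_Ioo (ne_of_lt hst)]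
    exact (image_closure_subset_closure_image hcont)
  have h2 := Metric.dist_le_diam_of_mem hb (hsub ⟨s, ⟨le_refl s, le_of_lt hst⟩, rfl⟩)
    (hsub ⟨t, ⟨le_of_lt hst, le_refl t⟩, rfl⟩)
  rwa [Metric.diam_closure] at h2

lemma qc_dist_le_diam2 (hper : Function.Periodic g 1) (hcont : Continuous g) {s t : ℝ}
    (hts : t < s + 1) :
    dist (g s) (g t) ≤ Metric.diam (g '' Ioo t (s+1)) := by
  have := qc_dist_le_diam1 hcont hts
  rwa [hper s, dist_comm] at this

lemma qc_pinch_eq (hper : Function.Periodic g 1) (hcont : Continuous g)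
    (hinj : InjOn g (Ico (0:ℝ) 1)) {s t : ℝ} (hst : s < t) (hts : t < s + 1) :
    pinch (range g) (g s) (g t) =
      min (Metric.diam (g '' Ioo s t)) (Metric.diam (g '' Ioo t (s+1))) / dist (g s) (g t) := by
  unfold pinch
  congr 1
  have himg : (fun z => Metric.diam (connectedComponentIn (range g \ {g s, g t}) z)) ''
      (range g \ {g s, g t}) = {Metric.diam (g '' Ioo s t), Metric.diam (g '' Ioo t (s+1))} := by
    apply Subset.antisymm
    · rintro _ ⟨z, hz, rfl⟩
      dsimp only
      rcases (qc_compl hper hinj hst hts) ▸ hz with h | h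
      · rw [qc_comp_eq hper hcont hinj hst hts h]; exact Or.inl rfl
      · rw [qc_comp_eq' hper hcont hinj hst hts h]; exact Or.inr rfl
    · rintro r (rfl | rfl)
      · obtain ⟨u, hu⟩ : (Ioo s t).Nonempty := nonempty_Ioo.mpr hst
        have hz : g u ∈ g '' Ioo s t := mem_image_of_mem g hu
        refine ⟨g u, (qc_compl hper hinj hst hts) ▸ Or.inl hz, ?_⟩
        dsimp only
        rw [qc_comp_eq hper hcont hinj hst hts hz]
      · obtain ⟨u, hu⟩ : (Ioo t (s+1)).Nonempty := nonempty_Ioo.mpr hts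
        have hz : g u ∈ g '' Ioo t (s+1) := mem_image_of_mem g hu
        refine ⟨g u, (qc_compl hper hinj hst hts) ▸ Or.inr hz, ?_⟩
        dsimp only
        rw [qc_comp_eq' hper hcont hinj hst hts hz]
  rw [himg, csInf_pair]

lemma qc_addcircle_rep (x : AddCircle (1:ℝ)) :
    ∃ u : ℝ, u ∈ Ico (0:ℝ) 1 ∧ (u : AddCircle (1:ℝ)) = x := by
  induction x using QuotientAddGroup.induction_on with
  | H u =>
    refine ⟨Int.fract u, ⟨Int.fract_nonneg u, Int.fract_lt_one u⟩, ?_⟩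
    rw [QuotientAddGroup.eq]
    exact ⟨⌊u⌋, by rw [Int.fract]; push_cast [zsmul_eq_mul]; ring⟩

lemma qc_isJordan (hper : Function.Periodic g 1) (hcont : Continuous g)
    (hinj : InjOn g (Ico (0:ℝ) 1)) : IsJordanCurve (range g) := by
  have hliftcont : Continuous hper.lift := hcont.quotient_liftOn' _
  set G : Circle → ℂ := hper.lift ∘ (AddCircle.homeomorphCircle (one_ne_zero (α := ℝ))).symm
    with hG
  have hGcont : Continuous G := hliftcont.comp (Homeomorph.continuous _)
  have hliftinj : Function.Injective hper.lift := by
    intro x y hxy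
    obtain ⟨u, hu, rfl⟩ := qc_addcircle_rep x
    obtain ⟨v, hv, rfl⟩ := qc_addcircle_rep y
    rw [hper.lift_coe, hper.lift_coe] at hxy
    rw [hinj hu hv hxy]
  have hGinj : Function.Injective G := hliftinj.comp (Homeomorph.injective _)
  classical
  refine ⟨fun z => if h : z ∈ sphere (0:ℂ) 1 then G ⟨z, h⟩ else 0, ?_, ?_, ?_⟩
  · rw [continuousOn_iff_continuous_restrict]
    have : (Set.restrict (sphere (0:ℂ) 1) fun z => if h : z ∈ sphere (0:ℂ) 1 then G ⟨z, h⟩ else 0)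
        = fun z : sphere (0:ℂ) 1 => G ⟨z.1, z.2⟩ := by
      funext z; simp [Set.restrict, z.2]
    refine (congrArg Continuous this).mpr ?_
    exact hGcont.comp (Continuous.subtype_mk continuous_subtype_val _)
  · intro z hz w hw hzw
    have hzw' : (if h : z ∈ sphere (0:ℂ) 1 then G ⟨z, h⟩ else 0)
        = (if h : w ∈ sphere (0:ℂ) 1 then G ⟨w, h⟩ else 0) := hzw
    rw [dif_pos hz, dif_pos hw] at hzw'
    exact congrArg Subtype.val (hGinj hzw')
  · ext w
    constructor
    · rintro ⟨z, hz, rfl⟩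
      show (if h : z ∈ sphere (0:ℂ) 1 then G ⟨z, h⟩ else 0) ∈ range g
      rw [dif_pos hz]
      obtain ⟨u, _, hu⟩ := qc_addcircle_rep
        ((AddCircle.homeomorphCircle (one_ne_zero (α := ℝ))).symm ⟨z, hz⟩)
      rw [hG]
      refine ⟨u, ?_⟩
      show g u = hper.lift ((AddCircle.homeomorphCircle (one_ne_zero (α := ℝ))).symm ⟨z, hz⟩)
      rw [← hu, hper.lift_coe]
    · rintro ⟨u, rfl⟩
      set c := (AddCircle.homeomorphCircle (one_ne_zero (α := ℝ))) (u : AddCircle (1:ℝ)) with hc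
      have hcs : (c : ℂ) ∈ sphere (0:ℂ) 1 := c.2
      refine ⟨c, hcs, ?_⟩
      show (if h : (c:ℂ) ∈ sphere (0:ℂ) 1 then G ⟨(c:ℂ), h⟩ else 0) = g u
      rw [dif_pos hcs]
      have hcoe : (⟨(c : ℂ), hcs⟩ : Circle) = c := rfl
      rw [hcoe, hG]
      simp only [Function.comp_apply, hc, Homeomorph.symm_apply_apply, hper.lift_coe]

lemma qc_deriv_periodic {h : ℝ → ℂ} (hper : Function.Periodic h 1) :
    Function.Periodic (deriv h) 1 := by
  intro x
  have h1 : deriv (fun y => h (y + 1)) x = deriv h (x + 1) := deriv_comp_add_const h 1 x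
  rw [← h1, hper.funext]

lemma qc_unifCont {h : ℝ → ℂ} (hper : Function.Periodic h 1) (hcont : Continuous h) :
    ∀ ε > 0, ∃ δ > 0, δ ≤ 1 ∧ ∀ u v : ℝ, |u - v| ≤ δ → ‖h u - h v‖ ≤ ε := by
  intro ε hε
  have huc : UniformContinuousOn h (Icc (-1) 2) :=
    (isCompact_Icc).uniformContinuousOn_of_continuous hcont.continuousOn
  rw [Metric.uniformContinuousOn_iff] at huc
  obtain ⟨δ0, hδ0, hδ⟩ := huc ε hε
  refine ⟨min (δ0/2) 1, by positivity, min_le_right _ _, ?_⟩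
  intro u v huv
  have h1 : |u - v| ≤ 1 := le_trans huv (min_le_right _ _)
  set w := Int.fract u with hw
  set v' := v - ⌊u⌋ with hv'
  have hwv' : w - v' = u - v := by rw [hw, hv', Int.fract]; ring
  have hwI : w ∈ Icc (-1:ℝ) 2 :=
    ⟨by linarith [Int.fract_nonneg u], by linarith [Int.fract_lt_one u]⟩
  have hv'I : v' ∈ Icc (-1:ℝ) 2 := by
    constructor
    · nlinarith [Int.fract_nonneg u, abs_le.mp h1, hwv' ]
    · nlinarith [Int.fract_lt_one u, abs_le.mp h1, hwv']
  have hdist : dist w v' < δ0 := by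
    rw [Real.dist_eq, hwv']
    calc |u - v| ≤ min (δ0/2) 1 := huv
      _ ≤ δ0/2 := min_le_left _ _
      _ < δ0 := by linarith
  have hlt := hδ w hwI v' hv'I hdist
  rw [dist_eq_norm] at hlt
  have hu' : h w = h u := qc_eq_fract hper u
  have hv'' : h v' = h v := by
    have h6 := hper.sub_int_mul_eq (x := v) ⌊u⌋
    rw [mul_one] at h6; rw [hv']; exact h6
  rw [hu', hv''] at hlt
  exact le_of_lt hlt

lemma qc_min_norm {h : ℝ → ℂ} (hper : Function.Periodic h 1) (hcont : Continuous h) :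
    ∃ m : ℝ, (∀ u, m ≤ ‖h u‖) ∧ ∃ u₀, m = ‖h u₀‖ := by
  obtain ⟨u₀, hu₀I, hmin⟩ := (isCompact_Icc (a := (0:ℝ)) (b := 1)).exists_isMinOn
    (nonempty_Icc.mpr zero_le_one) (continuous_norm.comp hcont).continuousOn
  refine ⟨‖h u₀‖, fun u => ?_, u₀, rfl⟩
  have h1 : ‖h (Int.fract u)‖ = ‖h u‖ := by rw [qc_eq_fract hper]
  rw [← h1]
  exact hmin ⟨Int.fract_nonneg u, le_of_lt (Int.fract_lt_one u)⟩

lemma qc_ftc {h : ℝ → ℂ} (hd : Differentiable ℝ h) {a b : ℝ} (hab : a ≤ b)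
    {c : ℂ} {C : ℝ} (hC0 : 0 ≤ C) (hC : ∀ u ∈ Icc a b, ‖deriv h u - c‖ ≤ C) :
    ‖h b - h a - (b - a) • c‖ ≤ C * (b - a) := by
  rcases eq_or_lt_of_le hab with rfl | hlt
  · simp
  set φ : ℝ → ℂ := fun u => h u - u • c with hφ
  have h2 : Differentiable ℝ (fun u : ℝ => u • c) :=
    fun u => ((hasDerivAt_id' (x := u)).smul_const c).differentiableAt
  have hφd : Differentiable ℝ φ := hd.sub h2
  have hφderiv : ∀ u, deriv φ u = deriv h u - c := by
    intro u
    rw [hφ, deriv_fun_sub (hd u) (h2 u)]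
    congr 1
    have h3 : deriv (fun y : ℝ => y • c) u = (1:ℝ) • c :=
      ((hasDerivAt_id' (x := u)).smul_const c).deriv
    rw [h3, one_smul]
  have key := norm_image_sub_le_of_norm_deriv_le_segment (f := φ) (a := a) (b := b)
    (hφd.differentiableOn) (C := C) ?_ b (right_mem_Icc.mpr hab)
  · have heq : φ b - φ a = h b - h a - (b - a) • c := by
      rw [hφ]; simp only [sub_smul]; ring
    rwa [heq] at key
  · intro x hx
    have hx' : x ∈ Icc a b := Ico_subset_Icc_self hx
    rw [((hφd x).derivWithin ((uniqueDiffOn_Icc hlt) x hx'))]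
    rw [hφderiv x]
    exact hC x hx'

lemma qc_near {f : ℝ → ℂ} (hC1 : ContDiff ℝ 1 f)
    {m δ : ℝ} (hm0 : 0 ≤ m) (hm : ∀ u, m ≤ ‖deriv f u‖)
    (hδ : ∀ u v : ℝ, |u - v| ≤ δ → ‖deriv f u - deriv f v‖ ≤ m/2) :
    ∀ s t : ℝ, s ≤ t → t - s ≤ δ → (m/2) * (t - s) ≤ ‖f t - f s‖ := by
  intro s t hst hts
  have hd : Differentiable ℝ f := hC1.differentiable one_ne_zero
  have key := qc_ftc hd hst (c := deriv f s) (C := m/2) (by linarith)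
    (fun u hu => hδ u s (by rw [abs_sub_le_iff]; exact ⟨by linarith [hu.1, hu.2], by linarith [hu.1, hu.2]⟩))
  have h1 : ‖(t - s) • deriv f s‖ = (t - s) * ‖deriv f s‖ := by
    rw [norm_smul, Real.norm_eq_abs, _root_.abs_of_nonneg (by linarith : (0:ℝ) ≤ t - s)]
  have h2 : ‖(t - s) • deriv f s‖ - ‖f t - f s‖ ≤ m/2 * (t - s) := by
    calc ‖(t - s) • deriv f s‖ - ‖f t - f s‖ ≤ ‖f t - f s - (t - s) • deriv f s‖ := by
          have h5 := norm_sub_norm_le ((t - s) • deriv f s) (f t - f s)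
          have h3 : (t - s) • deriv f s - (f t - f s) = -(f t - f s - (t - s) • deriv f s) := by
            ring_nf
          rw [h3, norm_neg] at h5
          linarith
      _ ≤ m/2 * (t - s) := key
  have h4 : (t - s) * m ≤ (t - s) * ‖deriv f s‖ :=
    mul_le_mul_of_nonneg_left (hm s) (by linarith)
  nlinarith [h1, h2, h4]

lemma qc_far {f : ℝ → ℂ} (hper : Function.Periodic f 1) (hcont : Continuous f)
    (hinj : InjOn f (Ico (0:ℝ) 1)) {δ : ℝ} (hδpos : 0 < δ) (hδhalf : δ < 1/2) :
    ∃ d > 0, ∀ s t : ℝ, s ≤ t → δ ≤ t - s → t - s ≤ 1 - δ → d ≤ ‖f t - f s‖ := by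
  set E : Set (ℝ × ℝ) := Icc (0:ℝ) 1 ×ˢ Icc δ (1-δ) with hE
  have hEcomp : IsCompact E := isCompact_Icc.prod isCompact_Icc
  have hEne : E.Nonempty := ⟨(0, δ), ⟨⟨le_refl 0, zero_le_one⟩, ⟨le_refl δ, by linarith⟩⟩⟩
  have hφcont : ContinuousOn (fun p : ℝ × ℝ => ‖f (p.1 + p.2) - f p.1‖) E := by
    apply Continuous.continuousOn
    exact (((hcont.comp (continuous_fst.add continuous_snd)).sub
      (hcont.comp continuous_fst)).norm)
  obtain ⟨p₀, hp₀E, hp₀min⟩ := hEcomp.exists_isMinOn hEne hφcont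
  refine ⟨‖f (p₀.1 + p₀.2) - f p₀.1‖, ?_, ?_⟩
  · rw [gt_iff_lt, norm_pos_iff, sub_ne_zero]
    intro heq
    have hI := qc_injOn hper hinj p₀.1
    have h1 : p₀.1 ∈ Ico p₀.1 (p₀.1 + 1) := ⟨le_refl _, by linarith⟩
    have h2 : p₀.1 + p₀.2 ∈ Ico p₀.1 (p₀.1 + 1) := by
      have h5 := hp₀E.2
      exact ⟨by linarith [h5.1], by linarith [h5.2]⟩
    have h6 := hI h2 h1 heq
    have := hp₀E.2.1
    linarith
  · intro s t hst h1 h2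
    have hfs : f (Int.fract s) = f s := qc_eq_fract hper s
    have hft : f (Int.fract s + (t - s)) = f t := by
      have h3 : Int.fract s + (t - s) = t - ⌊s⌋ := by rw [Int.fract]; ring
      rw [h3]
      have h4 := hper.sub_int_mul_eq (x := t) ⌊s⌋
      rw [mul_one] at h4; exact h4
    have hmem : ((Int.fract s, t - s) : ℝ × ℝ) ∈ E :=
      ⟨⟨Int.fract_nonneg s, le_of_lt (Int.fract_lt_one s)⟩, ⟨h1, h2⟩⟩
    have h7 := hp₀min hmem
    simp only at h7
    calc ‖f (p₀.1 + p₀.2) - f p₀.1‖ ≤ ‖f (Int.fract s + (t - s)) - f (Int.fract s)‖ := h7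
      _ = ‖f t - f s‖ := by rw [hfs, hft]

lemma qc_lowerLip {f : ℝ → ℂ} (hper : Function.Periodic f 1) (hC1 : ContDiff ℝ 1 f)
    (hf' : ∀ u : ℝ, deriv f u ≠ 0) (hinj : InjOn f (Ico (0:ℝ) 1)) :
    ∃ c > 0, ∀ s t : ℝ, s ≤ t → t ≤ s + 1 →
      c * min (t - s) (s + 1 - t) ≤ ‖f t - f s‖ := by
  have hcont : Continuous f := hC1.continuous
  have hf'per : Function.Periodic (deriv f) 1 := qc_deriv_periodic hper
  have hf'cont : Continuous (deriv f) := hC1.continuous_deriv le_rfl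
  obtain ⟨m, hm, u₀, hu₀⟩ := qc_min_norm hf'per hf'cont
  have hmpos : 0 < m := by rw [hu₀]; exact norm_pos_iff.mpr (hf' u₀)
  obtain ⟨δ1, hδ1pos, hδ1le, hδ1⟩ := qc_unifCont hf'per hf'cont (m/2) (by linarith)
  set δ := min δ1 (1/3) with hδdef
  have hδpos : 0 < δ := lt_min hδ1pos (by norm_num)
  have hδhalf : δ < 1/2 := lt_of_le_of_lt (min_le_right _ _) (by norm_num)
  have hnear := qc_near hC1 (δ := δ) (le_of_lt hmpos) hm
    (fun u v huv => hδ1 u v (le_trans huv (min_le_left _ _)))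
  obtain ⟨d, hdpos, hfar⟩ := qc_far hper hcont hinj hδpos hδhalf
  refine ⟨min (m/2) (2*d), lt_min (by linarith) (by linarith), ?_⟩
  intro s t hst hts
  set τ := min (t - s) (s + 1 - t) with hτ
  have hτle1 : τ ≤ t - s := min_le_left _ _
  have hτle2 : τ ≤ s + 1 - t := min_le_right _ _
  have hτhalf : τ ≤ 1/2 := by linarith
  have hτ0 : 0 ≤ τ := le_min (by linarith) (by linarith)
  have hc1 : min (m/2) (2*d) ≤ m/2 := min_le_left _ _
  have hc2 : min (m/2) (2*d) ≤ 2*d := min_le_right _ _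
  have hc0 : 0 ≤ min (m/2) (2*d) := le_min (by linarith) (by linarith)
  rcases le_or_gt (t - s) δ with hA | hA
  · calc min (m/2) (2*d) * τ ≤ (m/2) * (t - s) := by nlinarith
      _ ≤ ‖f t - f s‖ := hnear s t hst hA
  rcases le_or_gt (s + 1 - t) δ with hB | hB
  · have h1 := hnear t (s+1) (by linarith) (by linarith)
    have h2 : f (s + 1) = f s := hper s
    calc min (m/2) (2*d) * τ ≤ (m/2) * (s + 1 - t) := by nlinarith
      _ ≤ ‖f (s+1) - f t‖ := h1
      _ = ‖f t - f s‖ := by rw [h2, norm_sub_rev]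
  · have h1 := hfar s t hst (le_of_lt hA) (by linarith)
    calc min (m/2) (2*d) * τ ≤ 2*d * (1/2) := by nlinarith
      _ = d := by ring
      _ ≤ ‖f t - f s‖ := h1

lemma qc_arc_diam {g : ℝ → ℂ} (hgd : Differentiable ℝ g) {a b : ℝ} (hab : a ≤ b)
    {c : ℂ} {C : ℝ} (hC0 : 0 ≤ C) (hC : ∀ w ∈ Icc a b, ‖deriv g w - c‖ ≤ C) :
    Metric.diam (g '' Ioo a b) ≤ (b - a) * (‖c‖ + C) ∧
      (b - a) * (‖c‖ - C) ≤ dist (g a) (g b) := by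
  have key : ∀ u v : ℝ, u ∈ Icc a b → v ∈ Icc a b → u ≤ v →
      dist (g u) (g v) ≤ (v - u) * (‖c‖ + C) := by
    intro u v hu hv huv
    have hk := qc_ftc hgd huv hC0 (fun w hw => hC w ⟨le_trans hu.1 hw.1, le_trans hw.2 hv.2⟩)
    have h1 : ‖(v - u) • c‖ = (v - u) * ‖c‖ := by
      rw [norm_smul, Real.norm_eq_abs, _root_.abs_of_nonneg (by linarith : (0:ℝ) ≤ v - u)]
    have h2 : ‖g v - g u‖ ≤ ‖(v - u) • c‖ + C * (v - u) := by
      have h3 := norm_add_le ((g v - g u - (v - u) • c)) ((v - u) • c)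
      simp only [sub_add_cancel] at h3
      linarith
    rw [dist_eq_norm, norm_sub_rev]
    nlinarith
  constructor
  · apply Metric.diam_le_of_forall_dist_le (by nlinarith [norm_nonneg c])
    rintro _ ⟨u, hu, rfl⟩ _ ⟨v, hv, rfl⟩
    have hu' : u ∈ Icc a b := Ioo_subset_Icc_self hu
    have hv' : v ∈ Icc a b := Ioo_subset_Icc_self hv
    rcases le_total u v with h | h
    · calc dist (g u) (g v) ≤ (v - u) * (‖c‖ + C) := key u v hu' hv' h
        _ ≤ (b - a) * (‖c‖ + C) := by nlinarith [norm_nonneg c, hu'.1, hv'.2]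
    · rw [dist_comm]
      calc dist (g v) (g u) ≤ (u - v) * (‖c‖ + C) := key v u hv' hu' h
        _ ≤ (b - a) * (‖c‖ + C) := by nlinarith [norm_nonneg c, hv'.1, hu'.2]
  · have hk := qc_ftc hgd hab hC0 hC
    have h1 : ‖(b - a) • c‖ = (b - a) * ‖c‖ := by
      rw [norm_smul, Real.norm_eq_abs, _root_.abs_of_nonneg (by linarith : (0:ℝ) ≤ b - a)]
    have h2 := norm_sub_norm_le ((b - a) • c) (g b - g a)
    have h3 : (b - a) • c - (g b - g a) = -(g b - g a - (b - a) • c) := by ring_nf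
    rw [h3, norm_neg] at h2
    rw [dist_eq_norm, norm_sub_rev]
    nlinarith

lemma qc_diam_perturb {f g : ℝ → ℂ} (A : Set ℝ) (hfb : Bornology.IsBounded (f '' A))
    {ε : ℝ} (hε : 0 ≤ ε) (hfg : ∀ u, ‖g u - f u‖ ≤ ε) :
    Metric.diam (g '' A) ≤ Metric.diam (f '' A) + 2 * ε := by
  apply Metric.diam_le_of_forall_dist_le (by positivity)
  rintro _ ⟨u, hu, rfl⟩ _ ⟨v, hv, rfl⟩
  calc dist (g u) (g v) ≤ dist (g u) (f u) + dist (f u) (f v) + dist (f v) (g v) :=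
        dist_triangle4 _ _ _ _
    _ ≤ ε + Metric.diam (f '' A) + ε := by
        gcongr
        · rw [dist_eq_norm]; exact hfg u
        · exact Metric.dist_le_diam_of_mem hfb (mem_image_of_mem f hu) (mem_image_of_mem f hv)
        · rw [dist_comm, dist_eq_norm]; exact hfg v
    _ = Metric.diam (f '' A) + 2 * ε := by ring

end QCAux

set_option maxHeartbeats 1000000 in
/-- Perturbation of quasicircles parameterized by `C¹` maps on `ℝ/ℤ` (represented by
1-periodic maps on `ℝ`): if `f` is an injective `C¹` parameterization with nonvanishing
derivative of a `K`-quasicircle and `f_n - f → 0` uniformly together with its derivative,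
then for every `K' > K`, the curve `f_n(ℝ/ℤ)` is eventually a Jordan curve and a
`K'`-quasicircle. -/
theorem quasicircle_of_c1_perturbation (K : ℝ) (hK : 0 < K)
    (f : ℝ → ℂ) (fseq : ℕ → ℝ → ℂ)
    (hfper : Function.Periodic f 1) (hfseqper : ∀ n, Function.Periodic (fseq n) 1)
    (hfC1 : ContDiff ℝ 1 f) (hfseqC1 : ∀ n, ContDiff ℝ 1 (fseq n))
    (hf' : ∀ t : ℝ, deriv f t ≠ 0)
    (hfinj : InjOn f (Ico (0 : ℝ) 1))
    (hquasi : IsQuasicircle K (range f))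
    (hconv : TendstoUniformly (fun n t => fseq n t - f t) (fun _ => 0) atTop)
    (hconv' : TendstoUniformly (fun n t => deriv (fun u => fseq n u - f u) t)
      (fun _ => 0) atTop) :
    ∀ K' : ℝ, K < K' → ∃ N : ℕ, ∀ n ≥ N,
      InjOn (fseq n) (Ico (0 : ℝ) 1) ∧ IsQuasicircle K' (range (fseq n)) := by
  intro K' hKK'
  -- basic facts about f
  have hfcont : Continuous f := hfC1.continuous
  have hfd : Differentiable ℝ f := hfC1.differentiable one_ne_zero
  have hf'per : Function.Periodic (deriv f) 1 := qc_deriv_periodic hfper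
  have hf'cont : Continuous (deriv f) := hfC1.continuous_deriv le_rfl
  obtain ⟨m, hm, u₀, hu₀⟩ := qc_min_norm hf'per hf'cont
  have hmpos : 0 < m := by rw [hu₀]; exact norm_pos_iff.mpr (hf' u₀)
  obtain ⟨c, hcpos, hlip⟩ := qc_lowerLip hfper hfC1 hf' hfinj
  -- 1 ≤ K
  have hK1 : 1 ≤ K := by
    have h05 : f 0 ≠ f (1/2) := by
      intro h
      have := hfinj ⟨le_refl 0, one_pos⟩ ⟨by norm_num, by norm_num⟩ h
      norm_num at this
    have hp := hquasi.2 (f 0) (mem_range_self 0) (f (1/2)) (mem_range_self _) h05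
    have heq := qc_pinch_eq hfper hfcont hfinj (s := 0) (t := 1/2) (by norm_num) (by norm_num)
    have hd1 := qc_dist_le_diam1 hfcont (s := 0) (t := 1/2) (by norm_num)
    have hd2 := qc_dist_le_diam2 hfper hfcont (s := 0) (t := 1/2) (by norm_num)
    have hdpos : 0 < dist (f 0) (f (1/2)) := dist_pos.mpr h05
    rw [heq] at hp
    have hge : 1 ≤ min (Metric.diam (f '' Ioo 0 (1/2))) (Metric.diam (f '' Ioo (1/2) (0+1)))
        / dist (f 0) (f (1/2)) := by
      rw [le_div_iff₀ hdpos, one_mul]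
      exact le_min hd1 hd2
    linarith
  have hK'1 : 1 < K' := lt_of_le_of_lt hK1 hKK'
  -- constants
  set χ : ℝ := m * (K' - 1) / (2 * (K' + 1)) with hχ
  have hχpos : 0 < χ := by apply div_pos; nlinarith; nlinarith
  have hχm : 2 * χ * (K' + 1) = m * (K' - 1) := by
    rw [hχ]; field_simp
  have hχltm : 2 * χ < m := by nlinarith
  obtain ⟨δχ, hδχpos, hδχle, hδχ⟩ := qc_unifCont hf'per hf'cont χ hχpos
  set δ2 : ℝ := min δχ (1/3) with hδ2def
  have hδ2pos : 0 < δ2 := lt_min hδχpos (by norm_num)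
  have hδ2χ : δ2 ≤ δχ := min_le_left _ _
  set d0 : ℝ := c * δ2 with hd0def
  have hd0pos : 0 < d0 := mul_pos hcpos hδ2pos
  set ε0 : ℝ := min (d0/4) ((K' - K) * d0 / (2 + 2 * K')) with hε0def
  have hε0pos : 0 < ε0 := lt_min (by linarith) (by apply div_pos; nlinarith; nlinarith)
  have hε0a : ε0 ≤ d0/4 := min_le_left _ _
  have hε0b : ε0 * (2 + 2 * K') ≤ (K' - K) * d0 := by
    have h1 : ε0 ≤ (K' - K) * d0 / (2 + 2 * K') := min_le_right _ _
    rw [le_div_iff₀ (by nlinarith : (0:ℝ) < 2 + 2*K')] at h1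
    exact h1
  set ε1 : ℝ := min χ (c/2) with hε1def
  have hε1pos : 0 < ε1 := lt_min hχpos (by linarith)
  have hε1χ : ε1 ≤ χ := min_le_left _ _
  have hε1c : ε1 ≤ c/2 := min_le_right _ _
  -- eventuality
  have h1ev := Metric.tendstoUniformly_iff.mp hconv ε0 hε0pos
  have h2ev := Metric.tendstoUniformly_iff.mp hconv' ε1 hε1pos
  obtain ⟨N, hN⟩ := eventually_atTop.mp (h1ev.and h2ev)
  refine ⟨N, fun n hn => ?_⟩
  obtain ⟨hg0', hg1'⟩ := hN n hn
  set g := fseq n with hgdef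
  have hgper : Function.Periodic g 1 := hfseqper n
  have hgC1 := hfseqC1 n
  have hgcont : Continuous g := hgC1.continuous
  have hgd : Differentiable ℝ g := hgC1.differentiable one_ne_zero
  have hg0 : ∀ u, ‖g u - f u‖ ≤ ε0 := by
    intro u
    have := hg0' u
    rw [dist_comm, dist_eq_norm, sub_zero] at this
    exact le_of_lt this
  have hg1 : ∀ u, ‖deriv g u - deriv f u‖ ≤ ε1 := by
    intro u
    have h := hg1' u
    rw [dist_comm, dist_eq_norm, sub_zero] at h
    have hder : deriv (fun w => fseq n w - f w) u = deriv g u - deriv f u :=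
      deriv_fun_sub (hgd u) (hfd u)
    rw [hder] at h
    exact le_of_lt h
  -- contraction of the difference
  have hdiffd : Differentiable ℝ (fun w => g w - f w) := hgd.sub hfd
  have hglip : ∀ u v : ℝ, u ≤ v → ‖(g v - f v) - (g u - f u)‖ ≤ ε1 * (v - u) := by
    intro u v huv
    have hk := qc_ftc hdiffd huv (c := 0) (C := ε1) (le_of_lt hε1pos)
      (fun w _ => by
        rw [sub_zero, deriv_fun_sub (hgd w) (hfd w)]
        exact hg1 w)
    rw [smul_zero, sub_zero] at hk
    linarith [hk]
  -- injectivity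
  have keyinj : ∀ u v : ℝ, u < v → v - u ≤ 1/2 → v ≤ u + 1 → g u ≠ g v := by
    intro u v huv hhalf hv1 hguv
    have h3 := hglip u v (le_of_lt huv)
    have h4 : g v - g u = 0 := sub_eq_zero.mpr hguv.symm
    have h5 : ‖f v - f u‖ ≤ ε1 * (v - u) := by
      have heq : (g v - f v) - (g u - f u) = -(f v - f u) + (g v - g u) := by ring
      rw [heq, h4, add_zero, norm_neg] at h3
      exact h3
    have h6 := hlip u v (le_of_lt huv) hv1
    have h7 : min (v - u) (u + 1 - v) = v - u := min_eq_left (by linarith)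
    rw [h7] at h6
    nlinarith
  have hginj : InjOn g (Ico (0:ℝ) 1) := by
    intro u hu v hv huv
    by_contra hne
    rcases lt_or_gt_of_ne hne with h | h
    · rcases le_or_gt (v - u) (1/2) with hh | hh
      · exact keyinj u v h hh (by linarith [hv.2, hu.1]) huv
      · refine keyinj v (u+1) (by linarith [hv.2, hu.1]) (by linarith) (by linarith) ?_
        rw [hgper u]
        exact huv.symm
    · rcases le_or_gt (u - v) (1/2) with hh | hh
      · exact keyinj v u h hh (by linarith [hu.2, hv.1]) huv.symm
      · refine keyinj u (v+1) (by linarith [hu.2, hv.1]) (by linarith) (by linarith) ?_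
        rw [hgper v]
        exact huv
  refine ⟨hginj, qc_isJordan hgper hgcont hginj, ?_⟩
  -- pinch bounds
  rintro x ⟨u, rfl⟩ y ⟨v, rfl⟩ hxy
  set s := Int.fract u with hsdef
  set t0 := Int.fract v with ht0def
  have hgs : g s = g u := qc_eq_fract hgper u
  have hgt0 : g t0 = g v := qc_eq_fract hgper v
  have hne : g s ≠ g t0 := by rw [hgs, hgt0]; exact hxy
  have hsI : s ∈ Ico (0:ℝ) 1 := ⟨Int.fract_nonneg u, Int.fract_lt_one u⟩
  have ht0I : t0 ∈ Ico (0:ℝ) 1 := ⟨Int.fract_nonneg v, Int.fract_lt_one v⟩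
  have hst0 : s ≠ t0 := fun h => hne (congrArg g h)
  obtain ⟨t, hst, hts, hgt⟩ : ∃ t : ℝ, s < t ∧ t < s + 1 ∧ g t = g v := by
    rcases lt_or_gt_of_ne hst0 with h | h
    · exact ⟨t0, h, by linarith [ht0I.2, hsI.1], hgt0⟩
    · refine ⟨t0 + 1, by linarith [ht0I.1, hsI.2], by linarith, ?_⟩
      rw [hgper t0]; exact hgt0
  rw [← hgs, ← hgt]
  have hgxy : g s ≠ g t := by rw [hgs, hgt]; exact hxy
  have hdistpos : 0 < dist (g s) (g t) := dist_pos.mpr hgxy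
  rw [qc_pinch_eq hgper hgcont hginj hst hts, div_le_iff₀ hdistpos]
  have hK'0 : 0 < K' := by linarith
  -- short-arc estimate helper
  have hshortarc : ∀ a b : ℝ, a ≤ b → b - a ≤ δ2 →
      Metric.diam (g '' Ioo a b) ≤ K' * dist (g a) (g b) := by
    intro a b hab hba
    have hC : ∀ w ∈ Icc a b, ‖deriv g w - deriv f a‖ ≤ ε1 + χ := by
      intro w hw
      have t1 : ‖deriv g w - deriv f w‖ ≤ ε1 := hg1 w
      have t2 : ‖deriv f w - deriv f a‖ ≤ χ := hδχ w a (by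
        rw [abs_sub_le_iff]
        exact ⟨by linarith [hw.1, hw.2, hδ2χ], by linarith [hw.1, hw.2, hδ2χ]⟩)
      calc ‖deriv g w - deriv f a‖
          = ‖(deriv g w - deriv f w) + (deriv f w - deriv f a)‖ := by ring_nf
        _ ≤ ‖deriv g w - deriv f w‖ + ‖deriv f w - deriv f a‖ := norm_add_le _ _
        _ ≤ ε1 + χ := add_le_add t1 t2
    obtain ⟨hD, hdd⟩ := qc_arc_diam hgd hab (by positivity) hC
    have hA : m ≤ ‖deriv f a‖ := hm a
    have hB : (0:ℝ) ≤ b - a := sub_nonneg.mpr hab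
    have step2 : (ε1 + χ) * (K' + 1) ≤ m * (K' - 1) := by nlinarith [hε1χ, hK'1]
    have p1 : 0 ≤ (K' - 1) * (‖deriv f a‖ - m) := mul_nonneg (by linarith) (by linarith [hA])
    have step3 : ‖deriv f a‖ + (ε1 + χ) ≤ K' * (‖deriv f a‖ - (ε1 + χ)) := by nlinarith
    calc Metric.diam (g '' Ioo a b) ≤ (b - a) * (‖deriv f a‖ + (ε1 + χ)) := hD
      _ ≤ (b - a) * (K' * (‖deriv f a‖ - (ε1 + χ))) := mul_le_mul_of_nonneg_left step3 hB
      _ = K' * ((b - a) * (‖deriv f a‖ - (ε1 + χ))) := by ring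
      _ ≤ K' * dist (g a) (g b) := mul_le_mul_of_nonneg_left hdd (le_of_lt hK'0)
  rcases le_or_gt (t - s) δ2 with hcase1 | hcase1
  · calc min (Metric.diam (g '' Ioo s t)) (Metric.diam (g '' Ioo t (s+1)))
        ≤ Metric.diam (g '' Ioo s t) := min_le_left _ _
      _ ≤ K' * dist (g s) (g t) := hshortarc s t (le_of_lt hst) hcase1
  rcases le_or_gt (s + 1 - t) δ2 with hcase2 | hcase2
  · have h1 := hshortarc t (s+1) (by linarith) (by linarith)
    have h2 : dist (g t) (g (s+1)) = dist (g s) (g t) := by rw [hgper s, dist_comm]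
    calc min (Metric.diam (g '' Ioo s t)) (Metric.diam (g '' Ioo t (s+1)))
        ≤ Metric.diam (g '' Ioo t (s+1)) := min_le_right _ _
      _ ≤ K' * dist (g t) (g (s+1)) := h1
      _ = K' * dist (g s) (g t) := by rw [h2]
  · -- far case: compare with the original curve
    have hfst : f s ≠ f t := by
      intro h
      have h6 := qc_injOn hfper hfinj s ⟨le_refl s, by linarith⟩ ⟨by linarith, hts⟩ h
      exact absurd h6 (ne_of_lt hst)
    have hdfpos : 0 < dist (f s) (f t) := dist_pos.mpr hfst
    have hdf : d0 ≤ dist (f s) (f t) := by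
      have h6 := hlip s t (le_of_lt hst) (le_of_lt hts)
      have h7 : δ2 ≤ min (t - s) (s + 1 - t) := le_min (le_of_lt hcase1) (le_of_lt hcase2)
      have h8 : dist (f s) (f t) = ‖f t - f s‖ := by rw [dist_eq_norm, norm_sub_rev]
      rw [h8]
      calc d0 = c * δ2 := hd0def
        _ ≤ c * min (t - s) (s + 1 - t) := by nlinarith
        _ ≤ ‖f t - f s‖ := h6
    have hEmin := hquasi.2 (f s) (mem_range_self s) (f t) (mem_range_self t) hfst
    rw [qc_pinch_eq hfper hfcont hfinj hst hts, div_le_iff₀ hdfpos] at hEmin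
    have hfb1 : Bornology.IsBounded (f '' Ioo s t) :=
      ((isCompact_Icc.image hfcont).isBounded).subset (image_mono Ioo_subset_Icc_self)
    have hfb2 : Bornology.IsBounded (f '' Ioo t (s+1)) :=
      ((isCompact_Icc.image hfcont).isBounded).subset (image_mono Ioo_subset_Icc_self)
    have hD1 := qc_diam_perturb (Ioo s t) hfb1 (le_of_lt hε0pos) hg0
    have hD2 := qc_diam_perturb (Ioo t (s+1)) hfb2 (le_of_lt hε0pos) hg0
    have hdg : dist (f s) (f t) - 2*ε0 ≤ dist (g s) (g t) := by
      have t1 := hg0 s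
      have t2 := hg0 t
      have h9 := dist_triangle4 (f s) (g s) (g t) (f t)
      have e1 : dist (f s) (g s) ≤ ε0 := by rw [dist_comm, dist_eq_norm]; exact t1
      have e2 : dist (g t) (f t) ≤ ε0 := by rw [dist_eq_norm]; exact t2
      linarith
    have hKdf : K * dist (f s) (f t) + 2*ε0 ≤ K' * (dist (f s) (f t) - 2*ε0) := by
      nlinarith [hdf, hε0b, hKK']
    have hminD : min (Metric.diam (g '' Ioo s t)) (Metric.diam (g '' Ioo t (s+1)))
        ≤ min (Metric.diam (f '' Ioo s t)) (Metric.diam (f '' Ioo t (s+1))) + 2*ε0 := by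
      rcases le_total (Metric.diam (f '' Ioo s t)) (Metric.diam (f '' Ioo t (s+1))) with h | h
      · calc min (Metric.diam (g '' Ioo s t)) (Metric.diam (g '' Ioo t (s+1)))
            ≤ Metric.diam (g '' Ioo s t) := min_le_left _ _
          _ ≤ Metric.diam (f '' Ioo s t) + 2*ε0 := hD1
          _ = min (Metric.diam (f '' Ioo s t)) (Metric.diam (f '' Ioo t (s+1))) + 2*ε0 := by
              rw [min_eq_left h]
      · calc min (Metric.diam (g '' Ioo s t)) (Metric.diam (g '' Ioo t (s+1)))
            ≤ Metric.diam (g '' Ioo t (s+1)) := min_le_right _ _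
          _ ≤ Metric.diam (f '' Ioo t (s+1)) + 2*ε0 := hD2
          _ = min (Metric.diam (f '' Ioo s t)) (Metric.diam (f '' Ioo t (s+1))) + 2*ε0 := by
              rw [min_eq_right h]
    calc min (Metric.diam (g '' Ioo s t)) (Metric.diam (g '' Ioo t (s+1)))
        ≤ K * dist (f s) (f t) + 2*ε0 := le_trans hminD (by linarith)
      _ ≤ K' * (dist (f s) (f t) - 2*ε0) := hKdf
      _ ≤ K' * dist (g s) (g t) := mul_le_mul_of_nonneg_left hdg (le_of_lt hK'0)
end

section
/- Let r_n > 0 with r_n → r > 0, let θ_n → θ be real numbers with r(θ_n) > r_n for all n, and assume the maps t ∈ ℝ/ℤ ↦ φ_{θ_n}(r_n e^{2πit}) form a Cauchy sequence for the sup norm, with limit ψ : ℝ/ℤ → ℂ. Then: (1) r(θ) ≥ r; (2) the function equal to φ_θ on the open ball B(0, r) and equal to ψ(t) at the point r e^{2πit} is a continuous extension of φ_θ to the closed ball B̄(0,r) (in particular, if r(θ) > r this means φ_θ(r e^{2πit}) = ψ(t)); (3) ψ is injective; (4) if r(θ) = r, then the boundary of the Siegel disk Δ(θ) equals ψ(ℝ/ℤ).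 -/
open Complex Metric Set Filter Topology

/-- Gauss map iteration: `x₀ = {θ}`, `x_{n+1} = {1/x_n}`. -/
noncomputable def gaussIter (θ : ℝ) : ℕ → ℝ
  | 0 => Int.fract θ
  | n + 1 => Int.fract (gaussIter θ n)⁻¹

/-- The continued fraction partial quotient `a_{n+1} = ⌊1/x_n⌋`. -/
noncomputable def cfQuot (θ : ℝ) (n : ℕ) : ℤ := ⌊(gaussIter θ n)⁻¹⌋

/-- The denominators `q_n` of the continued fraction convergents of `θ`:
`q₀ = 1`, `q₁ = a₁`, `q_{n+1} = a_{n+1} q_n + q_{n-1}`. -/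
noncomputable def cfDen (θ : ℝ) : ℕ → ℤ
  | 0 => 1
  | 1 => cfQuot θ 0
  | n + 2 => cfQuot θ (n + 1) * cfDen θ (n + 1) + cfDen θ n

/-- An irrational number is of bounded type if its partial quotients are bounded. -/
def BoundedType (θ : ℝ) : Prop := Irrational θ ∧ ∃ B : ℤ, ∀ n : ℕ, cfQuot θ n ≤ B

/-- Bruno number: `Σ (log q_{n+1})/q_n < ∞`. -/
def Bruno (θ : ℝ) : Prop :=
  Irrational θ ∧ Summable fun n : ℕ => Real.log ((cfDen θ (n + 1) : ℝ)) / ((cfDen θ n : ℝ))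

/-- The point `ρ e^{2πit}` of the circle of radius `ρ`. -/
noncomputable def circlePt (ρ t : ℝ) : ℂ :=
  (ρ : ℂ) * Complex.exp (2 * (Real.pi : ℂ) * Complex.I * (t : ℂ))

noncomputable def Complex.abs : AbsoluteValue ℂ ℝ := NormedField.toAbsoluteValue ℂ

lemma Complex.norm_eq_abs (z : ℂ) : ‖z‖ = Complex.abs z := rfl

lemma Complex.abs_exp (z : ℂ) : Complex.abs (Complex.exp z) = Real.exp z.re := Complex.norm_exp z

lemma Complex.abs_I : Complex.abs Complex.I = 1 := Complex.norm_I

lemma Complex.abs_ofReal (x : ℝ) : Complex.abs (x : ℂ) = |x| := Complex.norm_real x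

lemma Complex.abs_exp_sub_one_le {x : ℂ} (hx : Complex.abs x ≤ 1) :
    Complex.abs (Complex.exp x - 1) ≤ 2 * Complex.abs x := Complex.norm_exp_sub_one_le hx

lemma Complex.abs_mul_exp_arg_mul_I (x : ℂ) :
    (Complex.abs x : ℂ) * Complex.exp (Complex.arg x * Complex.I) = x :=
  Complex.norm_mul_exp_arg_mul_I x

lemma Complex.abs_deriv_le_div_of_mapsTo_ball {f : ℂ → ℂ} {c : ℂ} {R₁ R₂ : ℝ}
    (hd : DifferentiableOn ℂ f (ball c R₁)) (h_maps : MapsTo f (ball c R₁) (ball (f c) R₂))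
    (h₀ : 0 < R₁) : Complex.abs (deriv f c) ≤ R₂ / R₁ :=
  Complex.norm_deriv_le_div_of_mapsTo_ball hd (h_maps.mono_right ball_subset_closedBall) h₀

/-- `e^{2πit}`. -/
noncomputable def eC (t : ℝ) : ℂ := Complex.exp (2 * (Real.pi : ℂ) * Complex.I * (t : ℂ))

lemma circlePt_eq (ρ t : ℝ) : circlePt ρ t = (ρ : ℂ) * eC t := rfl

lemma rot_eq_eC (θ : ℝ) : rot θ = eC θ := rfl

lemma eC_add (s t : ℝ) : eC (s + t) = eC s * eC t := by
  rw [eC, eC, eC, ← Complex.exp_add]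
  congr 1
  push_cast
  ring

lemma abs_eC (t : ℝ) : Complex.abs (eC t) = 1 := by
  rw [eC, Complex.abs_exp]
  have : (2 * (Real.pi : ℂ) * Complex.I * (t : ℂ)).re = 0 := by
    simp [Complex.mul_re, Complex.mul_im]
  rw [this, Real.exp_zero]

lemma abs_rot (θ : ℝ) : Complex.abs (rot θ) = 1 := abs_eC θ

lemma rot_ne_zero (θ : ℝ) : rot θ ≠ 0 := by
  intro h; have := abs_rot θ; rw [h] at this; simp at this

lemma rot_pow (θ : ℝ) (n : ℕ) : rot θ ^ n = eC (n * θ) := by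
  induction n with
  | zero => simp [eC]
  | succ n ih =>
      rw [pow_succ, ih, rot_eq_eC, ← eC_add]
      congr 1
      push_cast
      ring

lemma eC_eq_one_iff {x : ℝ} : eC x = 1 ↔ ∃ n : ℤ, x = n := by
  rw [eC, Complex.exp_eq_one_iff]
  constructor
  · rintro ⟨n, hn⟩
    refine ⟨n, ?_⟩
    have h2 : (2 * (Real.pi : ℂ) * Complex.I) ≠ 0 := by
      simp [Real.pi_ne_zero, Complex.I_ne_zero]
    have : (2 * (Real.pi : ℂ) * Complex.I) * (x : ℂ) = (2 * (Real.pi : ℂ) * Complex.I) * (n : ℂ) := by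
      rw [hn]; ring
    have := mul_left_cancel₀ h2 this
    exact_mod_cast this
  · rintro ⟨n, rfl⟩
    exact ⟨n, by push_cast; ring⟩

lemma eC_int (n : ℤ) : eC n = 1 := eC_eq_one_iff.mpr ⟨n, rfl⟩

lemma eC_add_int (t : ℝ) (n : ℤ) : eC (t + n) = eC t := by
  rw [eC_add, eC_int, mul_one]

lemma not_irrational_of_mul_nat {θ : ℝ} {m : ℕ} (hm : m ≠ 0) {k : ℤ} (h : (m : ℝ) * θ = k) :
    ¬ Irrational θ := by
  intro hirr
  have hm' : (m : ℝ) ≠ 0 := Nat.cast_ne_zero.mpr hm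
  have : θ = ((k / m : ℚ) : ℝ) := by
    push_cast
    field_simp at h ⊢
    linarith [h]
  exact (Rat.not_irrational _) (this ▸ hirr)

lemma rot_pow_ne_one {θ : ℝ} (hirr : Irrational θ) {m : ℕ} (hm : m ≠ 0) : rot θ ^ m ≠ 1 := by
  intro h
  rw [rot_pow] at h
  obtain ⟨n, hn⟩ := eC_eq_one_iff.mp h
  exact not_irrational_of_mul_nat hm hn hirr

lemma eC_sub_one (x : ℝ) (hx : |2 * Real.pi * x| ≤ 1) :
    Complex.abs (eC x - 1) ≤ 2 * |2 * Real.pi * x| := by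
  have : eC x = Complex.exp (((2 * Real.pi * x : ℝ) : ℂ) * Complex.I) := by
    rw [eC]; push_cast; ring_nf
  rw [this]
  have habs : Complex.abs (((2 * Real.pi * x : ℝ) : ℂ) * Complex.I) = |2 * Real.pi * x| := by
    rw [map_mul, Complex.abs_I, mul_one, Complex.abs_ofReal]
  calc Complex.abs (Complex.exp (((2 * Real.pi * x : ℝ) : ℂ) * Complex.I) - 1)
      ≤ 2 * Complex.abs (((2 * Real.pi * x : ℝ) : ℂ) * Complex.I) :=
        Complex.abs_exp_sub_one_le (by rw [habs]; exact hx)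
    _ = 2 * |2 * Real.pi * x| := by rw [habs]

/-- Escape estimate: once `|w| ≥ 3`, iterates of `Pquad` grow geometrically. -/
lemma Pquad_escape (θ : ℝ) {w : ℂ} (hw : 3 ≤ Complex.abs w) (n : ℕ) :
    2 ^ n * Complex.abs w ≤ Complex.abs ((Pquad θ)^[n] w) := by
  induction n with
  | zero => simp
  | succ n ih =>
      have h3 : (3:ℝ) ≤ Complex.abs ((Pquad θ)^[n] w) := by
        calc (3:ℝ) ≤ 2 ^ n * Complex.abs w := by
              nlinarith [pow_le_pow_right₀ (by norm_num : (1:ℝ) ≤ 2) (Nat.zero_le n)]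
          _ ≤ _ := ih
      rw [Function.iterate_succ_apply']
      set v := (Pquad θ)^[n] w with hv
      have hPv : Complex.abs v ^ 2 - Complex.abs v ≤ Complex.abs (Pquad θ v) := by
        have htri : Complex.abs (v ^ 2) ≤ Complex.abs (Pquad θ v) + Complex.abs (rot θ * v) := by
          have : v ^ 2 = Pquad θ v - rot θ * v := by rw [Pquad]; ring
          rw [this, ← Complex.norm_eq_abs, ← Complex.norm_eq_abs, ← Complex.norm_eq_abs]
          exact norm_sub_le _ _
        have h1 : Complex.abs (v ^ 2) = Complex.abs v ^ 2 := map_pow _ _ _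
        have h2 : Complex.abs (rot θ * v) = Complex.abs v := by
          rw [map_mul, abs_rot, one_mul]
        linarith
      have h2 : 2 * Complex.abs v ≤ Complex.abs (Pquad θ v) := by
        nlinarith [Complex.abs.nonneg v]

      calc 2 ^ (n+1) * Complex.abs w = 2 * (2 ^ n * Complex.abs w) := by ring
        _ ≤ 2 * Complex.abs v := by linarith
        _ ≤ _ := h2

/-- Iterating the linearization relation. -/
lemma lin_iterate {θ : ℝ} {φ : ℂ → ℂ} {S : Set ℂ}
    (hS : ∀ z ∈ S, rot θ * z ∈ S)
    (hfun : ∀ z ∈ S, Pquad θ (φ z) = φ (rot θ * z)) :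
    ∀ n : ℕ, ∀ z ∈ S, (Pquad θ)^[n] (φ z) = φ (rot θ ^ n * z) := by
  intro n
  induction n with
  | zero => intro z hz; simp
  | succ n ih =>
      intro z hz
      have hz' : rot θ * z ∈ S := hS z hz
      rw [Function.iterate_succ_apply, hfun z hz, ih _ hz']
      congr 1
      ring

lemma rot_mul_mem_ball {θ : ℝ} {ρ : ℝ} {z : ℂ} (hz : z ∈ ball (0:ℂ) ρ) :
    rot θ * z ∈ ball (0:ℂ) ρ := by
  simpa [mem_ball_zero_iff, Complex.norm_eq_abs, map_mul, abs_rot] using hz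

lemma rot_mul_mem_closedBall {θ : ℝ} {ρ : ℝ} {z : ℂ} (hz : z ∈ closedBall (0:ℂ) ρ) :
    rot θ * z ∈ closedBall (0:ℂ) ρ := by
  simpa [mem_closedBall_zero_iff, Complex.norm_eq_abs, map_mul, abs_rot] using hz

/-- Any linearization takes values of modulus less than 3. -/
lemma linOn_abs_lt {θ ρ : ℝ} {φ : ℂ → ℂ} (h : LinOn θ φ ρ) :
    ∀ z ∈ ball (0:ℂ) ρ, Complex.abs (φ z) < 3 := by
  intro z hz
  by_contra hge
  push_neg at hge
  have hz0 : Complex.abs z < ρ := by rw [← Complex.norm_eq_abs]; simpa [mem_ball_zero_iff] using hz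
  -- the sphere of radius |z| is compact and contained in the ball
  have hsub : sphere (0:ℂ) (Complex.abs z) ⊆ ball (0:ℂ) ρ := fun w hw => by
    simp only [mem_sphere_zero_iff_norm] at hw
    simpa [mem_ball_zero_iff, hw] using hz0
  have hcont : ContinuousOn φ (sphere (0:ℂ) (Complex.abs z)) :=
    (h.1.continuousOn).mono hsub
  obtain ⟨C, hC⟩ := (isCompact_sphere (0:ℂ) (Complex.abs z)).exists_bound_of_continuousOn hcont
  -- iterates stay on this sphere but escape to infinity
  obtain ⟨n, hn⟩ := pow_unbounded_of_one_lt (C / 3) (by norm_num : (1:ℝ) < 2)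
  have hmem : rot θ ^ n * z ∈ sphere (0:ℂ) (Complex.abs z) := by
    simp [mem_sphere_zero_iff_norm, Complex.norm_eq_abs, map_mul, map_pow, abs_rot]
  have hiter := lin_iterate (fun w hw => rot_mul_mem_ball hw) h.2.2.2.2 n z hz
  have hesc := Pquad_escape θ hge n
  have hCb := hC _ hmem
  rw [← hiter] at hCb
  have : 2 ^ n * 3 ≤ C := by
    calc (2:ℝ) ^ n * 3 ≤ 2 ^ n * Complex.abs (φ z) := by
          nlinarith [pow_pos (by norm_num : (0:ℝ) < 2) n]
      _ ≤ Complex.abs ((Pquad θ)^[n] (φ z)) := hesc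
      _ ≤ C := by simpa [Complex.norm_eq_abs] using hCb
  have hC3 : 0 < C := by nlinarith [pow_pos (by norm_num : (0:ℝ) < 2) n]
  have : C / 3 < 2 ^ n := hn
  nlinarith

/-- The set of linearization radii is bounded above by 3. -/
lemma linOn_radius_le {θ ρ : ℝ} {φ : ℂ → ℂ} (hρ : 0 < ρ) (h : LinOn θ φ ρ) : ρ ≤ 3 := by
  have hmaps : MapsTo φ (ball (0:ℂ) ρ) (ball (φ 0) 3) := by
    intro z hz
    have h0 : φ 0 = 0 := h.2.2.1
    simpa [mem_ball, dist_eq_norm, h0, Complex.norm_eq_abs] using linOn_abs_lt h z hz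
  have := Complex.abs_deriv_le_div_of_mapsTo_ball h.1 hmaps hρ
  rw [h.2.2.2.1] at this
  simp only [map_one] at this
  rw [le_div_iff₀ hρ] at this
  linarith

lemma confRadius_bddAbove (θ : ℝ) : BddAbove {ρ : ℝ | 0 < ρ ∧ ∃ φ : ℂ → ℂ, LinOn θ φ ρ} := by
  refine ⟨3, fun ρ hρ => ?_⟩
  obtain ⟨hρ0, φ, hφ⟩ := hρ
  exact linOn_radius_le hρ0 hφ

lemma exists_small_rot {θ : ℝ} (hirr : Irrational θ) {δ : ℝ} (hδ : 0 < δ) :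
    ∃ n : ℕ, 0 < n ∧ ∃ K : ℤ, (n:ℝ) * θ - K ≠ 0 ∧ |(n:ℝ) * θ - K| < δ := by
  set a : ℕ → ℝ := fun m => Int.fract ((m:ℝ) * θ) with ha
  have hmem : ∀ m, a m ∈ Icc (0:ℝ) 1 :=
    fun m => ⟨Int.fract_nonneg _, le_of_lt (Int.fract_lt_one _)⟩
  obtain ⟨L, _, φ, hφmono, hφtend⟩ := (isCompact_Icc (a := (0:ℝ)) (b := 1)).tendsto_subseq hmem
  have hcauchy := hφtend.cauchySeq
  obtain ⟨N, hN⟩ := Metric.cauchySeq_iff'.mp hcauchy δ hδ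
  have hlt : φ N < φ (N + 1) := hφmono (Nat.lt_succ_self N)
  refine ⟨φ (N + 1) - φ N, Nat.sub_pos_of_lt hlt,
    ⌊(φ (N+1) : ℝ) * θ⌋ - ⌊(φ N : ℝ) * θ⌋, ?_, ?_⟩
  · intro h
    have h' : ((φ (N+1) - φ N : ℕ) : ℝ) * θ = ((⌊(φ (N+1) : ℝ) * θ⌋ - ⌊(φ N : ℝ) * θ⌋ : ℤ) : ℝ) := by
      linarith [h]
    exact not_irrational_of_mul_nat (Nat.sub_ne_zero_of_lt hlt) h' hirr
  · have hd := hN (N + 1) (Nat.le_succ N)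
    rw [Real.dist_eq] at hd
    have hcast : ((φ (N+1) - φ N : ℕ) : ℝ) = (φ (N+1) : ℝ) - (φ N : ℝ) := by
      push_cast [Nat.cast_sub hlt.le]; ring
    have : ((φ (N+1) - φ N : ℕ) : ℝ) * θ - ((⌊(φ (N+1) : ℝ) * θ⌋ - ⌊(φ N : ℝ) * θ⌋ : ℤ) : ℝ)
        = a (φ (N+1)) - a (φ N) := by
      rw [hcast]
      push_cast
      simp only [ha, Int.fract]
      ring
    rw [this]
    exact hd

lemma exists_orbit_close {θ : ℝ} (hirr : Irrational θ) (t τ : ℝ) {δ : ℝ} (hδ : 0 < δ) :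
    ∃ m : ℕ, ∃ M : ℤ, |(t + (m:ℝ) * θ) - (τ + M)| < δ := by
  obtain ⟨n, hn, K, hβ0, hβδ⟩ := exists_small_rot hirr hδ
  set β : ℝ := (n:ℝ) * θ - K with hβ
  set c : ℝ := τ - t with hc
  set T : ℤ := ⌈|c|⌉ + 1 with hT
  have hTc : |c| + 1 ≤ (T:ℝ) := by
    rw [hT]; push_cast; linarith [Int.le_ceil |c|]
  rcases lt_or_gt_of_ne hβ0 with hneg | hpos
  · -- β < 0
    set x : ℝ := c - T with hx
    have hx0 : x < 0 := by
      have : c ≤ |c| := le_abs_self c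
      simp only [hx]; linarith
    have hq : (0:ℝ) ≤ x / β := div_nonneg_of_nonpos hx0.le hneg.le
    set j : ℕ := (⌊x / β⌋).toNat with hj
    have hjfloor : ((j:ℤ):ℝ) = (⌊x / β⌋ : ℝ) := by
      rw [hj, Int.toNat_of_nonneg (Int.floor_nonneg.mpr hq)]
    have hfl : (⌊x / β⌋ : ℝ) ≤ x / β := Int.floor_le _
    have hfl2 : x / β < (⌊x / β⌋ : ℝ) + 1 := Int.lt_floor_add_one _
    have h1 : (j:ℝ) * β ≥ x := by
      have := mul_le_mul_of_nonpos_right hfl hneg.le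
      rw [div_mul_cancel₀ x hneg.ne] at this
      calc x ≤ (⌊x / β⌋ : ℝ) * β := this
        _ = (j:ℝ) * β := by rw [← hjfloor]; norm_num
    have h2 : (j:ℝ) * β - x < -β := by
      have := mul_lt_mul_of_neg_right hfl2 hneg
      rw [add_mul, one_mul, div_mul_cancel₀ x hneg.ne] at this
      have hj' : ((⌊x / β⌋ : ℝ)) * β = (j:ℝ) * β := by rw [← hjfloor]; norm_num
      linarith [this, hj'.symm ▸ this]
    refine ⟨j * n, (j:ℤ) * K - T, ?_⟩
    have hexp : (t + ((j * n : ℕ):ℝ) * θ) - (τ + ((j:ℤ) * K - T : ℤ)) = (j:ℝ) * β - x := by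
      push_cast
      simp only [hβ, hx, hc]
      ring
    rw [hexp, abs_lt]
    constructor
    · have : -β ≤ |β| := by rw [abs_of_neg hneg]
      linarith
    · have : -β ≤ |β| := by rw [abs_of_neg hneg]
      linarith
  · -- β > 0
    set x : ℝ := c + T with hx
    have hx0 : 0 < x := by
      have : -|c| ≤ c := neg_abs_le c
      simp only [hx]; linarith
    have hq : (0:ℝ) ≤ x / β := le_of_lt (div_pos hx0 hpos)
    set j : ℕ := (⌊x / β⌋).toNat with hj
    have hjfloor : ((j:ℤ):ℝ) = (⌊x / β⌋ : ℝ) := by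
      rw [hj, Int.toNat_of_nonneg (Int.floor_nonneg.mpr hq)]
    have hfl : (⌊x / β⌋ : ℝ) ≤ x / β := Int.floor_le _
    have hfl2 : x / β < (⌊x / β⌋ : ℝ) + 1 := Int.lt_floor_add_one _
    have h1 : (j:ℝ) * β ≤ x := by
      have := mul_le_mul_of_nonneg_right hfl hpos.le
      rw [div_mul_cancel₀ x hpos.ne'] at this
      calc (j:ℝ) * β = (⌊x / β⌋ : ℝ) * β := by rw [← hjfloor]; norm_num
        _ ≤ x := this
    have h2 : x - (j:ℝ) * β < β := by
      have := mul_lt_mul_of_pos_right hfl2 hpos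
      rw [add_mul, one_mul, div_mul_cancel₀ x hpos.ne'] at this
      have hj' : ((⌊x / β⌋ : ℝ)) * β = (j:ℝ) * β := by rw [← hjfloor]; norm_num
      linarith [hj'.symm ▸ this]
    refine ⟨j * n, (j:ℤ) * K + T, ?_⟩
    have hexp : (t + ((j * n : ℕ):ℝ) * θ) - (τ + ((j:ℤ) * K + T : ℤ)) = (j:ℝ) * β - x := by
      push_cast
      simp only [hβ, hx, hc]
      ring
    rw [hexp, abs_lt]
    constructor
    · have : β ≤ |β| := le_abs_self β
      linarith
    · have : β ≤ |β| := le_abs_self β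
      linarith

lemma eC_of_unit {w : ℂ} (hw : Complex.abs w = 1) : eC (Complex.arg w / (2 * Real.pi)) = w := by
  have hπ : (Real.pi : ℝ) ≠ 0 := Real.pi_ne_zero
  have : 2 * (Real.pi : ℂ) * Complex.I * ((Complex.arg w / (2 * Real.pi) : ℝ) : ℂ)
      = (Complex.arg w : ℂ) * Complex.I := by
    push_cast
    have h2π : (2 * (Real.pi:ℂ)) ≠ 0 := by
      simp [Real.pi_ne_zero]
    field_simp
  rw [eC, this]
  have := Complex.abs_mul_exp_arg_mul_I w
  rwa [hw, Complex.ofReal_one, one_mul] at this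

lemma dense_orbit {θ : ℝ} (hirr : Irrational θ) (t : ℝ) {w : ℂ} (hw : Complex.abs w = 1)
    {ε : ℝ} (hε : 0 < ε) : ∃ m : ℕ, Complex.abs (w - rot θ ^ m * eC t) < ε := by
  have hπ := Real.pi_pos
  set τ : ℝ := Complex.arg w / (2 * Real.pi) with hτ
  have hwτ : w = eC τ := (eC_of_unit hw).symm
  set δ : ℝ := min (ε / (8 * Real.pi + 1)) (1 / (2 * Real.pi + 1)) with hδdef
  have hδ : 0 < δ := by
    apply lt_min
    · positivity
    · positivity
  obtain ⟨m, M, hm⟩ := exists_orbit_close hirr t τ hδ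
  refine ⟨m, ?_⟩
  set x : ℝ := (t + (m:ℝ) * θ) - (τ + M) with hxdef
  have hx1 : |2 * Real.pi * x| ≤ 1 := by
    have h1 : |x| < δ := hm
    have h2 : δ ≤ 1 / (2 * Real.pi + 1) := min_le_right _ _
    rw [abs_mul, abs_of_pos (by positivity : (0:ℝ) < 2 * Real.pi)]
    calc 2 * Real.pi * |x| ≤ 2 * Real.pi * (1 / (2 * Real.pi + 1)) := by
          apply mul_le_mul_of_nonneg_left (le_of_lt (lt_of_lt_of_le h1 h2)) (by positivity)
      _ ≤ 1 := by
          rw [mul_one_div, div_le_one (by positivity)]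
          linarith
  have key : rot θ ^ m * eC t = eC (t + (m:ℝ) * θ) := by
    rw [rot_pow, ← eC_add]
    congr 1
    ring
  have hsplit : eC (t + (m:ℝ) * θ) = eC (τ + M) * eC x := by
    rw [← eC_add]
    congr 1
    simp only [hxdef]
    ring
  have habs : Complex.abs (w - rot θ ^ m * eC t) = Complex.abs (eC x - 1) := by
    rw [key, hsplit, hwτ]
    have : eC τ = eC (τ + M) := (eC_add_int τ M).symm
    rw [this]
    calc Complex.abs (eC (τ + M) - eC (τ + M) * eC x)
        = Complex.abs (eC (τ + M)) * Complex.abs (1 - eC x) := by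
          rw [← map_mul]; congr 1; ring
      _ = Complex.abs (1 - eC x) := by rw [abs_eC, one_mul]
      _ = Complex.abs (eC x - 1) := by rw [← Complex.abs.map_neg]; congr 1; ring
  rw [habs]
  calc Complex.abs (eC x - 1) ≤ 2 * |2 * Real.pi * x| := eC_sub_one x hx1
    _ = 4 * Real.pi * |x| := by
        rw [abs_mul, abs_of_pos (by positivity : (0:ℝ) < 2 * Real.pi)]; ring
    _ < 4 * Real.pi * δ := by
        apply mul_lt_mul_of_pos_left hm (by positivity)
    _ ≤ 4 * Real.pi * (ε / (8 * Real.pi + 1)) := by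
        apply mul_le_mul_of_nonneg_left (min_le_left _ _) (by positivity)
    _ < ε := by
        rw [mul_div_assoc']
        rw [div_lt_iff₀ (by positivity)]
        nlinarith

/-- Uniqueness of normalized linearizations of `P_θ` for irrational `θ`. -/
lemma linearizer_unique {θ ρ : ℝ} (hirr : Irrational θ) (hρ : 0 < ρ) {φ₁ φ₂ : ℂ → ℂ}
    (hd₁ : DifferentiableOn ℂ φ₁ (ball (0:ℂ) ρ)) (h01 : φ₁ 0 = 0) (hdv₁ : deriv φ₁ 0 = 1)
    (hf₁ : ∀ z ∈ ball (0:ℂ) ρ, Pquad θ (φ₁ z) = φ₁ (rot θ * z))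
    (hd₂ : DifferentiableOn ℂ φ₂ (ball (0:ℂ) ρ)) (h02 : φ₂ 0 = 0) (hdv₂ : deriv φ₂ 0 = 1)
    (hf₂ : ∀ z ∈ ball (0:ℂ) ρ, Pquad θ (φ₂ z) = φ₂ (rot θ * z)) :
    EqOn φ₁ φ₂ (ball (0:ℂ) ρ) := by
  have h0mem : (0:ℂ) ∈ ball (0:ℂ) ρ := mem_ball_self hρ
  have hballnhds : ball (0:ℂ) ρ ∈ 𝓝 (0:ℂ) := isOpen_ball.mem_nhds h0mem
  set g : ℂ → ℂ := fun z => φ₁ z - φ₂ z with hgdef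
  have hgd : DifferentiableOn ℂ g (ball (0:ℂ) ρ) := hd₁.sub hd₂
  have hganal : AnalyticOnNhd ℂ g (ball (0:ℂ) ρ) := hgd.analyticOnNhd isOpen_ball
  have hga : AnalyticAt ℂ g 0 := hganal 0 h0mem
  have hg0 : g 0 = 0 := by simp [hgdef, h01, h02]
  have hgderiv : deriv g 0 = 0 := by
    have d1 : DifferentiableAt ℂ φ₁ 0 := hd₁.differentiableAt hballnhds
    have d2 : DifferentiableAt ℂ φ₂ 0 := hd₂.differentiableAt hballnhds
    rw [hgdef]
    rw [deriv_fun_sub d1 d2, hdv₁, hdv₂, sub_self]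
  suffices h : EqOn g 0 (ball (0:ℂ) ρ) by
    intro z hz
    have := h hz
    simpa [hgdef, sub_eq_zero] using this
  by_cases htop : analyticOrderAt g 0 = ⊤
  · exact hganal.eqOn_zero_of_preconnected_of_eventuallyEq_zero
      (convex_ball _ _).isPreconnected h0mem (analyticOrderAt_eq_top.mp htop)
  · exfalso
    set n : ℕ := (analyticOrderAt g 0).toNat with hndef
    have hord : analyticOrderAt g 0 = (n : ℕ∞) := (ENat.coe_toNat htop).symm
    obtain ⟨u, hu_an, hu0, huev⟩ := hga.analyticOrderAt_eq_natCast.mp hord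
    have huev' : ∀ᶠ z in 𝓝 (0:ℂ), g z = z ^ n * u z := by
      filter_upwards [huev] with z hz
      simpa using hz
    -- n = 0 impossible
    have hn0 : n ≠ 0 := by
      intro h0
      have := huev'.self_of_nhds
      rw [h0] at this
      simp only [pow_zero, one_mul] at this
      exact hu0 (by rw [← this, hg0])
    -- n = 1 impossible
    have hn1 : n ≠ 1 := by
      intro h1
      have hud : DifferentiableAt ℂ u 0 := hu_an.differentiableAt
      have hder : HasDerivAt (fun z : ℂ => z ^ n * u z) (u 0) 0 := by
        rw [h1]
        have := (hasDerivAt_id' (0:ℂ)).mul hud.hasDerivAt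
        have h3 : HasDerivAt (fun z : ℂ => z * u z) (1 * u 0 + 0 * deriv u 0) 0 := this
        simpa using h3
      have : deriv g 0 = u 0 := by
        rw [Filter.EventuallyEq.deriv_eq huev', hder.deriv]
      rw [hgderiv] at this
      exact hu0 this.symm
    have hn2 : 2 ≤ n := by omega
    -- functional equation for g
    have hgf : ∀ z ∈ ball (0:ℂ) ρ, g (rot θ * z) = g z * (rot θ + φ₁ z + φ₂ z) := by
      intro z hz
      have e1 := hf₁ z hz
      have e2 := hf₂ z hz
      simp only [hgdef, ← e1, ← e2, Pquad]
      ring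
    set A : ℂ → ℂ := fun z => rot θ ^ n * u (rot θ * z) with hA
    set B : ℂ → ℂ := fun z => u z * (rot θ + φ₁ z + φ₂ z) with hB
    have hrot_tendsto : Tendsto (fun z : ℂ => rot θ * z) (𝓝 0) (𝓝 0) := by
      have : Continuous (fun z : ℂ => rot θ * z) := continuous_const.mul continuous_id
      simpa using this.tendsto 0
    have hAB : ∀ᶠ z in 𝓝[≠] (0:ℂ), A z = B z := by
      have h2 : ∀ᶠ z in 𝓝 (0:ℂ), g (rot θ * z) = (rot θ * z) ^ n * u (rot θ * z) :=
        hrot_tendsto.eventually huev'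
      have h3 : ∀ᶠ z in 𝓝 (0:ℂ), z ∈ ball (0:ℂ) ρ := hballnhds
      have hall : ∀ᶠ z in 𝓝 (0:ℂ), z ≠ 0 →  A z = B z := by
        filter_upwards [huev', h2, h3] with z e1 e2 e3 hz0
        have := hgf z e3
        rw [e1, e2] at this
        have hzn : z ^ n ≠ 0 := pow_ne_zero n hz0
        have : z ^ n * (rot θ ^ n * u (rot θ * z)) = z ^ n * (u z * (rot θ + φ₁ z + φ₂ z)) := by
          rw [mul_pow] at this
          calc z ^ n * (rot θ ^ n * u (rot θ * z)) = rot θ ^ n * z ^ n * u (rot θ * z) := by ring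
            _ = z ^ n * (u z * (rot θ + φ₁ z + φ₂ z)) := by rw [this]; ring
        exact mul_left_cancel₀ hzn this
      rw [eventually_nhdsWithin_iff]
      filter_upwards [hall] with z hz hz0
      exact hz (by simpa using hz0)
    have hAlim : Tendsto A (𝓝[≠] (0:ℂ)) (𝓝 (rot θ ^ n * u 0)) := by
      have hAc : Tendsto A (𝓝 (0:ℂ)) (𝓝 (rot θ ^ n * u 0)) := by
        have hu_c : Tendsto u (𝓝 (0:ℂ)) (𝓝 (u 0)) := hu_an.continuousAt
        exact tendsto_const_nhds.mul (hu_c.comp hrot_tendsto)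
      exact hAc.mono_left nhdsWithin_le_nhds
    have hBlim : Tendsto B (𝓝[≠] (0:ℂ)) (𝓝 (u 0 * rot θ)) := by
      have hφ₁c : Tendsto φ₁ (𝓝 (0:ℂ)) (𝓝 0) := by
        have := (hd₁.differentiableAt hballnhds).continuousAt
        rwa [ContinuousAt, h01] at this
      have hφ₂c : Tendsto φ₂ (𝓝 (0:ℂ)) (𝓝 0) := by
        have := (hd₂.differentiableAt hballnhds).continuousAt
        rwa [ContinuousAt, h02] at this
      have hu_c : Tendsto u (𝓝 (0:ℂ)) (𝓝 (u 0)) := hu_an.continuousAt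
      have hBc : Tendsto B (𝓝 (0:ℂ)) (𝓝 (u 0 * (rot θ + 0 + 0))) :=
        hu_c.mul (((tendsto_const_nhds : Tendsto (fun _ : ℂ => rot θ) (𝓝 0) (𝓝 (rot θ))).add hφ₁c).add hφ₂c)
      simpa using hBc.mono_left nhdsWithin_le_nhds
    have heq : rot θ ^ n * u 0 = u 0 * rot θ :=
      tendsto_nhds_unique (hAlim.congr' hAB) hBlim
    have hrotn : rot θ ^ n = rot θ := by
      have : u 0 * rot θ ^ n = u 0 * rot θ := by linear_combination heq
      exact mul_left_cancel₀ hu0 this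
    have hpow : rot θ ^ (n - 1) * rot θ = rot θ := by
      rw [← pow_succ]
      have : n - 1 + 1 = n := by omega
      rw [this, hrotn]
    have : rot θ ^ (n - 1) = 1 := by
      have h' : rot θ ^ (n - 1) * rot θ = 1 * rot θ := by rw [hpow, one_mul]
      exact mul_right_cancel₀ (rot_ne_zero θ) h'
    exact rot_pow_ne_one hirr (by omega : n - 1 ≠ 0) this

lemma rot_pow_injective {θ : ℝ} (hirr : Irrational θ) :
    Function.Injective (fun k : ℕ => rot θ ^ k) := by
  have key : ∀ i j : ℕ, i < j → rot θ ^ i = rot θ ^ j → False := by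
    intro i j hij h
    have h1 : rot θ ^ i * rot θ ^ (j - i) = rot θ ^ i * 1 := by
      rw [mul_one, ← pow_add, h]
      congr 1
      omega
    have h2 : rot θ ^ (j - i) = 1 :=
      mul_left_cancel₀ (pow_ne_zero i (rot_ne_zero θ)) h1
    exact rot_pow_ne_one hirr (by omega : j - i ≠ 0) h2
  intro i j hij
  rcases lt_trichotomy i j with h | h | h
  · exact absurd (key i j h hij) not_false
  · exact h
  · exact absurd (key j i h hij.symm) not_false

/-- Elementary limit properties of linearizations: if `r_n → r > 0`, `θ_n → θ`,
`r(θ_n) > r_n` and the maps `t ↦ φ_{θ_n}(r_n e^{2πit})` converge uniformly to `ψ`, then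
`r(θ) ≥ r`, `ψ` is injective on `ℝ/ℤ`, the function equal to `φ_θ` on `B(0,r)` and to
`ψ(t)` at `r e^{2πit}` is a continuous extension of `φ_θ` to the closed ball (in
particular `φ_θ(r e^{2πit}) = ψ(t)` if `r(θ) > r`), and if `r(θ) = r` then the boundary
of the Siegel disk `Δ(θ)` is `ψ(ℝ/ℤ)`. -/
theorem limits_of_linearizations
    (rseq : ℕ → ℝ) (r : ℝ) (hrpos : ∀ n, 0 < rseq n) (hr : 0 < r)
    (hrlim : Tendsto rseq atTop (𝓝 r))
    (θseq : ℕ → ℝ) (θ : ℝ) (hθlim : Tendsto θseq atTop (𝓝 θ))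
    (hrn : ∀ n, rseq n < confRadius (θseq n))
    (φseq : ℕ → ℂ → ℂ) (hφseq : ∀ n, LinOn (θseq n) (φseq n) (confRadius (θseq n)))
    (ψ : ℝ → ℂ)
    (hconv : TendstoUniformly (fun n t => φseq n (circlePt (rseq n) t)) ψ atTop) :
    r ≤ confRadius θ ∧
    (∀ s t : ℝ, ψ s = ψ t → ∃ k : ℤ, t = s + k) ∧
    ∀ φθ : ℂ → ℂ, LinOn θ φθ (confRadius θ) →
      ContinuousOn
        (fun z => if ‖z‖ < r then φθ z else ψ (Complex.arg z / (2 * Real.pi)))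
        (closedBall (0 : ℂ) r) ∧
      (r < confRadius θ → ∀ t : ℝ, φθ (circlePt r t) = ψ t) ∧
      (confRadius θ = r →
        frontier (φθ '' ball (0 : ℂ) (confRadius θ)) = range ψ) := by
  have hballsub : ball (0:ℂ) 1 ⊆ closedBall (0:ℂ) 1 := ball_subset_closedBall
  have h0cb : (0:ℂ) ∈ closedBall (0:ℂ) 1 := mem_closedBall_self zero_le_one
  have h0b : (0:ℂ) ∈ ball (0:ℂ) 1 := mem_ball_self one_pos
  set F : ℕ → ℂ → ℂ := fun n w => φseq n ((rseq n : ℂ) * w) with hFdef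
  have hrn_pos : ∀ n, (0:ℝ) < confRadius (θseq n) := fun n => (hrpos n).trans (hrn n)
  have hmaps : ∀ n, ∀ w ∈ closedBall (0:ℂ) 1,
      ((rseq n : ℂ) * w) ∈ ball (0:ℂ) (confRadius (θseq n)) := by
    intro n w hw
    rw [mem_closedBall_zero_iff] at hw
    rw [mem_ball_zero_iff, norm_mul, Complex.norm_real, Real.norm_eq_abs,
      abs_of_pos (hrpos n)]
    calc rseq n * ‖w‖ ≤ rseq n * 1 := by
          exact mul_le_mul_of_nonneg_left hw (hrpos n).le
      _ < confRadius (θseq n) := by rw [mul_one]; exact hrn n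
  have hinner_cont : ∀ n, Continuous (fun w : ℂ => (rseq n : ℂ) * w) :=
    fun n => continuous_const.mul continuous_id
  have hFdiff : ∀ n, DifferentiableOn ℂ (F n) (ball (0:ℂ) 1) := by
    intro n
    exact ((hφseq n).1.comp ((differentiable_id.const_mul _).differentiableOn)
      (fun w hw => hmaps n w (hballsub hw)))
  have hFcont : ∀ n, ContinuousOn (F n) (closedBall (0:ℂ) 1) := by
    intro n
    exact ((hφseq n).1.continuousOn).comp ((hinner_cont n).continuousOn) (fun w hw => hmaps n w hw)
  -- uniform Cauchy via maximum principle
  have hcauchy : UniformCauchySeqOn F atTop (closedBall (0:ℂ) 1) := by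
    rw [Metric.uniformCauchySeqOn_iff]
    intro ε hε
    have hC := (tendstoUniformlyOn_univ.mpr hconv).uniformCauchySeqOn
    rw [Metric.uniformCauchySeqOn_iff] at hC
    obtain ⟨N, hN⟩ := hC (ε/2) (half_pos hε)
    refine ⟨N, fun m hm n hn w hw => ?_⟩
    have hd : DiffContOnCl ℂ (fun z => F m z - F n z) (ball (0:ℂ) 1) := by
      refine ⟨(hFdiff m).sub (hFdiff n), ?_⟩
      rw [closure_ball (0:ℂ) one_ne_zero]
      exact (hFcont m).sub (hFcont n)
    have hbd : ∀ z ∈ frontier (ball (0:ℂ) 1), ‖F m z - F n z‖ ≤ ε/2 := by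
      intro z hz
      rw [frontier_ball (0:ℂ) one_ne_zero] at hz
      have hzu : Complex.abs z = 1 := by
        rw [mem_sphere_zero_iff_norm] at hz
        rwa [Complex.norm_eq_abs] at hz
      have hze : eC (Complex.arg z / (2*Real.pi)) = z := eC_of_unit hzu
      have h1 := hN m hm n hn (Complex.arg z / (2*Real.pi)) (mem_univ _)
      rw [dist_eq_norm] at h1
      have h2 : ∀ k, φseq k (circlePt (rseq k) (Complex.arg z / (2*Real.pi))) = F k z := by
        intro k
        rw [circlePt_eq, hze]
      rw [h2 m, h2 n] at h1
      exact h1.le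
    have hclos : w ∈ closure (ball (0:ℂ) 1) := by
      rwa [closure_ball (0:ℂ) one_ne_zero]
    have := Complex.norm_le_of_forall_mem_frontier_norm_le isBounded_ball hd hbd hclos
    rw [dist_eq_norm]
    calc ‖F m w - F n w‖ ≤ ε/2 := this
      _ < ε := by linarith
  -- the limit function G
  have hptLim : ∀ w ∈ closedBall (0:ℂ) 1, ∃ L, Tendsto (fun n => F n w) atTop (𝓝 L) :=
    fun w hw => cauchySeq_tendsto_of_complete (hcauchy.cauchySeq hw)
  set G : ℂ → ℂ := fun w => limUnder atTop (fun n => F n w) with hGdef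
  have hGt : ∀ w ∈ closedBall (0:ℂ) 1, Tendsto (fun n => F n w) atTop (𝓝 (G w)) := by
    intro w hw
    obtain ⟨L, hL⟩ := hptLim w hw
    have hLU : G w = L := hL.limUnder_eq
    rwa [hLU]
  have hunif : TendstoUniformlyOn F G atTop (closedBall (0:ℂ) 1) :=
    hcauchy.tendstoUniformlyOn_of_tendsto hGt
  have hGcont : ContinuousOn G (closedBall (0:ℂ) 1) :=
    hunif.continuousOn (Filter.Eventually.of_forall hFcont).frequently
  have hloc : TendstoLocallyUniformlyOn F G atTop (ball (0:ℂ) 1) :=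
    (hunif.mono hballsub).tendstoLocallyUniformlyOn
  have hGdiff : DifferentiableOn ℂ G (ball (0:ℂ) 1) :=
    hloc.differentiableOn (Filter.Eventually.of_forall hFdiff) isOpen_ball
  have hG0 : G 0 = 0 := by
    refine tendsto_nhds_unique (hGt 0 h0cb) ?_
    have : (fun n => F n 0) = fun _ => 0 := by
      funext n
      simp only [hFdef, mul_zero]
      exact (hφseq n).2.2.1
    rw [this]
    exact tendsto_const_nhds
  have heC_cb : ∀ t : ℝ, eC t ∈ closedBall (0:ℂ) 1 := by
    intro t
    rw [mem_closedBall_zero_iff, Complex.norm_eq_abs, abs_eC]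
  have hGψ : ∀ t, ψ t = G (eC t) := by
    intro t
    refine tendsto_nhds_unique ?_ (hGt (eC t) (heC_cb t))
    exact hconv.tendsto_at t
  -- derivative of G at 0 equals r
  have hGd0 : deriv G 0 = (r : ℂ) := by
    have hpt : Tendsto (fun n => (deriv ∘ F) n 0) atTop (𝓝 (deriv G 0)) :=
      (hloc.deriv (Filter.Eventually.of_forall hFdiff) isOpen_ball).tendsto_at h0b
    have hder : ∀ n, deriv (F n) 0 = (rseq n : ℂ) := by
      intro n
      have hmem0 : (0:ℂ) ∈ ball (0:ℂ) (confRadius (θseq n)) := mem_ball_self (hrn_pos n)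
      have hdφ : DifferentiableAt ℂ (φseq n) 0 :=
        (hφseq n).1.differentiableAt (isOpen_ball.mem_nhds hmem0)
      have h1 : HasDerivAt (fun w : ℂ => (rseq n : ℂ) * w) ((rseq n : ℂ)) 0 := by
        simpa using (hasDerivAt_id (0:ℂ)).const_mul ((rseq n : ℂ))
      have h2 := hdφ.hasDerivAt
      rw [(hφseq n).2.2.2.1] at h2
      have h2' : HasDerivAt (φseq n) 1 ((rseq n : ℂ) * 0) := by rwa [mul_zero]
      have h3 : HasDerivAt (F n) (1 * (rseq n : ℂ)) 0 := h2'.comp 0 h1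
      rw [h3.deriv, one_mul]
    have hcast : Tendsto (fun n => ((rseq n : ℝ) : ℂ)) atTop (𝓝 (r:ℂ)) :=
      (Complex.continuous_ofReal.tendsto r).comp hrlim
    refine tendsto_nhds_unique ?_ hcast
    refine hpt.congr fun n => ?_
    exact hder n
  have hrC : (r : ℂ) ≠ 0 := Complex.ofReal_ne_zero.mpr hr.ne'
  -- rot is continuous in the angle
  have hrot_cont : Continuous (fun x : ℝ => rot x) := by
    unfold rot
    exact Complex.continuous_exp.comp (continuous_const.mul Complex.continuous_ofReal)
  have hrot_c : Tendsto (fun n => rot (θseq n)) atTop (𝓝 (rot θ)) :=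
    (hrot_cont.tendsto θ).comp hθlim
  -- functional equation for G on the closed ball
  have hGfun : ∀ w ∈ closedBall (0:ℂ) 1, Pquad θ (G w) = G (rot θ * w) := by
    intro w hw
    have hn : ∀ n, Pquad (θseq n) (F n w) = F n (rot (θseq n) * w) := by
      intro n
      have hmemw : (rseq n : ℂ) * w ∈ ball (0:ℂ) (confRadius (θseq n)) := hmaps n w hw
      have h := (hφseq n).2.2.2.2 _ hmemw
      rw [h]
      simp only [hFdef]
      congr 1
      ring
    have hFw : Tendsto (fun n => F n w) atTop (𝓝 (G w)) := hGt w hw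
    have hL : Tendsto (fun n => Pquad (θseq n) (F n w)) atTop (𝓝 (Pquad θ (G w))) := by
      simp only [Pquad]
      exact (hrot_c.mul hFw).add (hFw.pow 2)
    have hR : Tendsto (fun n => F n (rot (θseq n) * w)) atTop (𝓝 (G (rot θ * w))) := by
      have hmemn : ∀ n, rot (θseq n) * w ∈ closedBall (0:ℂ) 1 :=
        fun n => rot_mul_mem_closedBall hw
      have hmem' : rot θ * w ∈ closedBall (0:ℂ) 1 := rot_mul_mem_closedBall hw
      have hGrot : Tendsto (fun n => G (rot (θseq n) * w)) atTop (𝓝 (G (rot θ * w))) := by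
        have hcw : ContinuousWithinAt G (closedBall (0:ℂ) 1) (rot θ * w) := hGcont _ hmem'
        refine hcw.tendsto.comp ?_
        refine tendsto_nhdsWithin_of_tendsto_nhds_of_eventually_within _ ?_
          (Filter.Eventually.of_forall hmemn)
        exact hrot_c.mul tendsto_const_nhds
      have hdist : Tendsto
          (fun n => dist (G (rot (θseq n) * w)) (F n (rot (θseq n) * w))) atTop (𝓝 0) := by
        refine Metric.tendsto_atTop.mpr fun ε hε => ?_
        have hev := Metric.tendstoUniformlyOn_iff.mp hunif ε hε
        rw [eventually_atTop] at hev
        obtain ⟨N, hN⟩ := hev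
        refine ⟨N, fun n hn => ?_⟩
        have hd := hN n hn _ (hmemn n)
        rw [Real.dist_eq, sub_zero, _root_.abs_of_nonneg dist_nonneg]
        exact hd
      exact hGrot.congr_dist hdist
    exact tendsto_nhds_unique (hL.congr fun n => hn n) hR
  -- iterating the functional equation for G
  have hGiter : ∀ k : ℕ, ∀ w ∈ closedBall (0:ℂ) 1, (Pquad θ)^[k] (G w) = G (rot θ ^ k * w) :=
    lin_iterate (fun z hz => rot_mul_mem_closedBall hz) hGfun
  -- θ must be irrational
  have hirr : Irrational θ := by
    by_contra hrat
    obtain ⟨q, hq⟩ : ∃ q : ℚ, (q:ℝ) = θ := by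
      rw [Irrational] at hrat
      push_neg at hrat
      simpa using hrat
    set κ : ℕ := q.den with hκ
    have hκ0 : κ ≠ 0 := q.den_nz
    have hrotκ : rot θ ^ κ = 1 := by
      rw [rot_pow, ← hq]
      refine eC_eq_one_iff.mpr ⟨q.num, ?_⟩
      rw [hκ]
      have h1 : (q.num:ℝ) / (q.den:ℝ) = (q:ℝ) := by
        exact_mod_cast congrArg (fun x : ℚ => (x:ℝ)) (Rat.num_div_den q)
      have hden : ((q.den:ℕ):ℝ) ≠ 0 := Nat.cast_ne_zero.mpr q.den_nz
      rw [← h1]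
      field_simp
    have hfix : ∀ w ∈ closedBall (0:ℂ) 1, (Pquad θ)^[κ] (G w) = G w := by
      intro w hw
      rw [hGiter κ w hw, hrotκ, one_mul]
    set g : ℂ → ℂ := fun z => (Pquad θ)^[κ] z - z with hgdef
    have hPdiff : Differentiable ℂ (Pquad θ) := by
      intro z
      exact ((differentiableAt_id.const_mul _).add (differentiableAt_pow 2))
    have hgdiff : Differentiable ℂ g := (hPdiff.iterate κ).sub differentiable_id
    have hganal : AnalyticOnNhd ℂ g univ :=
      (hgdiff.differentiableOn).analyticOnNhd isOpen_univ
    have hGanal0 : AnalyticAt ℂ G 0 := (hGdiff.analyticOnNhd isOpen_ball) 0 h0b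
    have himg_nhds : G '' ball (0:ℂ) 1 ∈ 𝓝 (0:ℂ) := by
      rcases hGanal0.eventually_constant_or_nhds_le_map_nhds with hconst | hopen
      · exfalso
        have hev : G =ᶠ[𝓝 (0:ℂ)] (fun _ => G 0) := hconst
        have : deriv G 0 = 0 := by
          rw [hev.deriv_eq]
          simp
        exact hrC (by rw [← hGd0, this])
      · have h1 : G '' ball (0:ℂ) 1 ∈ map G (𝓝 0) :=
          image_mem_map (isOpen_ball.mem_nhds h0b)
        have := hopen h1
        rwa [hG0] at this
    have hinf : (G '' ball (0:ℂ) 1).Infinite := infinite_of_mem_nhds (0:ℂ) himg_nhds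
    have hcompactG : IsCompact (G '' closedBall (0:ℂ) 1) :=
      (isCompact_closedBall _ _).image_of_continuousOn hGcont
    obtain ⟨x, hxK, hacc⟩ :=
      hinf.exists_accPt_of_subset_isCompact hcompactG (image_mono hballsub)
    have hfreq : ∃ᶠ z in 𝓝[≠] x, g z = 0 := by
      have h1 := accPt_iff_frequently.mp hacc
      rw [frequently_nhdsWithin_iff]
      refine h1.mono ?_
      rintro y ⟨hyx, v, hv, rfl⟩
      constructor
      · show g (G v) = 0
        rw [hgdef]
        simp only
        rw [hfix v (hballsub hv), sub_self]
      · simpa using hyx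
    have hg0 := hganal.eqOn_zero_of_preconnected_of_frequently_eq_zero
      isPreconnected_univ (mem_univ x) hfreq
    have hg3 : g 3 = 0 := hg0 (mem_univ 3)
    have habs3 : (3:ℝ) ≤ Complex.abs (3:ℂ) := by rw [← Complex.norm_eq_abs]; norm_num
    have hesc := Pquad_escape θ habs3 κ
    rw [hgdef] at hg3
    simp only [sub_eq_zero] at hg3
    rw [hg3] at hesc
    have h2κ : (2:ℝ) ≤ 2 ^ κ := by
      calc (2:ℝ) = 2^1 := (pow_one 2).symm
      _ ≤ 2 ^ κ := pow_le_pow_right₀ (by norm_num) (by omega)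
    have : Complex.abs (3:ℂ) = 3 := by rw [← Complex.norm_eq_abs]; norm_num
    rw [this] at hesc
    nlinarith
  -- G is injective on the closed unit ball
  have hGinj : InjOn G (closedBall (0:ℂ) 1) := by
    have aux : ∀ a ∈ closedBall (0:ℂ) 1, ∀ b ∈ closedBall (0:ℂ) 1,
        G a = G b → Complex.abs b ≤ Complex.abs a → a = b := by
      intro a ha b hb hab hba
      rcases eq_or_ne a 0 with rfl | ha0
      · have hb0 : Complex.abs b = 0 := le_antisymm (by simpa using hba) (Complex.abs.nonneg b)
        have : b = 0 := by rwa [map_eq_zero] at hb0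
        rw [this]
      set c : ℂ := b / a with hc
      have hca : c * a = b := div_mul_cancel₀ b ha0
      have habsa_pos : 0 < Complex.abs a := Complex.abs.pos ha0
      have hc1 : Complex.abs c ≤ 1 := by
        rw [hc, map_div₀]
        exact (div_le_one habsa_pos).mpr hba
      have hmul_cb : ∀ z ∈ closedBall (0:ℂ) 1, c * z ∈ closedBall (0:ℂ) 1 := by
        intro z hz
        rw [mem_closedBall_zero_iff] at hz ⊢
        rw [norm_mul]
        calc ‖c‖ * ‖z‖ ≤ 1 * 1 :=
              mul_le_mul (by rwa [Complex.norm_eq_abs]) hz (norm_nonneg z) zero_le_one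
          _ = 1 := mul_one 1
      have hmul_b : ∀ z ∈ ball (0:ℂ) 1, c * z ∈ ball (0:ℂ) 1 := by
        intro z hz
        rw [mem_ball_zero_iff] at hz ⊢
        rw [norm_mul]
        calc ‖c‖ * ‖z‖ ≤ 1 * ‖z‖ :=
              mul_le_mul_of_nonneg_right (by rwa [Complex.norm_eq_abs]) (norm_nonneg z)
          _ = ‖z‖ := one_mul _
          _ < 1 := hz
      set u : ℂ → ℂ := fun z => G z - G (c * z) with hu
      have hucont : ContinuousOn u (closedBall (0:ℂ) 1) :=
        hGcont.sub (hGcont.comp (continuous_const.mul continuous_id).continuousOn hmul_cb)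
      have hudiff : DifferentiableOn ℂ u (ball (0:ℂ) 1) :=
        hGdiff.sub (hGdiff.comp ((differentiable_id.const_mul c).differentiableOn) hmul_b)
      have hGiter2 : ∀ k : ℕ, G (rot θ ^ k * a) = G (rot θ ^ k * b) := by
        intro k
        rw [← hGiter k a ha, ← hGiter k b hb, hab]
      have hzeros : ∀ k : ℕ, u (rot θ ^ k * a) = 0 := by
        intro k
        have h1 : c * (rot θ ^ k * a) = rot θ ^ k * b := by rw [← hca]; ring
        show G (rot θ ^ k * a) - G (c * (rot θ ^ k * a)) = 0
        rw [h1, hGiter2 k, sub_self]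
      have habs_a_le : Complex.abs a ≤ 1 := by
        rw [mem_closedBall_zero_iff, Complex.norm_eq_abs] at ha
        exact ha
      have hEq : ∀ z ∈ ball (0:ℂ) 1, u z = 0 := by
        rcases lt_or_eq_of_le habs_a_le with hlt | heq1
        · -- accumulation inside the open ball
          set Z : Set ℂ := range (fun k : ℕ => rot θ ^ k * a) with hZ
          have hZinf : Z.Infinite := by
            apply Set.infinite_range_of_injective
            intro i j hij
            have h1 : rot θ ^ i = rot θ ^ j := mul_right_cancel₀ ha0 hij
            exact rot_pow_injective hirr h1
          have hZsub : Z ⊆ sphere (0:ℂ) (Complex.abs a) := by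
            rintro y ⟨k, rfl⟩
            simp only [mem_sphere_zero_iff_norm, Complex.norm_eq_abs, map_mul, map_pow, abs_rot,
              one_pow, one_mul]
          obtain ⟨x, hxmem, hacc⟩ :=
            hZinf.exists_accPt_of_subset_isCompact (isCompact_sphere _ _) hZsub
          have hxball : x ∈ ball (0:ℂ) 1 := by
            rw [mem_sphere_zero_iff_norm] at hxmem
            rw [mem_ball_zero_iff, hxmem]
            exact hlt
          have hfreq : ∃ᶠ z in 𝓝[≠] x, u z = 0 := by
            have h1 := accPt_iff_frequently.mp hacc
            rw [frequently_nhdsWithin_iff]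
            refine h1.mono ?_
            rintro y ⟨hyx, k, rfl⟩
            exact ⟨hzeros k, by simpa using hyx⟩
          have hEqOn := (hudiff.analyticOnNhd isOpen_ball).eqOn_zero_of_preconnected_of_frequently_eq_zero
            (convex_ball _ _).isPreconnected hxball hfreq
          intro z hz
          simpa using hEqOn hz
        · -- a on the unit circle: use density of the orbit
          have hsphere0 : ∀ z ∈ sphere (0:ℂ) 1, u z = 0 := by
            intro z hz
            have hz1 : Complex.abs z = 1 := by
              rw [mem_sphere_zero_iff_norm] at hz
              rwa [Complex.norm_eq_abs] at hz
            by_contra hne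
            have hpos : 0 < Complex.abs (u z) := Complex.abs.pos hne
            have hzcb : z ∈ closedBall (0:ℂ) 1 := by
              rw [mem_closedBall_zero_iff, Complex.norm_eq_abs, hz1]
            have hcw : ContinuousWithinAt u (closedBall (0:ℂ) 1) z := hucont z hzcb
            rw [Metric.continuousWithinAt_iff] at hcw
            obtain ⟨δ, hδ, hδ'⟩ := hcw (Complex.abs (u z)) hpos
            have ha1 : Complex.abs a = 1 := heq1
            have ht₀ : eC (Complex.arg a / (2*Real.pi)) = a := eC_of_unit ha1
            obtain ⟨m, hm⟩ := dense_orbit hirr (Complex.arg a / (2*Real.pi)) hz1 hδ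
            rw [ht₀] at hm
            set y := rot θ ^ m * a with hy
            have hycb : y ∈ closedBall (0:ℂ) 1 := by
              rw [mem_closedBall_zero_iff, Complex.norm_eq_abs, hy, map_mul, map_pow, abs_rot,
                one_pow, one_mul, ha1]
            have hdisty : dist y z < δ := by
              rw [dist_eq_norm, Complex.norm_eq_abs, ← Complex.abs.map_neg, neg_sub]
              exact hm
            have hcontr := hδ' hycb hdisty
            rw [hzeros m, dist_eq_norm, zero_sub, norm_neg, Complex.norm_eq_abs] at hcontr
            exact lt_irrefl _ hcontr
          intro zz hzz
          have hdc : DiffContOnCl ℂ u (ball (0:ℂ) 1) := by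
            refine ⟨hudiff, ?_⟩
            rw [closure_ball _ one_ne_zero]
            exact hucont
          have hzb : zz ∈ closure (ball (0:ℂ) 1) := by
            rw [closure_ball _ one_ne_zero]
            exact hballsub hzz
          have hun := Complex.norm_le_of_forall_mem_frontier_norm_le isBounded_ball hdc
            (C := 0) (fun z hz => by
              rw [frontier_ball _ one_ne_zero] at hz
              rw [hsphere0 z hz]
              simp) hzb
          have : ‖u zz‖ = 0 := le_antisymm hun (norm_nonneg _)
          rwa [norm_eq_zero] at this
      -- conclude that c = 1
      have huev : u =ᶠ[𝓝 (0:ℂ)] (fun _ => 0) :=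
        Filter.eventuallyEq_of_mem (isOpen_ball.mem_nhds h0b) (fun z hz => hEq z hz)
      have hd0 : deriv u 0 = 0 := by
        rw [huev.deriv_eq]
        exact deriv_const _ _
      have hGat : HasDerivAt G (r:ℂ) 0 := by
        have h1 := (hGdiff.differentiableAt (isOpen_ball.mem_nhds h0b)).hasDerivAt
        rwa [hGd0] at h1
      have hinner : HasDerivAt (fun z : ℂ => c * z) c 0 := by
        simpa using (hasDerivAt_id (0:ℂ)).const_mul c
      have hGc : HasDerivAt (fun z => G (c * z)) ((r:ℂ) * c) 0 := by
        have hGat' : HasDerivAt G (r:ℂ) (c * 0) := by rwa [mul_zero]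
        exact hGat'.comp 0 hinner
      have hu' : HasDerivAt u ((r:ℂ) - (r:ℂ) * c) 0 := hGat.sub hGc
      rw [hu'.deriv] at hd0
      have hceq : c = 1 := by
        have h1 : (r:ℂ) * (1 - c) = 0 := by linear_combination hd0
        rcases mul_eq_zero.mp h1 with h | h
        · exact absurd h hrC
        · exact (sub_eq_zero.mp h).symm
      rw [← hca, hceq, one_mul]
    intro a ha b hb hab
    rcases le_total (Complex.abs b) (Complex.abs a) with h | h
    · exact aux a ha b hb hab h
    · exact (aux b hb a ha hab.symm h).symm
  -- the linearization on B(0,r)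
  set φ₀ : ℂ → ℂ := fun z => G (z / (r:ℂ)) with hφ₀def
  have hdiv_mem : ∀ z ∈ ball (0:ℂ) r, z / (r:ℂ) ∈ ball (0:ℂ) 1 := by
    intro z hz
    rw [mem_ball_zero_iff] at hz ⊢
    rw [norm_div, Complex.norm_real, Real.norm_eq_abs, _root_.abs_of_pos hr, div_lt_one hr]
    exact hz
  have hdivcb : ∀ z ∈ closedBall (0:ℂ) r, z / (r:ℂ) ∈ closedBall (0:ℂ) 1 := by
    intro z hz
    rw [mem_closedBall_zero_iff] at hz ⊢
    rw [norm_div, Complex.norm_real, Real.norm_eq_abs, _root_.abs_of_pos hr, div_le_one hr]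
    exact hz
  have hφ₀lin : LinOn θ φ₀ r := by
    refine ⟨?_, ?_, ?_, ?_, ?_⟩
    · exact hGdiff.comp ((differentiable_id.div_const _).differentiableOn) hdiv_mem
    · intro a ha b hb h
      have h2 := hGinj (hballsub (hdiv_mem a ha)) (hballsub (hdiv_mem b hb)) h
      have h3 := congrArg (fun x : ℂ => x * (r:ℂ)) h2
      simpa [div_mul_cancel₀, hrC] using h3
    · show G (0 / (r:ℂ)) = 0
      rw [zero_div, hG0]
    · have hinner : HasDerivAt (fun z : ℂ => z / (r:ℂ)) (1 / (r:ℂ)) 0 :=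
        (hasDerivAt_id (0:ℂ)).div_const (r:ℂ)
      have hGat : HasDerivAt G ((r:ℂ)) ((0:ℂ) / (r:ℂ)) := by
        rw [zero_div]
        have h1 := (hGdiff.differentiableAt (isOpen_ball.mem_nhds h0b)).hasDerivAt
        rwa [hGd0] at h1
      have h2 : HasDerivAt φ₀ ((r:ℂ) * (1 / (r:ℂ))) 0 := by have h := hGat.comp 0 hinner; exact h
      rw [h2.deriv]
      field_simp
    · intro z hz
      show Pquad θ (G (z / (r:ℂ))) = G (rot θ * z / (r:ℂ))
      rw [hGfun (z / (r:ℂ)) (hballsub (hdiv_mem z hz)), mul_div_assoc]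
  have hrle : r ≤ confRadius θ := le_csSup (confRadius_bddAbove θ) ⟨hr, φ₀, hφ₀lin⟩
  -- injectivity of ψ modulo ℤ
  have hψinj : ∀ s t : ℝ, ψ s = ψ t → ∃ k : ℤ, t = s + k := by
    intro s t h
    have h1 : G (eC s) = G (eC t) := by rw [← hGψ, ← hGψ, h]
    have h2 : eC s = eC t := hGinj (heC_cb s) (heC_cb t) h1
    have hne : eC s ≠ 0 := by
      intro h0
      have := abs_eC s
      rw [h0] at this
      simp at this
    have h3 : eC (t - s) = 1 := by
      have h4 : s + (t - s) = t := by ring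
      have h5 : eC s * eC (t - s) = eC s * 1 := by
        rw [mul_one, ← eC_add, h4, ← h2]
      exact mul_left_cancel₀ hne h5
    obtain ⟨k, hk⟩ := eC_eq_one_iff.mp h3
    exact ⟨k, by linarith⟩
  refine ⟨hrle, hψinj, ?_⟩
  intro φθ hφθ
  -- φθ agrees with φ₀ on the open ball of radius r
  have hEqOn : EqOn φθ φ₀ (ball (0:ℂ) r) := by
    refine linearizer_unique hirr hr (hφθ.1.mono (ball_subset_ball hrle)) hφθ.2.2.1
      hφθ.2.2.2.1 (fun z hz => hφθ.2.2.2.2 z (ball_subset_ball hrle hz))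
      hφ₀lin.1 hφ₀lin.2.2.1 hφ₀lin.2.2.2.1 hφ₀lin.2.2.2.2
  have hHcont : ContinuousOn φ₀ (closedBall (0:ℂ) r) :=
    hGcont.comp (continuous_id.div_const _).continuousOn hdivcb
  constructor
  · -- continuity of the glued extension
    refine hHcont.congr ?_
    intro z hz
    by_cases habs : ‖z‖ < r
    · simp only [if_pos habs]
      exact hEqOn (by rw [mem_ball_zero_iff]; exact habs)
    · simp only [if_neg habs]
      have hzr : Complex.abs z = r := by
        rw [mem_closedBall_zero_iff, Complex.norm_eq_abs] at hz
        exact le_antisymm hz (not_lt.mp (by rw [Complex.norm_eq_abs] at habs; exact habs))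
      have hw1 : Complex.abs (z / (r:ℂ)) = 1 := by
        rw [map_div₀, Complex.abs_ofReal, _root_.abs_of_pos hr, hzr, div_self hr.ne']
      have harg : Complex.arg (z / (r:ℂ)) = Complex.arg z := by
        have hrw : z / (r:ℂ) = ((r⁻¹ : ℝ) : ℂ) * z := by
          rw [Complex.ofReal_inv]
          field_simp
        rw [hrw, Complex.arg_real_mul z (inv_pos.mpr hr)]
      calc ψ (Complex.arg z / (2 * Real.pi)) = G (eC (Complex.arg z / (2 * Real.pi))) := hGψ _
        _ = G (z / (r:ℂ)) := by rw [← harg, eC_of_unit hw1]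
        _ = φ₀ z := rfl
  constructor
  · -- boundary values when r < confRadius θ
    intro hlt t
    have hz₀eq : circlePt r t = (r:ℂ) * eC t := circlePt_eq r t
    set z₀ : ℂ := circlePt r t with hz₀def
    have habs₀ : Complex.abs z₀ = r := by
      rw [hz₀eq, map_mul, Complex.abs_ofReal, _root_.abs_of_pos hr, abs_eC, mul_one]
    have hz₀cb : z₀ ∈ closedBall (0:ℂ) r := by
      rw [mem_closedBall_zero_iff, Complex.norm_eq_abs, habs₀]
    have hz₀cl : z₀ ∈ closure (ball (0:ℂ) r) := by
      rw [closure_ball _ hr.ne']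
      exact hz₀cb
    haveI hNB : (𝓝[ball (0:ℂ) r] z₀).NeBot := mem_closure_iff_nhdsWithin_neBot.mp hz₀cl
    have hφθat : ContinuousAt φθ z₀ := by
      have hmem : z₀ ∈ ball (0:ℂ) (confRadius θ) := by
        rw [mem_ball_zero_iff, Complex.norm_eq_abs, habs₀]
        exact hlt
      exact (hφθ.1.differentiableAt (isOpen_ball.mem_nhds hmem)).continuousAt
    have h1 : Tendsto φθ (𝓝[ball (0:ℂ) r] z₀) (𝓝 (φθ z₀)) :=
      hφθat.tendsto.mono_left nhdsWithin_le_nhds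
    have h2 : Tendsto φ₀ (𝓝[ball (0:ℂ) r] z₀) (𝓝 (φ₀ z₀)) :=
      (hHcont z₀ hz₀cb).mono ball_subset_closedBall
    have h3 : Tendsto φθ (𝓝[ball (0:ℂ) r] z₀) (𝓝 (φ₀ z₀)) := by
      refine h2.congr' ?_
      exact Filter.eventuallyEq_of_mem self_mem_nhdsWithin (fun z hz => (hEqOn hz).symm)
    have h4 : φθ z₀ = φ₀ z₀ := tendsto_nhds_unique h1 h3
    have h5 : φ₀ z₀ = G (eC t) := by
      show G (z₀ / (r:ℂ)) = G (eC t)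
      rw [hz₀eq, mul_div_cancel_left₀ _ hrC]
    rw [h4, h5, ← hGψ]
  · -- boundary of the Siegel disk
    intro hcreq
    rw [hcreq]
    have himg : φθ '' ball (0:ℂ) r = G '' ball (0:ℂ) 1 := by
      rw [hEqOn.image_eq]
      ext x
      constructor
      · rintro ⟨z, hz, rfl⟩
        exact ⟨z / (r:ℂ), hdiv_mem z hz, rfl⟩
      · rintro ⟨v, hv, rfl⟩
        refine ⟨(r:ℂ) * v, ?_, ?_⟩
        · rw [mem_ball_zero_iff] at hv ⊢
          rw [norm_mul, Complex.norm_real, Real.norm_eq_abs, _root_.abs_of_pos hr]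
          calc r * ‖v‖ < r * 1 := by exact mul_lt_mul_of_pos_left hv hr
            _ = r := mul_one r
        · show G (((r:ℂ) * v) / (r:ℂ)) = G v
          rw [mul_div_cancel_left₀ _ hrC]
    have hopen : IsOpen (G '' ball (0:ℂ) 1) := by
      rcases (hGdiff.analyticOnNhd isOpen_ball).is_constant_or_isOpen
          (convex_ball _ _).isPreconnected with ⟨w, hwc⟩ | hmap
      · exfalso
        have hev : G =ᶠ[𝓝 (0:ℂ)] (fun _ => w) :=
          Filter.eventuallyEq_of_mem (isOpen_ball.mem_nhds h0b) (fun z hz => hwc z hz)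
        have hzero : deriv G 0 = 0 := by
          rw [hev.deriv_eq]
          exact deriv_const _ _
        exact hrC (by rw [← hGd0, hzero])
      · exact hmap _ (subset_refl _) isOpen_ball
    have hcompactG : IsCompact (G '' closedBall (0:ℂ) 1) :=
      (isCompact_closedBall _ _).image_of_continuousOn hGcont
    have hcl : closure (G '' ball (0:ℂ) 1) = G '' closedBall (0:ℂ) 1 := by
      apply Subset.antisymm
      · exact closure_minimal (image_mono hballsub) hcompactG.isClosed
      · have h1 := ContinuousOn.image_closure (f := G) (s := ball (0:ℂ) 1)
          (by rw [closure_ball _ one_ne_zero]; exact hGcont)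
        rwa [closure_ball _ one_ne_zero] at h1
    have hfront : frontier (G '' ball (0:ℂ) 1) = G '' sphere (0:ℂ) 1 := by
      rw [← closure_diff_interior, hcl, hopen.interior_eq]
      ext x
      constructor
      · rintro ⟨hx1, hx2⟩
        obtain ⟨w, hw, rfl⟩ := hx1
        have hw1 : Complex.abs w = 1 := by
          rw [mem_closedBall_zero_iff, Complex.norm_eq_abs] at hw
          rcases lt_or_eq_of_le hw with hlt | heq
          · exact absurd (mem_image_of_mem G
              (by rw [mem_ball_zero_iff, Complex.norm_eq_abs]; exact hlt)) hx2
          · exact heq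
        exact mem_image_of_mem G (by rw [mem_sphere_zero_iff_norm, Complex.norm_eq_abs]; exact hw1)
      · rintro ⟨w, hw, rfl⟩
        have hw1 : Complex.abs w = 1 := by
          rw [mem_sphere_zero_iff_norm, Complex.norm_eq_abs] at hw
          exact hw
        have hwcb : w ∈ closedBall (0:ℂ) 1 := by
          rw [mem_closedBall_zero_iff, Complex.norm_eq_abs, hw1]
        refine ⟨mem_image_of_mem G hwcb, ?_⟩
        rintro ⟨v, hv, hveq⟩
        have hvw := hGinj (hballsub hv) hwcb hveq
        rw [hvw] at hv
        rw [mem_ball_zero_iff, Complex.norm_eq_abs, hw1] at hv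
        exact lt_irrefl _ hv
    have hrangeψ : G '' sphere (0:ℂ) 1 = range ψ := by
      ext x
      constructor
      · rintro ⟨w, hw, rfl⟩
        have hw1 : Complex.abs w = 1 := by
          rw [mem_sphere_zero_iff_norm, Complex.norm_eq_abs] at hw
          exact hw
        exact ⟨Complex.arg w / (2 * Real.pi), by rw [hGψ, eC_of_unit hw1]⟩
      · rintro ⟨t, rfl⟩
        refine ⟨eC t, ?_, (hGψ t).symm⟩
        rw [mem_sphere_zero_iff_norm, Complex.norm_eq_abs, abs_eC]
    rw [himg, hfront, hrangeψ]
end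

section
/- Let L_n be Jordan curves, let U_n be the bounded connected component of ℂ ∖ L_n, assume 0 ∈ U_n, and let f_n : 𝔻 → U_n be the conformal bijection with f_n(0) = 0 and f_n'(0) real and positive. Assume each f_n extends to a continuous map g_n on the closed unit disk, that the restrictions of the g_n to the unit circle all have a common modulus of continuity, and that U_n converges to 𝔻 in the Carathéodory sense. Then g_n converges uniformly on the closed unit disk to the identity. -/
open Complex Metric Set Filter Topology
open BoundedContinuousFunction

/-- `U` is the bounded connected component of the complement of `L`. -/
def IsBddComponent (L U : Set ℂ) : Prop :=
  Bornology.IsBounded U ∧ ∃ z ∈ U, U = connectedComponentIn Lᶜ z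

/-- Carathéodory convergence (with base point 0) of a sequence of open sets to the unit disk:
every compact subset of the disk is eventually contained in `U n`, and the distance of every
point of the unit circle to the complement of `U n` tends to `0`. -/
def CaraToDisk (U : ℕ → Set ℂ) : Prop :=
  (∀ C : Set ℂ, IsCompact C → C ⊆ ball (0 : ℂ) 1 → ∀ᶠ n in atTop, C ⊆ U n) ∧
    ∀ z ∈ sphere (0 : ℂ) 1, Tendsto (fun n => infDist z (U n)ᶜ) atTop (𝓝 0)

/-- `f` is the normalized Riemann map of `U`: a conformal bijection from the unit disk
onto `U` with `f(0) = 0` and `f'(0)` real and positive. -/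
def IsRiemannMap (f : ℂ → ℂ) (U : Set ℂ) : Prop :=
  DifferentiableOn ℂ f (ball (0 : ℂ) 1) ∧ InjOn f (ball (0 : ℂ) 1) ∧
    f '' ball (0 : ℂ) 1 = U ∧ f 0 = 0 ∧ (deriv f 0).im = 0 ∧ 0 < (deriv f 0).re

/-- A modulus of continuity: a nondecreasing positive function on `(0,∞)` tending to `0` at `0⁺`. -/
def IsModulus (h : ℝ → ℝ) : Prop :=
  (∀ η : ℝ, 0 < η → 0 < h η) ∧ MonotoneOn h (Ioi (0 : ℝ)) ∧
    Tendsto h (𝓝[>] (0 : ℝ)) (𝓝 0)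

set_option synthInstance.maxHeartbeats 1000000

section EquiAuxiliary

/-- Maximum modulus principle on a closed ball. -/
lemma maxmod {c : ℂ} {ρ : ℝ} (hρ : 0 < ρ) {u : ℂ → ℂ}
    (hd : DifferentiableOn ℂ u (ball c ρ)) (hc : ContinuousOn u (closedBall c ρ)) {C : ℝ}
    (hb : ∀ x ∈ sphere c ρ, ‖u x‖ ≤ C) {z : ℂ} (hz : z ∈ closedBall c ρ) : ‖u z‖ ≤ C := by
  have h1 : DiffContOnCl ℂ u (ball c ρ) := ⟨hd, by rwa [closure_ball c hρ.ne']⟩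
  refine Complex.norm_le_of_forall_mem_frontier_norm_le isBounded_ball h1 ?_ ?_
  · rwa [frontier_ball c hρ.ne']
  · rwa [closure_ball c hρ.ne']

/-- A segment from a point of an open set to a point outside it must cross the boundary. -/
lemma segment_crossing {U : Set ℂ} (hU : IsOpen U) {a w : ℂ} (ha : a ∈ U) (hw : w ∉ U) :
    ∃ p ∈ segment ℝ a w, p ∈ closure U \ U := by
  by_contra hcon
  push_neg at hcon
  have hsub : segment ℝ a w ⊆ U ∪ (closure U)ᶜ := by
    intro p hp
    by_cases hpc : p ∈ closure U
    · have := hcon p hp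
      simp only [mem_diff, hpc, true_and, not_not] at this
      exact Or.inl this
    · exact Or.inr hpc
  have hne1 : (segment ℝ a w ∩ U).Nonempty := ⟨a, left_mem_segment ℝ a w, ha⟩
  have hne2 : (segment ℝ a w ∩ (closure U)ᶜ).Nonempty := by
    refine ⟨w, right_mem_segment ℝ a w, fun hwc => ?_⟩
    have := hcon w (right_mem_segment ℝ a w)
    simp only [mem_diff, hwc, true_and, not_not] at this
    exact hw this
  obtain ⟨p, hp⟩ := (convex_segment a w).isPreconnected U (closure U)ᶜ hU
    isClosed_closure.isOpen_compl hsub hne1 hne2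
  exact hp.2.2 (subset_closure hp.2.1)

/-- A continuous extension of an injective holomorphic map on the disk sends the unit circle
outside the open image of the disk. -/
lemma boundary_not_interior {F Ge : ℂ → ℂ} (hFd : DifferentiableOn ℂ F (ball (0:ℂ) 1))
    (hFi : InjOn F (ball (0:ℂ) 1)) (hGc : ContinuousOn Ge (closedBall (0:ℂ) 1))
    (hEq : EqOn Ge F (ball (0:ℂ) 1)) {x : ℂ} (hx : x ∈ sphere (0:ℂ) 1) :
    Ge x ∉ F '' ball (0:ℂ) 1 := by
  rintro ⟨z₀, hz₀, hz⟩
  have hz₀n : ‖z₀‖ < 1 := by simpa [mem_ball, dist_zero_right] using hz₀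
  set τ : ℝ := (1 - ‖z₀‖) / 2 with hτdef
  have hτ : 0 < τ := by simp only [hτdef]; linarith
  have hτ1 : ‖z₀‖ + τ < 1 := by simp only [hτdef]; linarith
  have hballs : ball z₀ τ ⊆ ball (0:ℂ) 1 := by
    intro w hw
    rw [mem_ball, dist_zero_right]
    have h1 : ‖w - z₀‖ < τ := by rwa [mem_ball, dist_eq_norm] at hw
    calc ‖w‖ ≤ ‖w - z₀‖ + ‖z₀‖ := by
          simpa using norm_add_le (w - z₀) z₀
      _ < τ + ‖z₀‖ := by linarith
      _ < 1 := by linarith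
  have han : AnalyticOnNhd ℂ F (ball z₀ τ) := (hFd.mono hballs).analyticOnNhd isOpen_ball
  rcases han.is_constant_or_isOpen (convex_ball z₀ τ).isPreconnected with hconst | hopen
  · obtain ⟨wc, hwc⟩ := hconst
    have h1 : z₀ + ((τ/2 : ℝ) : ℂ) ∈ ball z₀ τ := by
      simp only [mem_ball, dist_eq_norm, add_sub_cancel_left]
      rw [Complex.norm_real, Real.norm_eq_abs, abs_of_pos (by linarith)]
      linarith
    have h2 : z₀ + ((τ/2 : ℝ) : ℂ) = z₀ := by
      refine hFi (hballs h1) hz₀ ?_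
      rw [hwc _ h1, hwc _ (mem_ball_self hτ)]
    have : ((τ/2 : ℝ) : ℂ) = 0 := by
      have := h2
      linear_combination this
    simp only [Complex.ofReal_eq_zero] at this
    linarith
  · have hO : IsOpen (F '' ball z₀ τ) := hopen _ (subset_refl _) isOpen_ball
    have hxcl : x ∈ closure (ball (0:ℂ) 1) := by
      rw [closure_ball (0:ℂ) one_ne_zero]
      exact sphere_subset_closedBall hx
    have hnb : (𝓝[ball (0:ℂ) 1] x).NeBot := mem_closure_iff_nhdsWithin_neBot.mp hxcl
    have htd : Tendsto F (𝓝[ball (0:ℂ) 1] x) (𝓝 (Ge x)) := by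
      have h1 : Tendsto Ge (𝓝[closedBall (0:ℂ) 1] x) (𝓝 (Ge x)) :=
        (hGc x (sphere_subset_closedBall hx)).tendsto
      have h2 : Tendsto Ge (𝓝[ball (0:ℂ) 1] x) (𝓝 (Ge x)) :=
        h1.mono_left (nhdsWithin_mono x ball_subset_closedBall)
      exact h2.congr' (eventuallyEq_nhdsWithin_of_eqOn hEq)
    have hOev : ∀ᶠ z in 𝓝[ball (0:ℂ) 1] x, F z ∈ F '' ball z₀ τ :=
      htd (hO.mem_nhds ⟨z₀, mem_ball_self hτ, hz⟩)
    have hnorm : ∀ᶠ z in 𝓝[ball (0:ℂ) 1] x, ‖z₀‖ + τ < ‖z‖ := by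
      have h3 : Tendsto (fun z : ℂ => ‖z‖) (𝓝[ball (0:ℂ) 1] x) (𝓝 ‖x‖) :=
        (continuous_norm.tendsto x).mono_left nhdsWithin_le_nhds
      have hx1 : ‖x‖ = 1 := by simpa [dist_zero_right] using hx
      exact h3.eventually (eventually_gt_nhds (by rw [hx1]; exact hτ1))
    obtain ⟨z, hzO, hzn, hzb⟩ := (hOev.and (hnorm.and eventually_mem_nhdsWithin)).exists
    obtain ⟨w, hwb, hwz⟩ := hzO
    have hwz' : w = z := hFi (hballs hwb) hzb hwz
    have : ‖w‖ < ‖z₀‖ + τ := by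
      have h1 : ‖w - z₀‖ < τ := by rwa [mem_ball, dist_eq_norm] at hwb
      calc ‖w‖ ≤ ‖w - z₀‖ + ‖z₀‖ := by simpa using norm_add_le (w - z₀) z₀
        _ < τ + ‖z₀‖ := by linarith
        _ = ‖z₀‖ + τ := by ring
    rw [hwz'] at this
    linarith

section BNI
variable {F Ge : ℂ → ℂ}

/-- The boundary extension sends the circle into `closure U \ U`. -/
lemma riemann_bdry (hFd : DifferentiableOn ℂ F (ball (0:ℂ) 1))
    (hFi : InjOn F (ball (0:ℂ) 1)) (hGc : ContinuousOn Ge (closedBall (0:ℂ) 1))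
    (hEq : EqOn Ge F (ball (0:ℂ) 1)) {x : ℂ} (hx : x ∈ sphere (0:ℂ) 1) :
    Ge x ∈ closure (F '' ball (0:ℂ) 1) \ (F '' ball (0:ℂ) 1) := by
  constructor
  · have hxcl : x ∈ closure (ball (0:ℂ) 1) := by
      rw [closure_ball (0:ℂ) one_ne_zero]; exact sphere_subset_closedBall hx
    have hnb : (𝓝[ball (0:ℂ) 1] x).NeBot := mem_closure_iff_nhdsWithin_neBot.mp hxcl
    have htd : Tendsto Ge (𝓝[ball (0:ℂ) 1] x) (𝓝 (Ge x)) :=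
      ((hGc x (sphere_subset_closedBall hx)).tendsto).mono_left
        (nhdsWithin_mono x ball_subset_closedBall)
    refine mem_closure_of_tendsto htd ?_
    exact eventually_mem_nhdsWithin.mono fun z hz => ⟨z, hz, (hEq hz).symm⟩
  · exact boundary_not_interior hFd hFi hGc hEq hx

/-- The set `closure U \ U` is contained in the image of the circle. -/
lemma closure_diff_subset (hGc : ContinuousOn Ge (closedBall (0:ℂ) 1))
    (hEq : EqOn Ge F (ball (0:ℂ) 1)) :
    closure (F '' ball (0:ℂ) 1) \ (F '' ball (0:ℂ) 1) ⊆ Ge '' sphere (0:ℂ) 1 := by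
  have himg : Ge '' ball (0:ℂ) 1 = F '' ball (0:ℂ) 1 := image_congr hEq
  have hcomp : IsCompact (Ge '' closedBall (0:ℂ) 1) :=
    (isCompact_closedBall _ _).image_of_continuousOn hGc
  have hsub : closure (F '' ball (0:ℂ) 1) ⊆ Ge '' closedBall (0:ℂ) 1 := by
    refine closure_minimal ?_ hcomp.isClosed
    rw [← himg]; exact image_mono ball_subset_closedBall
  rintro p ⟨hp1, hp2⟩
  obtain ⟨w, hw, rfl⟩ := hsub hp1
  rcases lt_or_eq_of_le (mem_closedBall.mp hw) with hlt | heq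
  · exact absurd (himg ▸ mem_image_of_mem Ge (mem_ball.mpr hlt)) hp2
  · exact mem_image_of_mem Ge (mem_sphere.mpr heq)

/-- Continuity of the difference quotient up to the boundary. -/
lemma dslope_cont {u : ℂ → ℂ} (hud : DifferentiableOn ℂ u (ball (0:ℂ) 1))
    (huc : ContinuousOn u (closedBall (0:ℂ) 1)) (hu0 : u 0 = 0) :
    ContinuousOn (dslope u 0) (closedBall (0:ℂ) 1) ∧
      ∀ z : ℂ, z ≠ 0 → dslope u 0 z = u z / z := by
  have hne : ∀ z : ℂ, z ≠ 0 → dslope u 0 z = u z / z := fun z hz => by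
    rw [dslope_of_ne _ hz, slope_def_field, hu0, sub_zero, sub_zero]
  refine ⟨fun z hz => ?_, hne⟩
  rcases eq_or_ne z 0 with rfl | hz0
  · have := (differentiableOn_dslope (ball_mem_nhds (0:ℂ) one_pos)).mpr hud
    exact ((this 0 (mem_ball_self one_pos)).differentiableAt
      (isOpen_ball.mem_nhds (mem_ball_self one_pos))).continuousAt.continuousWithinAt
  · have h1 : ContinuousWithinAt (fun w => u w / w) (closedBall (0:ℂ) 1) z :=
      (huc z hz).div continuousWithinAt_id hz0
    refine h1.congr_of_eventuallyEq ?_ (hne z hz0)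
    have hev : ∀ᶠ w in 𝓝[closedBall (0:ℂ) 1] z, w ≠ 0 :=
      eventually_nhdsWithin_of_eventually_nhds (eventually_ne_nhds hz0)
    exact hev.mono fun w hw => hne w hw
end BNI

/-- Key quantitative lower bounds: if the closed `r`-ball is contained in the image domain,
then the boundary extension has norm at least `r` on the circle, and `‖f'(0)‖ ≥ r`. -/
lemma dslope_facts {fn gn : ℂ → ℂ} {Un : Set ℂ} (hfn : IsRiemannMap fn Un)
    (hgc : ContinuousOn gn (closedBall (0:ℂ) 1)) (hgf : EqOn gn fn (ball (0:ℂ) 1))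
    {r : ℝ} (hr0 : 0 < r) (hsub : closedBall (0:ℂ) r ⊆ Un) :
    (∀ x ∈ sphere (0:ℂ) 1, r ≤ ‖gn x‖) ∧ r ≤ ‖deriv fn 0‖ := by
  obtain ⟨hfd, hfi, hfim, hf0, hfIm, hfRe⟩ := hfn
  have hg0 : gn 0 = 0 := by rw [hgf (mem_ball_self one_pos), hf0]
  have hgd : DifferentiableOn ℂ gn (ball (0:ℂ) 1) := hfd.congr hgf
  have hsph : ∀ x ∈ sphere (0:ℂ) 1, r ≤ ‖gn x‖ := by
    intro x hx
    have h1 : gn x ∉ Un := (hfim ▸ riemann_bdry hfd hfi hgc hgf hx).2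
    by_contra hlt
    push_neg at hlt
    exact h1 (hsub (by rw [mem_closedBall, dist_zero_right]; exact hlt.le))
  refine ⟨hsph, ?_⟩
  set ψ := dslope gn 0 with hψdef
  obtain ⟨hψc, hψne'⟩ := dslope_cont hgd hgc hg0
  have hψd : DifferentiableOn ℂ ψ (ball (0:ℂ) 1) :=
    (differentiableOn_dslope (ball_mem_nhds (0:ℂ) one_pos)).mpr hgd
  have hd0 : deriv gn 0 = deriv fn 0 :=
    Filter.EventuallyEq.deriv_eq
      (eventuallyEq_of_mem (isOpen_ball.mem_nhds (mem_ball_self one_pos)) hgf)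
  have hψ0 : ψ 0 = deriv fn 0 := by rw [hψdef, dslope_same]; exact hd0
  have hψsph : ∀ x ∈ sphere (0:ℂ) 1, r ≤ ‖ψ x‖ := by
    intro x hx
    have hx1 : ‖x‖ = 1 := by simpa [dist_zero_right] using hx
    have hx0 : x ≠ 0 := by intro hc; rw [hc] at hx1; simp at hx1
    rw [hψdef, hψne' x hx0, norm_div, hx1, div_one]
    exact hsph x hx
  have hψne : ∀ z ∈ closedBall (0:ℂ) 1, ψ z ≠ 0 := by
    intro z hz
    rcases eq_or_ne z 0 with rfl | hz0
    · rw [hψ0]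
      intro hc
      rw [hc] at hfRe
      simp at hfRe
    · rw [hψdef, hψne' z hz0]
      rcases lt_or_eq_of_le (mem_closedBall.mp hz) with hlt | heq
      · have hzb : z ∈ ball (0:ℂ) 1 := mem_ball.mpr hlt
        have : gn z ≠ 0 := by
          rw [hgf hzb]
          intro hc
          exact hz0 (hfi hzb (mem_ball_self one_pos) (by rw [hc, hf0]))
        exact div_ne_zero this hz0
      · have : r ≤ ‖gn z‖ := hsph z (mem_sphere.mpr heq)
        exact div_ne_zero (by intro hc; rw [hc] at this; simp at this; linarith) hz0
  have hinv : ∀ z ∈ closedBall (0:ℂ) 1, ‖(ψ z)⁻¹‖ ≤ r⁻¹ := by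
    intro z hz
    refine maxmod one_pos (hψd.inv fun w hw => hψne w (ball_subset_closedBall hw))
      (hψc.inv₀ hψne) ?_ hz
    intro x hxs
    rw [Pi.inv_apply, norm_inv]
    exact inv_anti₀ hr0 (hψsph x hxs)
  have h9 := hinv 0 (mem_closedBall_self one_pos.le)
  rw [norm_inv, hψ0] at h9
  have hpos : 0 < ‖deriv fn 0‖ := by
    refine norm_pos_iff.mpr ?_
    intro hc; rw [hc] at hfRe; simp at hfRe
  have h10 := inv_anti₀ (by positivity : (0:ℝ) < ‖deriv fn 0‖⁻¹) h9
  simpa using h10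

/-- Uniformization of the second Carathéodory condition over the circle. -/
lemma cara_unif {U : ℕ → Set ℂ} (hcara : CaraToDisk U)
    (hUb : ∀ n, Bornology.IsBounded (U n)) {δ : ℝ} (hδ : 0 < δ) :
    ∀ᶠ n in atTop, ∀ z ∈ sphere (0:ℂ) 1, ∃ w, w ∉ U n ∧ dist w z < δ := by
  obtain ⟨T, hTsub, hTfin, hTcov⟩ :=
    (isCompact_sphere (0:ℂ) 1).elim_finite_subcover_image
      (ι := ℂ) (b := sphere (0:ℂ) 1) (c := fun t => ball t (δ/2))
      (fun t _ => isOpen_ball)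
      (fun z hz => mem_iUnion₂.mpr ⟨z, hz, mem_ball_self (by positivity)⟩)
  have hev : ∀ᶠ n in atTop, ∀ t ∈ T, infDist t (U n)ᶜ < δ/2 := by
    rw [eventually_all_finite hTfin]
    intro t ht
    exact (hcara.2 t (hTsub ht)).eventually (gt_mem_nhds (by positivity))
  filter_upwards [hev] with n hn z hz
  obtain ⟨t, ht, hzt⟩ := mem_iUnion₂.mp (hTcov hz)
  have hne : ((U n)ᶜ).Nonempty := by
    obtain ⟨R, hR⟩ := (hUb n).subset_closedBall (0:ℂ)
    refine ⟨((|R| + 1 : ℝ) : ℂ), fun hc => ?_⟩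
    have := hR hc
    rw [mem_closedBall, dist_zero_right, Complex.norm_real, Real.norm_eq_abs] at this
    have h2 : (0:ℝ) ≤ |R| + 1 := by positivity
    rw [_root_.abs_of_nonneg h2] at this
    have := abs_nonneg R
    linarith [le_abs_self R]
  obtain ⟨w, hw, hdw⟩ := (infDist_lt_iff hne).mp (hn t ht)
  refine ⟨w, hw, ?_⟩
  have h3 : dist z t < δ/2 := mem_ball.mp hzt
  calc dist w z ≤ dist w t + dist t z := dist_triangle w t z
    _ < δ/2 + δ/2 := by rw [dist_comm t z]; exact add_lt_add (by rwa [dist_comm]) h3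
    _ = δ := by ring

/-- The heart: a uniform limit of the boundary extensions is the identity. -/
lemma limit_is_id (U : ℕ → Set ℂ)
    (hUopen : ∀ n, IsOpen (U n)) (hUb : ∀ n, Bornology.IsBounded (U n))
    (h0 : ∀ n, (0 : ℂ) ∈ U n)
    (f g : ℕ → ℂ → ℂ) (hf : ∀ n, IsRiemannMap (f n) (U n))
    (hgc : ∀ n, ContinuousOn (g n) (closedBall (0 : ℂ) 1))
    (hgf : ∀ n, EqOn (g n) (f n) (ball (0 : ℂ) 1))
    (hcara : CaraToDisk U)
    (ms : ℕ → ℕ) (hms : Tendsto ms atTop atTop)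
    (G : ℂ → ℂ)
    (hconv : TendstoUniformlyOn (fun k => g (ms k)) G atTop (closedBall (0:ℂ) 1)) :
    EqOn G id (closedBall (0:ℂ) 1) := by
  have hgd : ∀ n, DifferentiableOn ℂ (g n) (ball (0:ℂ) 1) := fun n => (hf n).1.congr (hgf n)
  have hg0 : ∀ n, g n 0 = 0 := fun n => by
    rw [hgf n (mem_ball_self one_pos), (hf n).2.2.2.1]
  have hfr : ∀ n, closure (U n) \ U n ⊆ g n '' sphere (0:ℂ) 1 := fun n => by
    rw [← (hf n).2.2.1]; exact closure_diff_subset (hgc n) (hgf n)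
  -- continuity and differentiability of G
  have hGc : ContinuousOn G (closedBall (0:ℂ) 1) :=
    hconv.continuousOn (Eventually.of_forall fun k => hgc (ms k)).frequently
  have hlocconv : TendstoLocallyUniformlyOn (fun k => g (ms k)) G atTop (ball (0:ℂ) 1) :=
    (hconv.tendstoLocallyUniformlyOn).mono ball_subset_closedBall
  have hGd : DifferentiableOn ℂ G (ball (0:ℂ) 1) :=
    hlocconv.differentiableOn (Eventually.of_forall fun k => hgd (ms k)) isOpen_ball
  have hG0 : G 0 = 0 := by
    have h1 := hconv.tendsto_at (mem_closedBall_self one_pos.le)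
    simp only [hg0] at h1
    exact tendsto_nhds_unique h1 tendsto_const_nhds
  -- derivative at 0
  have hdconv : Tendsto (fun k => deriv (g (ms k)) 0) atTop (𝓝 (deriv G 0)) := by
    have := (hlocconv.deriv (Eventually.of_forall fun k => hgd (ms k)) isOpen_ball).tendsto_at
      (mem_ball_self one_pos)
    exact this
  have hdeq : ∀ n, deriv (g n) 0 = deriv (f n) 0 := fun n =>
    Filter.EventuallyEq.deriv_eq
      (eventuallyEq_of_mem (isOpen_ball.mem_nhds (mem_ball_self one_pos)) (hgf n))
  have hdIm : (deriv G 0).im = 0 := by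
    have h2 : Tendsto (fun k => (deriv (g (ms k)) 0).im) atTop (𝓝 ((deriv G 0).im)) :=
      (Complex.continuous_im.tendsto _).comp hdconv
    have h3 : (fun k => (deriv (g (ms k)) 0).im) = fun _ => (0:ℝ) :=
      funext fun k => by rw [hdeq]; exact (hf _).2.2.2.2.1
    rw [h3] at h2
    exact (tendsto_nhds_unique h2 tendsto_const_nhds)
  have hdRe0 : 0 ≤ (deriv G 0).re := by
    have h2 : Tendsto (fun k => (deriv (g (ms k)) 0).re) atTop (𝓝 ((deriv G 0).re)) :=
      (Complex.continuous_re.tendsto _).comp hdconv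
    refine ge_of_tendsto h2 (Eventually.of_forall fun k => ?_)
    rw [hdeq]
    exact ((hf _).2.2.2.2.2).le
  -- lower bounds from Carathéodory (1)
  have hlower : ∀ r : ℝ, 0 < r → r < 1 →
      (∀ x ∈ sphere (0:ℂ) 1, r ≤ ‖G x‖) ∧ r ≤ ‖deriv G 0‖ := by
    intro r hr0 hr1
    have hev : ∀ᶠ n in atTop, closedBall (0:ℂ) r ⊆ U n :=
      hcara.1 _ (isCompact_closedBall _ _) (closedBall_subset_ball hr1)
    have hev2 := hms.eventually hev
    constructor
    · intro x hx
      have h1 : ∀ᶠ k in atTop, r ≤ ‖g (ms k) x‖ :=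
        hev2.mono fun k hk => (dslope_facts (hf _) (hgc _) (hgf _) hr0 hk).1 x hx
      have h2 : Tendsto (fun k => ‖g (ms k) x‖) atTop (𝓝 ‖G x‖) :=
        ((hconv.tendsto_at (sphere_subset_closedBall hx)).norm)
      exact ge_of_tendsto h2 h1
    · have h1 : ∀ᶠ k in atTop, r ≤ ‖deriv (g (ms k)) 0‖ := hev2.mono fun k hk => by
        rw [hdeq]
        exact (dslope_facts (hf _) (hgc _) (hgf _) hr0 hk).2
      exact ge_of_tendsto hdconv.norm h1
  have hdRe : 1 ≤ (deriv G 0).re := by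
    have habs : ‖deriv G 0‖ = (deriv G 0).re := by
      have h4 : deriv G 0 = (((deriv G 0).re : ℝ) : ℂ) := Complex.ext rfl (by simp [hdIm])
      rw [h4, Complex.norm_real, Real.norm_eq_abs, _root_.abs_of_nonneg (by simpa using hdRe0)]
      simp
    by_contra hcon
    push_neg at hcon
    rcases le_or_gt (deriv G 0).re 0 with hle | hgt
    · have := (hlower (1/2) (by norm_num) (by norm_num)).2
      rw [habs] at this; linarith
    · set r : ℝ := ((deriv G 0).re + 1) / 2 with hrdef
      have h5 := (hlower r (by positivity) (by simp only [hrdef]; linarith)).2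
      rw [habs] at h5
      simp only [hrdef] at h5
      linarith
  -- the unit circle is contained in the image of the circle under G
  have hsphsub : sphere (0:ℂ) 1 ⊆ G '' sphere (0:ℂ) 1 := by
    intro q hq
    have hsel : ∀ j : ℕ, ∃ x ∈ sphere (0:ℂ) 1, dist (G x) q ≤ 3 / (j+1) := by
      intro j
      set δ : ℝ := 1 / (j+1) with hδdef
      have hδ0 : 0 < δ := by positivity
      have hδ1 : δ ≤ 1 := by
        rw [hδdef]
        rw [div_le_one (by positivity)]
        simp
      have hev1 : ∀ᶠ n in atTop, closedBall (0:ℂ) (1 - δ) ⊆ U n := by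
        refine hcara.1 _ (isCompact_closedBall _ _) ?_
        refine closedBall_subset_ball ?_
        linarith
      have hev2 := cara_unif hcara hUb hδ0
      have hev3 := (Metric.tendstoUniformlyOn_iff.mp hconv δ hδ0)
      obtain ⟨k, hk1, hk2, hk3⟩ :=
        ((hms.eventually hev1).and ((hms.eventually hev2).and hev3)).exists
      obtain ⟨w, hw, hdw⟩ := hk2 q hq
      have hq1 : ‖q‖ = 1 := by simpa [dist_zero_right] using hq
      have haU : ((1 - δ : ℝ) : ℂ) * q ∈ U (ms k) := by
        refine hk1 ?_
        rw [mem_closedBall, dist_zero_right, norm_mul, Complex.norm_real, Real.norm_eq_abs,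
          hq1, mul_one, _root_.abs_of_nonneg (by linarith)]
      obtain ⟨p, hpseg, hpmem⟩ := segment_crossing (hUopen _) haU hw
      obtain ⟨x, hxs, hxp⟩ := hfr _ hpmem
      refine ⟨x, hxs, ?_⟩
      have h5 : segment ℝ (((1-δ:ℝ):ℂ)*q) w ⊆ closedBall q δ := by
        refine (convex_closedBall q δ).segment_subset ?_ ?_
        · rw [mem_closedBall, dist_eq_norm]
          have : ((1-δ:ℝ):ℂ)*q - q = ((-δ:ℝ):ℂ)*q := by
            push_cast
            ring
          rw [this, norm_mul, Complex.norm_real, Real.norm_eq_abs, hq1, mul_one, abs_neg,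
            _root_.abs_of_nonneg hδ0.le]
        · exact mem_closedBall.mpr hdw.le
      have hdpq : dist p q ≤ δ := h5 hpseg
      have h6 : dist (G x) (g (ms k) x) < δ := hk3 x (sphere_subset_closedBall hxs)
      calc dist (G x) q ≤ dist (G x) (g (ms k) x) + dist (g (ms k) x) q := dist_triangle _ _ _
        _ ≤ δ + δ := by
            rw [hxp] at h6
            rw [hxp]
            exact add_le_add h6.le hdpq
        _ ≤ 3 / (j+1) := by
            rw [hδdef]
            rw [← add_div, div_le_div_iff₀ (by positivity) (by positivity)]
            ring_nf
            nlinarith [Nat.cast_nonneg (α := ℝ) j]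
    choose xs hxs hxd using hsel
    obtain ⟨x, hxmem, σ, hσmono, hσconv⟩ := (isCompact_sphere (0:ℂ) 1).tendsto_subseq hxs
    refine ⟨x, hxmem, ?_⟩
    have h6 : Tendsto (fun j => G (xs (σ j))) atTop (𝓝 (G x)) := by
      refine ((hGc x (sphere_subset_closedBall hxmem)).tendsto).comp ?_
      rw [tendsto_nhdsWithin_iff]
      exact ⟨hσconv, Eventually.of_forall fun j => sphere_subset_closedBall (hxs _)⟩
    have h7 : Tendsto (fun j => G (xs (σ j))) atTop (𝓝 q) := by
      rw [tendsto_iff_dist_tendsto_zero]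
      have h8 : ∀ j : ℕ, dist (G (xs (σ j))) q ≤ 3 / ((j:ℝ)+1) := by
        intro j
        refine (hxd (σ j)).trans ?_
        refine div_le_div_of_nonneg_left (by norm_num) (by positivity) ?_
        have h9 : (j:ℝ) ≤ (σ j : ℝ) := Nat.cast_le.mpr hσmono.le_apply
        linarith
      refine squeeze_zero (fun j => dist_nonneg) h8 ?_
      have h9 : Tendsto (fun j : ℕ => ((j:ℝ)+1)) atTop atTop :=
        tendsto_atTop_add_const_right _ 1 tendsto_natCast_atTop_atTop
      exact tendsto_const_nhds.div_atTop h9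
    exact tendsto_nhds_unique h6 h7
  -- injectivity of G on the open disk (Hurwitz-type argument)
  have hGan : AnalyticOnNhd ℂ G (ball (0:ℂ) 1) := hGd.analyticOnNhd isOpen_ball
  have hGinj : InjOn G (ball (0:ℂ) 1) := by
    intro a ha b hb hab
    by_contra hne
    have hana : AnalyticAt ℂ (fun z => G z - G b) a := (hGan a ha).sub analyticAt_const
    rcases hana.eventually_eq_zero_or_eventually_ne_zero with hcase | hcase
    · -- G would be constant, contradicting deriv G 0 ≥ 1
      have hconst : EqOn (fun z => G z - G b) 0 (ball (0:ℂ) 1) :=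
        (hGan.sub analyticOnNhd_const).eqOn_zero_of_preconnected_of_eventuallyEq_zero
          (convex_ball (0:ℂ) 1).isPreconnected ha hcase
      have hder : deriv G 0 = 0 := by
        have hev : ∀ᶠ z in 𝓝 (0:ℂ), G z = G b := by
          refine eventually_of_mem (isOpen_ball.mem_nhds (mem_ball_self one_pos)) fun z hz => ?_
          have := hconst hz
          simpa [sub_eq_zero] using this
        rw [Filter.EventuallyEq.deriv_eq hev]
        exact deriv_const _ _
      rw [hder] at hdRe
      norm_num at hdRe
    · -- isolated zeros: find a small circle on which G - G b is bounded below
      have hab' : 0 < dist a b := dist_pos.mpr hne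
      have han : ‖a‖ < 1 := by simpa [mem_ball, dist_zero_right] using ha
      have hbb : b ∈ ball (0:ℂ) 1 := hb
      have hcase' : ∀ᶠ z in 𝓝 a, z ∈ ({a}ᶜ : Set ℂ) → G z - G b ≠ 0 :=
        eventually_nhdsWithin_iff.mp hcase
      obtain ⟨ρ₀, hρ₀pos, hρ₀⟩ := Metric.eventually_nhds_iff.mp hcase'
      set ρ : ℝ := min (min (ρ₀/2) (dist a b / 2)) ((1 - ‖a‖)/2) with hρdef
      have hρ0 : 0 < ρ := by
        refine lt_min (lt_min (by positivity) (by positivity)) (by linarith)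
      have hρa : ρ < ρ₀ := lt_of_le_of_lt ((min_le_left _ _).trans (min_le_left _ _)) (by linarith)
      have hρb : ρ < dist a b := lt_of_le_of_lt ((min_le_left _ _).trans (min_le_right _ _)) (by linarith)
      have hρ1 : closedBall a ρ ⊆ ball (0:ℂ) 1 := by
        intro w hw
        rw [mem_ball, dist_zero_right]
        have h1 : ‖w - a‖ ≤ ρ := by rwa [mem_closedBall, dist_eq_norm] at hw
        have h2 : ρ ≤ (1 - ‖a‖)/2 := min_le_right _ _
        calc ‖w‖ ≤ ‖w - a‖ + ‖a‖ := by simpa using norm_add_le (w - a) a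
          _ ≤ (1 - ‖a‖)/2 + ‖a‖ := by linarith
          _ < 1 := by linarith
      -- minimum on the circle
      have hGcball : ContinuousOn (fun z => G z - G b) (sphere a ρ) := by
        refine (hGc.mono ?_).sub continuousOn_const
        exact (sphere_subset_closedBall).trans (hρ1.trans ball_subset_closedBall)
      obtain ⟨xm, hxm, hxmin⟩ := (isCompact_sphere a ρ).exists_isMinOn
        (NormedSpace.sphere_nonempty.mpr hρ0.le) hGcball.norm
      set m : ℝ := ‖G xm - G b‖ with hmdef
      have hm0 : 0 < m := by
        refine norm_pos_iff.mpr ?_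
        have h1 : dist xm a = ρ := by rwa [mem_sphere] at hxm
        refine hρ₀ (by rw [h1]; exact hρa) ?_
        simp only [Set.mem_compl_iff, Set.mem_singleton_iff]
        intro hc
        rw [hc] at h1
        simp only [dist_self] at h1
        exact absurd h1.symm (ne_of_gt hρ0)
      -- choose an index with small uniform distance
      obtain ⟨k, hk⟩ := (Metric.tendstoUniformlyOn_iff.mp hconv (m/4) (by positivity)).exists
      by_cases hzero : ∃ z ∈ closedBall a ρ, f (ms k) z = f (ms k) b
      · obtain ⟨z, hzmem, hzeq⟩ := hzero
        have hzb : z = b := (hf (ms k)).2.1 (hρ1 hzmem) hbb hzeq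
        rw [hzb] at hzmem
        rw [mem_closedBall, dist_comm] at hzmem
        linarith
      · push_neg at hzero
        -- the reciprocal trick: f (ms k) - f (ms k) b is nonvanishing on the closed ball
        set hk2 := fun (z : ℂ) => f (ms k) z - f (ms k) b with hk2def
        have hfdk : DifferentiableOn ℂ (f (ms k)) (ball (0:ℂ) 1) := (hf (ms k)).1
        have hdiffk : DifferentiableOn ℂ hk2 (ball a ρ) :=
          (hfdk.mono ((ball_subset_closedBall).trans hρ1)).sub (differentiableOn_const _)
        have hcontk : ContinuousOn hk2 (closedBall a ρ) :=
          ((hfdk.continuousOn).mono hρ1).sub continuousOn_const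
        have hnek : ∀ z ∈ closedBall a ρ, hk2 z ≠ 0 := fun z hz => sub_ne_zero.mpr (hzero z hz)
        -- lower bound on the circle
        have hlow : ∀ z ∈ sphere a ρ, m/2 ≤ ‖hk2 z‖ := by
          intro z hzs
          have hzcb : z ∈ closedBall (0:ℂ) 1 :=
            ( (hρ1 (sphere_subset_closedBall hzs)) ) |> ball_subset_closedBall
          have h8 : dist (G z) (g (ms k) z) < m/4 := hk z hzcb
          have h9 : dist (G b) (g (ms k) b) < m/4 := hk b (ball_subset_closedBall hbb)
          have h10 : g (ms k) z = f (ms k) z := hgf (ms k) (hρ1 (sphere_subset_closedBall hzs))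
          have h11 : g (ms k) b = f (ms k) b := hgf (ms k) hbb
          rw [h10, dist_eq_norm] at h8
          rw [h11, dist_eq_norm] at h9
          have hmin : m ≤ ‖G z - G b‖ := hxmin hzs
          have htri : ‖G z - G b‖ - ‖hk2 z‖ ≤ ‖(G z - G b) - hk2 z‖ := by
            exact (norm_sub_norm_le _ _)
          have heq2 : (G z - G b) - hk2 z = (G z - f (ms k) z) - (G b - f (ms k) b) := by
            rw [hk2def]
            ring
          rw [heq2] at htri
          have htri2 : ‖(G z - f (ms k) z) - (G b - f (ms k) b)‖ ≤
              ‖G z - f (ms k) z‖ + ‖G b - f (ms k) b‖ := norm_sub_le _ _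
          linarith
        -- maximum principle for the reciprocal
        have hmax := maxmod hρ0 (hdiffk.inv fun w hw => hnek w (ball_subset_closedBall hw))
          (hcontk.inv₀ hnek) (C := (m/2)⁻¹) (fun x hxs => by
            rw [Pi.inv_apply, norm_inv]
            exact inv_anti₀ (by positivity) (hlow x hxs))
          (mem_closedBall_self hρ0.le)
        rw [Pi.inv_apply, norm_inv] at hmax
        have hpos2 : 0 < ‖hk2 a‖ := norm_pos_iff.mpr (hnek a (mem_closedBall_self hρ0.le))
        have h12 : m/2 ≤ ‖hk2 a‖ := by
          have h13 := inv_anti₀ (by positivity : (0:ℝ) < ‖hk2 a‖⁻¹) hmax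
          simpa using h13
        -- but `hk2 a` is small
        have h8 : dist (G a) (g (ms k) a) < m/4 := hk a (ball_subset_closedBall ha)
        have h9 : dist (G b) (g (ms k) b) < m/4 := hk b (ball_subset_closedBall hbb)
        rw [hgf (ms k) ha, dist_eq_norm] at h8
        rw [hgf (ms k) hbb, dist_eq_norm] at h9
        have h14 : ‖hk2 a‖ ≤ ‖G a - f (ms k) a‖ + ‖G b - f (ms k) b‖ := by
          have heq3 : hk2 a = (G b - f (ms k) b) - (G a - f (ms k) a) := by
            rw [hk2def]
            linear_combination hab
          rw [heq3]
          calc ‖(G b - f (ms k) b) - (G a - f (ms k) a)‖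
              ≤ ‖G b - f (ms k) b‖ + ‖G a - f (ms k) a‖ := norm_sub_le _ _
            _ = ‖G a - f (ms k) a‖ + ‖G b - f (ms k) b‖ := by ring
        linarith
  -- the boundary image is disjoint from the interior image
  have hdisj : ∀ x ∈ sphere (0:ℂ) 1, G x ∉ G '' ball (0:ℂ) 1 :=
    fun x hx => boundary_not_interior hGd hGinj hGc (fun _ _ => rfl) hx
  -- the interior image is contained in the open unit disk
  have hVsub : G '' ball (0:ℂ) 1 ⊆ ball (0:ℂ) 1 := by
    have hVconn : IsPreconnected (G '' ball (0:ℂ) 1) :=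
      ((convex_ball (0:ℂ) 1).isPreconnected).image G (hGc.mono ball_subset_closedBall)
    have hVd : G '' ball (0:ℂ) 1 ⊆ ball (0:ℂ) 1 ∪ (closedBall (0:ℂ) 1)ᶜ := by
      rintro v ⟨z, hz, rfl⟩
      rcases lt_trichotomy ‖G z‖ 1 with hlt | heq | hgt
      · exact Or.inl (by rwa [mem_ball, dist_zero_right])
      · exfalso
        have hGz : G z ∈ sphere (0:ℂ) 1 := by rwa [mem_sphere, dist_zero_right]
        obtain ⟨x, hx, hxe⟩ := hsphsub hGz
        exact hdisj x hx (hxe ▸ ⟨z, hz, rfl⟩)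
      · refine Or.inr ?_
        rw [Set.mem_compl_iff, mem_closedBall, dist_zero_right]
        push_neg
        exact hgt
    refine hVconn.subset_left_of_subset_union isOpen_ball Metric.isClosed_closedBall.isOpen_compl
      (disjoint_compl_right.mono_left ball_subset_closedBall) hVd ?_
    exact ⟨0, ⟨0, mem_ball_self one_pos, hG0⟩, mem_ball_self one_pos⟩
  -- boundary values of G have norm at most 1
  have hsph_le : ∀ x ∈ sphere (0:ℂ) 1, ‖G x‖ ≤ 1 := by
    intro x hx
    have hxcl : x ∈ closure (ball (0:ℂ) 1) := by
      rw [closure_ball (0:ℂ) one_ne_zero]; exact sphere_subset_closedBall hx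
    have hnb : (𝓝[ball (0:ℂ) 1] x).NeBot := mem_closure_iff_nhdsWithin_neBot.mp hxcl
    have htd : Tendsto G (𝓝[ball (0:ℂ) 1] x) (𝓝 (G x)) :=
      ((hGc x (sphere_subset_closedBall hx)).tendsto).mono_left
        (nhdsWithin_mono x ball_subset_closedBall)
    refine le_of_tendsto htd.norm ?_
    refine eventually_mem_nhdsWithin.mono fun z hz => ?_
    have := hVsub ⟨z, hz, rfl⟩
    rw [mem_ball, dist_zero_right] at this
    exact this.le
  -- Schwarz-type endgame via the difference quotient
  set ψ := dslope G 0 with hψdef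
  obtain ⟨hψc, hψne'⟩ := dslope_cont hGd hGc hG0
  have hψd : DifferentiableOn ℂ ψ (ball (0:ℂ) 1) :=
    (differentiableOn_dslope (ball_mem_nhds (0:ℂ) one_pos)).mpr hGd
  have hψbd : ∀ z ∈ closedBall (0:ℂ) 1, ‖ψ z‖ ≤ 1 := by
    intro z hz
    refine maxmod one_pos hψd hψc ?_ hz
    intro x hxs
    have hx1 : ‖x‖ = 1 := by simpa [dist_zero_right] using hxs
    have hx0 : x ≠ 0 := by intro hc; rw [hc] at hx1; simp at hx1
    rw [hψdef, hψne' x hx0, norm_div, hx1, div_one]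
    exact hsph_le x hxs
  have hψ0 : ψ 0 = deriv G 0 := by rw [hψdef, dslope_same]
  have hψ0eq : ψ 0 = 1 := by
    have h1 : ‖ψ 0‖ ≤ 1 := hψbd 0 (mem_closedBall_self one_pos.le)
    rw [hψ0] at h1 ⊢
    have h2 : (deriv G 0).re ≤ ‖deriv G 0‖ := Complex.re_le_norm _
    have h3 : ‖deriv G 0‖ = 1 := le_antisymm h1 (le_trans hdRe h2)
    have h4 : (deriv G 0).re = 1 := le_antisymm (h2.trans h3.le) hdRe
    exact Complex.ext (by simp [h4]) (by simp [hdIm])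
  -- maximum attained at the interior point 0, hence ψ is constant
  have hψconst : EqOn ψ (Function.const ℂ (ψ 0)) (ball (0:ℂ) 1) := by
    refine Complex.eqOn_of_isPreconnected_of_isMaxOn_norm
      (convex_ball (0:ℂ) 1).isPreconnected isOpen_ball hψd (mem_ball_self one_pos) ?_
    intro z hz
    simp only [Function.comp_apply]
    rw [hψ0eq]
    simpa using hψbd z (ball_subset_closedBall hz)
  -- hence G = id on the ball, then on the closed ball
  have hball : EqOn G id (ball (0:ℂ) 1) := by
    intro z hz
    rcases eq_or_ne z 0 with rfl | hz0
    · simpa using hG0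
    · have h1 : ψ z = 1 := by rw [hψconst hz, Function.const_apply, hψ0eq]
      rw [hψdef, hψne' z hz0] at h1
      have h2 : G z = z := by
        field_simp at h1
        simpa using h1
      simpa using h2
  intro z hz
  rcases lt_or_eq_of_le (mem_closedBall.mp hz) with hlt | heq
  · exact hball (mem_ball.mpr hlt)
  · have hxcl : z ∈ closure (ball (0:ℂ) 1) := by
      rw [closure_ball (0:ℂ) one_ne_zero]; exact hz
    have hnb : (𝓝[ball (0:ℂ) 1] z).NeBot := mem_closure_iff_nhdsWithin_neBot.mp hxcl
    have htd : Tendsto G (𝓝[ball (0:ℂ) 1] z) (𝓝 (G z)) :=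
      ((hGc z hz).tendsto).mono_left (nhdsWithin_mono z ball_subset_closedBall)
    have htd2 : Tendsto (id : ℂ → ℂ) (𝓝[ball (0:ℂ) 1] z) (𝓝 (G z)) :=
      htd.congr' (eventuallyEq_nhdsWithin_of_eqOn hball)
    have htd3 : Tendsto (id : ℂ → ℂ) (𝓝[ball (0:ℂ) 1] z) (𝓝 z) :=
      tendsto_id.mono_left nhdsWithin_le_nhds
    have := tendsto_nhds_unique htd2 htd3
    simpa using this

private theorem key (L U : ℕ → Set ℂ)
    (hL : ∀ n, IsJordanCurve (L n))
    (hU : ∀ n, IsBddComponent (L n) (U n)) (h0 : ∀ n, (0 : ℂ) ∈ U n)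
    (f g : ℕ → ℂ → ℂ) (hf : ∀ n, IsRiemannMap (f n) (U n))
    (hgc : ∀ n, ContinuousOn (g n) (closedBall (0 : ℂ) 1))
    (hgf : ∀ n, EqOn (g n) (f n) (ball (0 : ℂ) 1))
    (h : ℝ → ℝ) (hmod : IsModulus h)
    (hcommon : ∀ n, ∀ x ∈ sphere (0 : ℂ) 1, ∀ y ∈ sphere (0 : ℂ) 1, x ≠ y →
      dist (g n x) (g n y) < h (dist x y))
    (hcara : CaraToDisk U) :
    ∃ ms : ℕ → ℕ, Tendsto ms atTop atTop ∧
      TendstoUniformlyOn (fun k => g (ms k)) id atTop (closedBall (0 : ℂ) 1) := by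
  obtain ⟨hpos, hmono, hlim⟩ := hmod
  have hUopen : ∀ n, IsOpen (U n) := by
    intro n
    obtain ⟨hb, z, hz, hUn⟩ := hU n
    obtain ⟨e, hec, _, heim⟩ := hL n
    have hLc : IsClosed (L n) := by
      rw [← heim]
      exact ((isCompact_sphere 0 1).image_of_continuousOn hec).isClosed
    rw [hUn]
    exact hLc.isOpen_compl.connectedComponentIn
  have hUb : ∀ n, Bornology.IsBounded (U n) := fun n => (hU n).1
  have hgd : ∀ n, DifferentiableOn ℂ (g n) (ball (0:ℂ) 1) := fun n => (hf n).1.congr (hgf n)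
  have hfr : ∀ n, closure (U n) \ U n ⊆ g n '' sphere (0:ℂ) 1 := fun n => by
    rw [← (hf n).2.2.1]; exact closure_diff_subset (hgc n) (hgf n)
  -- uniform bound
  set M : ℝ := 2 + h 2 with hMdef
  have hM2 : (0:ℝ) < h 2 := hpos 2 two_pos
  have hMev : ∀ᶠ n in atTop, ∀ z ∈ closedBall (0:ℂ) 1, ‖g n z‖ ≤ M := by
    filter_upwards [cara_unif hcara hUb one_pos] with n hn z hz
    obtain ⟨w, hw, hdw⟩ := hn 1 (by simp)
    obtain ⟨p, hpseg, hpmem⟩ := segment_crossing (hUopen n) (h0 n) hw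
    obtain ⟨y, hy, hpy⟩ := hfr n hpmem
    have hw2 : ‖w‖ ≤ 2 := by
      have h1 : dist w 1 < 1 := hdw
      calc ‖w‖ = dist w 0 := (dist_zero_right w).symm
        _ ≤ dist w 1 + dist (1:ℂ) 0 := dist_triangle _ _ _
        _ ≤ 1 + 1 := by
            rw [dist_zero_right]
            simp only [norm_one]
            exact add_le_add h1.le le_rfl
        _ = 2 := by ring
    have hpnorm : ‖p‖ ≤ 2 := by
      have hsub : segment ℝ 0 w ⊆ closedBall (0:ℂ) 2 := by
        refine (convex_closedBall (0:ℂ) 2).segment_subset ?_ ?_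
        · simp
        · rw [mem_closedBall, dist_zero_right]; exact hw2
      have := hsub hpseg
      rwa [mem_closedBall, dist_zero_right] at this
    have hsb : ∀ x ∈ sphere (0:ℂ) 1, ‖g n x‖ ≤ M := by
      intro x hx
      rcases eq_or_ne x y with rfl | hxy
      · rw [hpy]
        rw [hMdef]
        linarith
      · have hd := hcommon n x hx y hy hxy
        have hx1 : ‖x‖ = 1 := by simpa [dist_zero_right] using hx
        have hy1 : ‖y‖ = 1 := by simpa [dist_zero_right] using hy
        have hdist2 : dist x y ≤ 2 := by
          calc dist x y ≤ dist x 0 + dist 0 y := dist_triangle _ _ _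
            _ = 2 := by rw [dist_zero_right, dist_comm, dist_zero_right, hx1, hy1]; ring
        have hh2 : h (dist x y) ≤ h 2 :=
          hmono (mem_Ioi.mpr (dist_pos.mpr hxy)) (by norm_num) hdist2
        have htri := norm_sub_norm_le (g n x) (g n y)
        rw [← dist_eq_norm] at htri
        have hgy : ‖g n y‖ ≤ 2 := by rw [hpy]; exact hpnorm
        rw [hMdef]
        linarith
    exact maxmod one_pos (hgd n) (hgc n) hsb hz
  obtain ⟨N₀, hN₀⟩ := eventually_atTop.mp hMev
  -- package the restrictions to the circle as bounded continuous functions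
  set Fb : ℕ → (sphere (0:ℂ) 1 →ᵇ ℂ) := fun n =>
    BoundedContinuousFunction.mkOfCompact
      ⟨(sphere (0:ℂ) 1).restrict (g n), ((hgc n).mono sphere_subset_closedBall).restrict⟩
    with hFbdef
  have hFbval : ∀ n (x : sphere (0:ℂ) 1), Fb n x = g n (x : ℂ) := fun n x => rfl
  set A : Set (sphere (0:ℂ) 1 →ᵇ ℂ) := Fb '' (Ici N₀) with hAdef
  have hAcomp : IsCompact (closure A) := by
    refine BoundedContinuousFunction.arzela_ascoli (closedBall (0:ℂ) M)
      (isCompact_closedBall _ _) A ?_ ?_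
    · rintro φ x ⟨n, hn, rfl⟩
      rw [mem_closedBall, dist_zero_right, hFbval]
      exact hN₀ n hn (x : ℂ) (sphere_subset_closedBall x.2)
    · intro x₀
      rw [Metric.equicontinuousAt_iff]
      intro ε hε
      obtain ⟨η, hη0, hηε⟩ : ∃ η, 0 < η ∧ h η < ε := by
        obtain ⟨η, hη⟩ := ((hlim.eventually (gt_mem_nhds hε)).and self_mem_nhdsWithin).exists
        exact ⟨η, hη.2, hη.1⟩
      refine ⟨η, hη0, fun x hxd i => ?_⟩
      obtain ⟨n, hn, hni⟩ := i.2
      rw [← hni, hFbval, hFbval]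
      rcases eq_or_ne (x₀ : ℂ) (x : ℂ) with heq | hne
      · rw [show (x₀ : ℂ) = (x : ℂ) from heq]
        simpa using hε
      · have hd := hcommon n (x₀ : ℂ) x₀.2 (x : ℂ) x.2 hne
        have hd2 : dist (x₀ : ℂ) (x : ℂ) ≤ η := by
          rw [Subtype.dist_eq, dist_comm] at hxd
          exact hxd.le
        have hd3 : h (dist (x₀ : ℂ) (x : ℂ)) ≤ h η :=
          hmono (mem_Ioi.mpr (dist_pos.mpr hne)) (mem_Ioi.mpr hη0) hd2
        calc dist (g n (x₀:ℂ)) (g n (x:ℂ)) < h (dist (x₀:ℂ) (x:ℂ)) := hd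
          _ ≤ h η := hd3
          _ < ε := hηε
  -- extract a convergent subsequence
  have hmemA : ∀ k : ℕ, Fb (N₀ + k) ∈ closure A :=
    fun k => subset_closure ⟨N₀ + k, by simp, rfl⟩
  obtain ⟨φlim, hφmem, κ, hκmono, hκconv⟩ := hAcomp.tendsto_subseq hmemA
  set ms : ℕ → ℕ := fun k => N₀ + κ k with hmsdef
  have hmstop : Tendsto ms atTop atTop :=
    tendsto_atTop_mono (fun k => Nat.le_add_left (κ k) N₀) hκmono.tendsto_atTop
  have hκconv' : Tendsto (fun k => Fb (ms k)) atTop (𝓝 φlim) := hκconv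
  -- uniform Cauchy on the closed ball via the maximum principle
  have hUC : UniformCauchySeqOn (fun k => g (ms k)) atTop (closedBall (0:ℂ) 1) := by
    rw [Metric.uniformCauchySeqOn_iff]
    intro ε hε
    obtain ⟨N, hN⟩ := Metric.cauchySeq_iff.mp hκconv'.cauchySeq (ε/2) (by positivity)
    refine ⟨N, fun m hm n hn z hz => ?_⟩
    have hsb : ∀ x ∈ sphere (0:ℂ) 1, ‖g (ms m) x - g (ms n) x‖ ≤ ε/2 := by
      intro x hx
      have h1 := BoundedContinuousFunction.dist_coe_le_dist (f := Fb (ms m)) (g := Fb (ms n))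
        (⟨x, hx⟩ : sphere (0:ℂ) 1)
      have h2 := hN m hm n hn
      rw [← dist_eq_norm]
      calc dist (g (ms m) x) (g (ms n) x)
          = dist (Fb (ms m) ⟨x, hx⟩) (Fb (ms n) ⟨x, hx⟩) := by rw [hFbval, hFbval]
        _ ≤ dist (Fb (ms m)) (Fb (ms n)) := h1
        _ ≤ ε/2 := h2.le
    have h3 := maxmod one_pos ((hgd (ms m)).sub (hgd (ms n)))
      ((hgc (ms m)).sub (hgc (ms n))) hsb hz
    rw [dist_eq_norm]
    calc ‖g (ms m) z - g (ms n) z‖ ≤ ε/2 := h3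
      _ < ε := by linarith
  -- the pointwise limit
  have hptlim : ∀ z : ℂ, ∃ w : ℂ, z ∈ closedBall (0:ℂ) 1 →
      Tendsto (fun k => g (ms k) z) atTop (𝓝 w) := by
    intro z
    by_cases hz : z ∈ closedBall (0:ℂ) 1
    · have hc : CauchySeq (fun k => g (ms k) z) := by
        rw [Metric.cauchySeq_iff]
        intro ε hε
        obtain ⟨N, hN⟩ := Metric.uniformCauchySeqOn_iff.mp hUC ε hε
        exact ⟨N, fun m hm n hn => hN m hm n hn z hz⟩
      obtain ⟨w, hw⟩ := cauchySeq_tendsto_of_complete hc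
      exact ⟨w, fun _ => hw⟩
    · exact ⟨0, fun hzz => absurd hzz hz⟩
  choose G hG using hptlim
  have hconv : TendstoUniformlyOn (fun k => g (ms k)) G atTop (closedBall (0:ℂ) 1) :=
    hUC.tendstoUniformlyOn_of_tendsto (fun z hz => hG z hz)
  have hGid : EqOn G id (closedBall (0:ℂ) 1) :=
    limit_is_id U hUopen hUb h0 f g hf hgc hgf hcara ms hmstop G hconv
  exact ⟨ms, hmstop, hconv.congr_right hGid⟩


end EquiAuxiliary

/-- If the normalized Riemann maps `f_n` of the bounded components `U_n ∋ 0` of the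
complements of Jordan curves `L_n` extend continuously to the closed disk with boundary
restrictions admitting a common modulus of continuity, and `U_n → 𝔻` in the Carathéodory
sense, then the extensions converge uniformly on the closed disk to the identity. -/
theorem equicontinuous_riemannMaps_tendsto_id (L U : ℕ → Set ℂ)
    (hL : ∀ n, IsJordanCurve (L n))
    (hU : ∀ n, IsBddComponent (L n) (U n)) (h0 : ∀ n, (0 : ℂ) ∈ U n)
    (f g : ℕ → ℂ → ℂ) (hf : ∀ n, IsRiemannMap (f n) (U n))
    (hgc : ∀ n, ContinuousOn (g n) (closedBall (0 : ℂ) 1))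
    (hgf : ∀ n, EqOn (g n) (f n) (ball (0 : ℂ) 1))
    (h : ℝ → ℝ) (hmod : IsModulus h)
    (hcommon : ∀ n, ∀ x ∈ sphere (0 : ℂ) 1, ∀ y ∈ sphere (0 : ℂ) 1, x ≠ y →
      dist (g n x) (g n y) < h (dist x y))
    (hcara : CaraToDisk U) :
    TendstoUniformlyOn g id atTop (closedBall (0 : ℂ) 1) := by
  rw [Metric.tendstoUniformlyOn_iff]
  intro ε hε
  by_contra hcon
  rw [Filter.not_eventually] at hcon
  obtain ⟨ns, hnsmono, hns⟩ := Filter.extraction_of_frequently_atTop hcon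
  obtain ⟨ms, hmstop, hconv⟩ := key (fun k => L (ns k)) (fun k => U (ns k))
    (fun k => hL _) (fun k => hU _) (fun k => h0 _) (fun k => f (ns k)) (fun k => g (ns k))
    (fun k => hf _) (fun k => hgc _) (fun k => hgf _) h hmod (fun k => hcommon _)
    ⟨fun C hC hC2 => hnsmono.tendsto_atTop.eventually (hcara.1 C hC hC2),
     fun z hz => (hcara.2 z hz).comp hnsmono.tendsto_atTop⟩
  obtain ⟨k, hk⟩ := (Metric.tendstoUniformlyOn_iff.mp hconv ε hε).exists
  exact hns (ms k) hk
end

section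
/- Let h be a modulus of continuity of a nonconstant function f : ℝ/ℤ → ℂ. Then inf_{η ∈ (0,1]} h(η)/η > 0. Consequently, if f, f_n : ℝ/ℤ → ℂ are C¹ functions, f is nonconstant with h as a modulus of continuity, and f_n − f together with its derivative (f_n − f)' tend uniformly to 0, then for every ε > 0 the function f_n has (1+ε)h as a modulus of continuity for all sufficiently large n. -/
open Complex Metric Set Filter Topology

/-- The quotient distance on `ℝ/ℤ` of two real representatives. -/
noncomputable def circDist (s t : ℝ) : ℝ := ⨅ k : ℤ, |s - t + (k : ℝ)|

lemma circDist_bdd (s t : ℝ) : BddBelow (Set.range fun k : ℤ => |s - t + (k : ℝ)|) :=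
  ⟨0, by rintro _ ⟨k, rfl⟩; positivity⟩

lemma circDist_le (s t : ℝ) (k : ℤ) : circDist s t ≤ |s - t + (k : ℝ)| :=
  ciInf_le (circDist_bdd s t) k

lemma circDist_le_half (s t : ℝ) : circDist s t ≤ 1 / 2 := by
  have h1 : circDist s t ≤ |s - t + ((-(round (s - t)) : ℤ) : ℝ)| := circDist_le s t _
  have h2 : |s - t + ((-(round (s - t)) : ℤ) : ℝ)| = |(s - t) - round (s - t)| := by
    push_cast; ring_nf
  rw [h2] at h1
  exact h1.trans (abs_sub_round _)

lemma circDist_pos (s t : ℝ) (hst : ¬ ∃ k : ℤ, s - t = (k : ℝ)) : 0 < circDist s t := by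
  set x := s - t with hx
  have hd : 0 < |x - round x| := by
    rw [abs_pos, sub_ne_zero]
    intro e; exact hst ⟨round x, e⟩
  have hle : |x - round x| ≤ circDist s t := by
    apply le_ciInf
    intro k
    by_cases hk : -k = round x
    · have he : x + (k : ℝ) = x - ((-k : ℤ) : ℝ) := by push_cast; ring
      rw [he, hk]
    · have h1 : (1 : ℝ) ≤ |((-k : ℤ) : ℝ) - ((round x : ℤ) : ℝ)| := by
        have he : ((-k : ℤ) : ℝ) - ((round x : ℤ) : ℝ) = ((-k - round x : ℤ) : ℝ) := by
          push_cast; ring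
        rw [he, ← Int.cast_abs]
        exact_mod_cast Int.one_le_abs (sub_ne_zero.mpr hk)
      have h2 : |x - round x| ≤ 1 / 2 := abs_sub_round x
      have h3 : |((-k : ℤ) : ℝ) - ((round x : ℤ) : ℝ)| ≤
          |((-k : ℤ) : ℝ) - x| + |x - ((round x : ℤ) : ℝ)| := abs_sub_le _ _ _
      have h4 : |((-k : ℤ) : ℝ) - x| = |x + (k : ℝ)| := by
        rw [← abs_neg]; congr 1; push_cast; ring
      rw [h4] at h3
      linarith
  linarith

/-- If `h` is a modulus of continuity of a nonconstant function `f` on `ℝ/ℤ`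
(represented by a 1-periodic function on `ℝ`), then `inf_{η ∈ (0,1]} h(η)/η > 0`.
Consequently, if moreover `f` and the `f_n` are `C¹` and `f_n - f` together with its
derivative tend uniformly to `0`, then for every `ε > 0`, eventually `f_n` has
`(1+ε)h` as a modulus of continuity. -/
theorem modulus_inf_pos_and_stability (h : ℝ → ℝ) (hmod : IsModulus h)
    (f : ℝ → ℂ) (hper : Function.Periodic f 1)
    (hnc : ∃ s t : ℝ, f s ≠ f t)
    (hfh : ∀ s t : ℝ, (¬ ∃ k : ℤ, s - t = (k : ℝ)) →
      dist (f s) (f t) < h (circDist s t)) :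
    0 < sInf ((fun η => h η / η) '' Ioc (0 : ℝ) 1) ∧
    ∀ fseq : ℕ → ℝ → ℂ, ContDiff ℝ 1 f → (∀ n, Function.Periodic (fseq n) 1) →
      (∀ n, ContDiff ℝ 1 (fseq n)) →
      TendstoUniformly (fun n t => fseq n t - f t) (fun _ => 0) atTop →
      TendstoUniformly (fun n t => deriv (fun u => fseq n u - f u) t) (fun _ => 0) atTop →
      ∀ ε : ℝ, 0 < ε → ∀ᶠ n in atTop, ∀ s t : ℝ, (¬ ∃ k : ℤ, s - t = (k : ℝ)) →
        dist (fseq n s) (fseq n t) < (1 + ε) * h (circDist s t) := by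
  obtain ⟨hpos, hmono, _⟩ := hmod
  obtain ⟨s0, t0, hf0⟩ := hnc
  set y : ℝ := (s0 - t0) - round (s0 - t0) with hy
  have hy2 : |y| ≤ 1 / 2 := abs_sub_round _
  have hfy : f (t0 + y) = f s0 := by
    have he : t0 + y = s0 + ((-(round (s0 - t0)) : ℤ) : ℝ) := by push_cast; rw [hy]; ring
    rw [he]
    simpa using (hper.int_mul (-(round (s0 - t0)))) s0
  have hyne : y ≠ 0 := by
    intro h0
    apply hf0
    rw [← hfy, h0, add_zero]
  have hypos : 0 < |y| := abs_pos.mpr hyne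
  set d0 : ℝ := dist (f (t0 + y)) (f t0) with hd0
  have hd0pos : 0 < d0 := by
    rw [hd0, dist_pos, hfy]; exact hf0
  -- key bound : the chain argument
  have key : ∀ η ∈ Ioc (0 : ℝ) 1, 2 * d0 / 3 ≤ h η / η := by
    rintro η ⟨hη0, hη1⟩
    set n : ℕ := ⌈|y| / η⌉₊ with hn
    have hn1 : 1 ≤ n := Nat.one_le_ceil_iff.mpr (by positivity)
    have hnR : (0 : ℝ) < n := by exact_mod_cast hn1
    have hceil : |y| / η ≤ n := Nat.le_ceil _
    have hyn : |y| ≤ (n : ℝ) * η := by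
      rw [div_le_iff₀ hη0] at hceil; linarith
    have hstep : |y / n| ≤ η := by
      rw [abs_div, abs_of_pos hnR, div_le_iff₀ hnR]
      linarith
    have hsteppos : 0 < |y / (n : ℝ)| := by positivity
    have hstephalf : |y / (n : ℝ)| ≤ 1 / 2 := by
      rw [abs_div, abs_of_pos hnR]
      calc |y| / (n : ℝ) ≤ |y| / 1 := by
            apply div_le_div_of_nonneg_left hypos.le one_pos
            exact_mod_cast hn1
        _ = |y| := div_one _
        _ ≤ 1 / 2 := hy2
    set p : ℕ → ℝ := fun i => t0 + i * (y / n) with hp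
    have hdiff : ∀ i : ℕ, p (i + 1) - p i = y / n := by
      intro i; simp only [hp]; push_cast; ring
    have hnotint : ∀ i : ℕ, ¬ ∃ k : ℤ, p (i + 1) - p i = (k : ℝ) := by
      rintro i ⟨k, hk⟩
      rw [hdiff i] at hk
      rcases eq_or_ne k 0 with rfl | hk0
      · rw [hk] at hsteppos; simp at hsteppos
      · have h1 : (1 : ℝ) ≤ |(k : ℝ)| := by
          rw [← Int.cast_abs]; exact_mod_cast Int.one_le_abs hk0
        rw [← hk] at h1
        linarith
    have hstepdist : ∀ i : ℕ, dist (f (p (i + 1))) (f (p i)) ≤ h η := by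
      intro i
      have h1 := hfh (p (i + 1)) (p i) (hnotint i)
      have hcircle : circDist (p (i + 1)) (p i) ≤ |y / (n : ℝ)| := by
        have h2 := circDist_le (p (i + 1)) (p i) 0
        simpa [hdiff i] using h2
      have hcircpos : 0 < circDist (p (i + 1)) (p i) := circDist_pos _ _ (hnotint i)
      have hmle : h (circDist (p (i + 1)) (p i)) ≤ h η :=
        hmono hcircpos hη0 (hcircle.trans hstep)
      exact h1.le.trans hmle
    have htele : d0 ≤ (n : ℝ) * h η := by
      have h0n : p 0 = t0 := by simp [hp]
      have hnn : p n = t0 + y := by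
        simp only [hp]
        field_simp
      have hbig := dist_le_range_sum_dist (fun i => f (p i)) n
      rw [h0n, hnn] at hbig
      have hsum : ∑ i ∈ Finset.range n, dist (f (p i)) (f (p (i + 1))) ≤ (n : ℝ) * h η := by
        calc ∑ i ∈ Finset.range n, dist (f (p i)) (f (p (i + 1)))
            ≤ ∑ _i ∈ Finset.range n, h η := by
              apply Finset.sum_le_sum
              intro i _
              rw [dist_comm]; exact hstepdist i
          _ = (n : ℝ) * h η := by rw [Finset.sum_const, Finset.card_range]; ring
      calc d0 = dist (f t0) (f (t0 + y)) := by rw [hd0, dist_comm]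
        _ ≤ _ := hbig
        _ ≤ (n : ℝ) * h η := hsum
    have hne : (n : ℝ) * η ≤ 3 / 2 := by
      have hn2 : (n : ℝ) < |y| / η + 1 := Nat.ceil_lt_add_one (by positivity)
      have hmul : (n : ℝ) * η < (|y| / η + 1) * η := by
        apply mul_lt_mul_of_pos_right hn2 hη0
      have heq : (|y| / η + 1) * η = |y| + η := by field_simp
      rw [heq] at hmul
      linarith
    rw [le_div_iff₀ hη0]
    have hhpos : 0 < h η := hpos η hη0
    nlinarith [htele, hne, mul_le_mul_of_nonneg_right htele hη0.le]
  -- part 1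
  have hbdd : BddBelow ((fun η => h η / η) '' Ioc (0 : ℝ) 1) := by
    refine ⟨0, ?_⟩
    rintro b ⟨η, hη, rfl⟩
    have h1 := hpos η hη.1
    show (0:ℝ) ≤ h η / η
    exact le_of_lt (div_pos h1 hη.1)
  have hne0 : ((fun η => h η / η) '' Ioc (0 : ℝ) 1).Nonempty :=
    ⟨h 1 / 1, ⟨1, ⟨zero_lt_one, le_refl 1⟩, rfl⟩⟩
  have part1 : 0 < sInf ((fun η => h η / η) '' Ioc (0 : ℝ) 1) := by
    refine lt_of_lt_of_le (show (0:ℝ) < 2 * d0 / 3 by linarith) (le_csInf hne0 ?_)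
    rintro b ⟨η, hη, rfl⟩
    exact key η hη
  refine ⟨part1, ?_⟩
  set c : ℝ := sInf ((fun η => h η / η) '' Ioc (0 : ℝ) 1) with hc
  have hcle : ∀ η ∈ Ioc (0 : ℝ) 1, c * η ≤ h η := by
    rintro η hη
    have h1 : c ≤ h η / η := csInf_le hbdd ⟨η, hη, rfl⟩
    rw [le_div_iff₀ hη.1] at h1
    linarith
  -- part 2
  intro fseq hf1 hperseq hfseq1 _ hderiv ε hε
  have hεc : 0 < ε * c := mul_pos hε part1
  have hev := (Metric.tendstoUniformly_iff.mp hderiv) (ε * c) hεc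
  filter_upwards [hev] with n hbnd
  intro s t hst
  set g : ℝ → ℂ := fun u => fseq n u - f u with hg
  have gper : Function.Periodic g 1 := (hperseq n).sub hper
  have gdiff : Differentiable ℝ g := ((hfseq1 n).sub hf1).differentiable one_ne_zero
  have hbnd' : ∀ x : ℝ, ‖deriv g x‖ ≤ ε * c := by
    intro x
    have h2 := (hbnd x).le
    simpa using h2
  have mvt : ∀ a b : ℝ, ‖g b - g a‖ ≤ ε * c * ‖b - a‖ := fun a b =>
    Convex.norm_image_sub_le_of_norm_hasDerivWithin_le
      (fun x _ => (gdiff x).hasDerivAt.hasDerivWithinAt)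
      (fun x _ => hbnd' x) convex_univ (mem_univ a) (mem_univ b)
  have hgk : ∀ k : ℤ, ‖g s - g t‖ ≤ ε * c * |s - t + (k : ℝ)| := by
    intro k
    have h1 : g s = g (t + (s - t + (k : ℝ))) := by
      have he : t + (s - t + (k : ℝ)) = s + (k : ℝ) * 1 := by push_cast; ring
      rw [he]
      exact ((gper.int_mul k) s).symm
    rw [h1]
    have h2 := mvt t (t + (s - t + (k : ℝ)))
    have he : (t + (s - t + (k : ℝ))) - t = s - t + (k : ℝ) := by ring
    rw [he, Real.norm_eq_abs] at h2
    exact h2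
  set η : ℝ := circDist s t with hη
  have hη0 : 0 < η := circDist_pos s t hst
  have hη1 : η ≤ 1 := (circDist_le_half s t).trans (by norm_num)
  have hgcirc : ‖g s - g t‖ ≤ ε * c * η := by
    rw [← div_le_iff₀' hεc]
    apply le_ciInf
    intro k
    rw [div_le_iff₀' hεc]
    exact hgk k
  have h1 := hfh s t hst
  have h2 : dist (fseq n s) (fseq n t) ≤ dist (f s) (f t) + ‖g s - g t‖ := by
    have e1 : fseq n s = f s + g s := by simp [hg]
    have e2 : fseq n t = f t + g t := by simp [hg]
    rw [e1, e2, ← dist_eq_norm]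
    exact dist_add_add_le _ _ _ _
  have h3 : ε * c * η ≤ ε * h η := by
    have h4 := hcle η ⟨hη0, hη1⟩
    nlinarith
  have h5 : (1 + ε) * h η = h η + ε * h η := by ring
  have h1' : dist (f s) (f t) < h η := h1
  rw [h5]
  linarith
end
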